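/- arXiv:2311.10972 — 10 statements merged into one kernel-verified Lean document; each statement's English description precedes it below -/
import Mathlib

section
/- Let X ∈ ℝ^{n×d} with rows x_1,…,x_n, let y ∈ {−1,1}^n, and let λ ∈ ℝ^n satisfy y_i λ_i ≥ 0 for all i. Then max_{u ∈ ℝ^d, ‖u‖₂ ≤ 1} |λᵀ(Xu)₊| = max{ max_{b₊∈[0,1]^{n₊}} min_{b₋∈[0,1]^{n₋}} ‖X₊ᵀ diag(λ₊) b₊ − X₋ᵀ diag(λ₋) b₋‖₂ , max_{b₋∈[0,1]^{n₋}} min_{b₊∈[0,1]^{n₊}} ‖X₊ᵀ diag(λ₊) b₊ − X₋ᵀ diag(λ₋) b₋‖₂ }. -/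
open Matrix
open scoped RealInnerProductSpace

/-- Euclidean norm of a vector in `ℝ^d`. -/
noncomputable def e2 {d : ℕ} (v : Fin d → ℝ) : ℝ := Real.sqrt (∑ k, (v k) ^ 2)

/-- The solid unit hypercube `[0,1]^n`. -/
def box (n : ℕ) : Set (Fin n → ℝ) := {b | ∀ i, 0 ≤ b i ∧ b i ≤ 1}

/-- `X₊ᵀ diag(λ₊) b₊`: the `d`-vector `∑_{i : y i = 1} λ_i b_i x_i`. -/
noncomputable def vPlus {n d : ℕ} (X : Matrix (Fin n) (Fin d) ℝ) (y l b : Fin n → ℝ) :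
    Fin d → ℝ := fun k => ∑ i, if y i = 1 then l i * b i * X i k else 0

/-- `X₋ᵀ diag(λ₋) b₋` with `λ₋ = (−λ_i)_{i : y_i = −1}`:
the `d`-vector `∑_{i : y i = -1} (−λ_i) b_i x_i`. -/
noncomputable def vMinus {n d : ℕ} (X : Matrix (Fin n) (Fin d) ℝ) (y l b : Fin n → ℝ) :
    Fin d → ℝ := fun k => ∑ i, if y i = -1 then (-l i) * b i * X i k else 0

noncomputable def toE {d : ℕ} (v : Fin d → ℝ) : EuclideanSpace ℝ (Fin d) :=
  (WithLp.equiv 2 (Fin d → ℝ)).symm v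

lemma e2_eq' {d : ℕ} (v : Fin d → ℝ) : e2 v = ‖toE v‖ := by
  simp [e2, toE, EuclideanSpace.norm_eq, Real.norm_eq_abs, sq_abs]

lemma toE_sub {d : ℕ} (a b : Fin d → ℝ) : toE (a - b) = toE a - toE b := rfl

lemma inner_toE {d : ℕ} (a b : Fin d → ℝ) :
    ⟪toE a, toE b⟫ = ∑ k, a k * b k := by
  simp [toE, PiLp.inner_apply, RCLike.inner_apply, mul_comm]

lemma box_compact (n : ℕ) : IsCompact (box n) := by
  have : box n = Set.univ.pi (fun _ : Fin n => Set.Icc (0:ℝ) 1) := by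
    ext b
    simp only [box, Set.mem_setOf_eq, Set.mem_univ_pi, Set.mem_Icc]
  rw [this]
  exact isCompact_univ_pi fun _ => isCompact_Icc

lemma box_convex (n : ℕ) : Convex ℝ (box n) := by
  have : box n = Set.univ.pi (fun _ : Fin n => Set.Icc (0:ℝ) 1) := by
    ext b
    simp only [box, Set.mem_setOf_eq, Set.mem_univ_pi, Set.mem_Icc]
  rw [this]
  exact convex_pi fun _ _ => convex_Icc 0 1

lemma box_nonempty (n : ℕ) : (box n).Nonempty :=
  ⟨0, fun _ => ⟨le_refl _, zero_le_one⟩⟩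

/-- The linear map `b ↦ ∑ i, b i • c i` into Euclidean space. -/
noncomputable def lmap {n d : ℕ} (c : Fin n → Fin d → ℝ) :
    (Fin n → ℝ) →ₗ[ℝ] EuclideanSpace ℝ (Fin d) where
  toFun b := toE (fun k => ∑ i, b i * c i k)
  map_add' a b := by
    ext k
    simp [toE, add_mul, Finset.sum_add_distrib]
  map_smul' m b := by
    ext k
    simp [toE, Finset.mul_sum, mul_assoc]

lemma lmap_apply {n d : ℕ} (c : Fin n → Fin d → ℝ) (b : Fin n → ℝ) :
    lmap c b = toE (fun k => ∑ i, b i * c i k) := rfl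

section key
variable {F : Type*} [NormedAddCommGroup F] [InnerProductSpace ℝ F]

lemma key (C : Set F) (hCc : IsCompact C)
    (hCn : C.Nonempty) (hCv : Convex ℝ C) (p : F) :
    IsGreatest
      ((fun u => sInf ((fun z => ⟪p - z, u⟫) '' C)) '' {u : F | ‖u‖ ≤ 1})
      (sInf ((fun z => ‖p - z‖) '' C)) := by
  haveI : Nonempty C := hCn.to_subtype
  obtain ⟨z, hzC, hz⟩ := exists_norm_eq_iInf_of_complete_convex hCn hCc.isComplete hCv p
  have hproj : ∀ w ∈ C, ⟪p - z, w - z⟫ ≤ 0 :=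
    (norm_eq_iInf_iff_real_inner_le_zero hCv hzC).mp hz
  have hδ0 : (0:ℝ) ≤ ‖p - z‖ := norm_nonneg _
  have hmin : ∀ w ∈ C, ‖p - z‖ ≤ ‖p - w‖ := by
    intro w hw
    rw [hz]
    exact ciInf_le (f := fun w : C => ‖p - (w:F)‖)
      ⟨0, Set.forall_mem_range.2 fun _ => norm_nonneg _⟩ ⟨w, hw⟩
  have hinf : sInf ((fun z => ‖p - z‖) '' C) = ‖p - z‖ := by
    apply le_antisymm
    · exact csInf_le ⟨0, by rintro t ⟨w, hw, rfl⟩; exact norm_nonneg _⟩ ⟨z, hzC, rfl⟩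
    · exact le_csInf (hCn.image _) (by rintro t ⟨w, hw, rfl⟩; exact hmin w hw)
  rw [hinf]
  obtain ⟨R, hR⟩ := hCc.isBounded.subset_closedBall 0
  have hbdd : ∀ u : F, BddBelow ((fun z => ⟪p - z, u⟫) '' C) := by
    intro u
    refine ⟨-((‖p‖ + |R|) * ‖u‖), ?_⟩
    rintro t ⟨w, hw, rfl⟩
    have h1 : |⟪p - w, u⟫| ≤ ‖p - w‖ * ‖u‖ := abs_real_inner_le_norm _ _
    have h2 : ‖p - w‖ ≤ ‖p‖ + ‖w‖ := norm_sub_le _ _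
    have h3 : ‖w‖ ≤ R := by simpa using hR hw
    have h4 : R ≤ |R| := le_abs_self R
    have h5 : (0:ℝ) ≤ ‖u‖ := norm_nonneg _
    have := neg_abs_le ⟪p - w, u⟫
    simp only [Set.mem_setOf_eq]
    nlinarith [norm_nonneg (p - w)]
  constructor
  · by_cases hpz : p = z
    · refine ⟨0, by simp, ?_⟩
      have h0 : ∀ w ∈ C, ⟪p - w, (0:F)⟫ = 0 := by
        intro w _; exact inner_zero_right _
      have : ‖p - z‖ = 0 := by simp [hpz]
      rw [this]
      apply le_antisymm
      · exact csInf_le (hbdd 0) ⟨z, hzC, by simp [h0 z hzC]⟩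
      · exact le_csInf (hCn.image _) (by rintro t ⟨w, hw, rfl⟩; simp [h0 w hw])
    · have hne : ‖p - z‖ ≠ 0 := by
        simpa [sub_eq_zero] using hpz
      set u₀ : F := ‖p - z‖⁻¹ • (p - z) with hu₀
      have hnu : ‖u₀‖ = 1 := by
        rw [hu₀, norm_smul, norm_inv, norm_norm, inv_mul_cancel₀ hne]
      refine ⟨u₀, by simp [hnu], ?_⟩
      have hval : ∀ w ∈ C, ⟪p - w, u₀⟫ = ‖p - z‖⁻¹ * ⟪p - w, p - z⟫ := by
        intro w _; rw [hu₀, real_inner_smul_right]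
      have hge : ∀ w ∈ C, ‖p - z‖ ≤ ⟪p - w, u₀⟫ := by
        intro w hw
        rw [hval w hw]
        have h1 : ⟪p - w, p - z⟫ = ‖p - z‖^2 - ⟪p - z, w - z⟫ := by
          have : p - w = (p - z) - (w - z) := by abel
          rw [this, inner_sub_left, real_inner_self_eq_norm_sq, real_inner_comm]
        have h2 := hproj w hw
        have h3 : ‖p - z‖^2 ≤ ⟪p - w, p - z⟫ := by rw [h1]; linarith
        have h4 : (0:ℝ) < ‖p - z‖ := lt_of_le_of_ne hδ0 (Ne.symm hne)
        have h5 : ‖p - z‖⁻¹ * ‖p - z‖^2 = ‖p - z‖ := by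
          field_simp [sq]
        calc ‖p - z‖ = ‖p - z‖⁻¹ * ‖p - z‖^2 := h5.symm
        _ ≤ ‖p - z‖⁻¹ * ⟪p - w, p - z⟫ :=
            mul_le_mul_of_nonneg_left h3 (inv_nonneg.mpr h4.le)
      have heq : ⟪p - z, u₀⟫ = ‖p - z‖ := by
        rw [hval z hzC, real_inner_self_eq_norm_sq]
        field_simp [sq]
      apply le_antisymm
      · exact csInf_le (hbdd u₀) ⟨z, hzC, heq⟩
      · exact le_csInf (hCn.image _) (by rintro t ⟨w, hw, rfl⟩; exact hge w hw)
  · rintro t ⟨u, hu, rfl⟩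
    have h1 : sInf ((fun z => ⟪p - z, u⟫) '' C) ≤ ⟪p - z, u⟫ :=
      csInf_le (hbdd u) ⟨z, hzC, rfl⟩
    have h2 : ⟪p - z, u⟫ ≤ ‖p - z‖ * ‖u‖ := real_inner_le_norm _ _
    have h3 : ‖u‖ ≤ 1 := hu
    nlinarith

/-- On a compact nonempty set, the sup of a continuous function over the image is attained. -/
lemma csSup_image_eq {α : Type*} [TopologicalSpace α] {C : Set α} (hC : IsCompact C)
    (hne : C.Nonempty) {g : α → ℝ} (hg : ContinuousOn g C) :
    ∃ m ∈ C, (∀ w ∈ C, g w ≤ g m) ∧ sSup (g '' C) = g m := by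
  obtain ⟨m, hm, hmax⟩ := hC.exists_isMaxOn hne hg
  have hub : ∀ w ∈ C, g w ≤ g m := fun w hw => hmax hw
  exact ⟨m, hm, hub,
    IsGreatest.csSup_eq ⟨⟨m, hm, rfl⟩, by rintro t ⟨w, hw, rfl⟩; exact hub w hw⟩⟩

lemma csInf_inner_sub (C : Set F) (hCc : IsCompact C) (hCn : C.Nonempty) (p v : F) :
    sInf ((fun q => ⟪p - q, v⟫) '' C) = ⟪p, v⟫ - sSup ((fun q => ⟪q, v⟫) '' C) := by
  obtain ⟨m, hm, hmax, hsup⟩ := csSup_image_eq (g := fun q => ⟪q, v⟫) hCc hCn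
    ((continuous_id.inner continuous_const).continuousOn)
  rw [hsup]
  apply IsLeast.csInf_eq
  constructor
  · refine ⟨m, hm, ?_⟩
    show ⟪p - m, v⟫ = ⟪p, v⟫ - ⟪m, v⟫
    rw [inner_sub_left]
  · rintro t ⟨w, hw, rfl⟩
    have := hmax w hw
    show ⟪p, v⟫ - ⟪m, v⟫ ≤ ⟪p - w, v⟫
    rw [inner_sub_left]
    linarith
end key

lemma mul_box_le {c t a : ℝ} (hc : 0 ≤ c) (h0 : 0 ≤ t) (h1 : t ≤ 1) :
    c * t * a ≤ c * max a 0 := by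
  rcases le_total a 0 with h | h
  · rw [max_eq_right h, mul_zero]
    have : t * a ≤ 0 := mul_nonpos_of_nonneg_of_nonpos h0 h
    nlinarith
  · rw [max_eq_left h]
    nlinarith [mul_nonneg hc h]

lemma sp_eq {n : ℕ} (P : Fin n → Prop) [DecidablePred P] (c a : Fin n → ℝ)
    (hc : ∀ i, P i → 0 ≤ c i) :
    IsGreatest ((fun b => ∑ i, if P i then c i * b i * a i else 0) '' box n)
      (∑ i, if P i then c i * max (a i) 0 else 0) := by
  classical
  set bs : Fin n → ℝ := fun i => if 0 ≤ a i then 1 else 0 with hbs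
  have hbsbox : bs ∈ box n := by
    intro i
    by_cases h : 0 ≤ a i <;> simp [hbs, h]
  constructor
  · refine ⟨bs, hbsbox, ?_⟩
    apply Finset.sum_congr rfl
    intro i _
    by_cases hP : P i
    · simp only [hP, if_true, hbs]
      by_cases h : 0 ≤ a i
      · simp [h, max_eq_left h]
      · push_neg at h
        simp [not_le.mpr h, max_eq_right h.le]
    · simp [hP]
  · rintro t ⟨b, hb, rfl⟩
    apply Finset.sum_le_sum
    intro i _
    by_cases hP : P i
    · simp only [hP, if_true]
      exact mul_box_le (hc i hP) (hb i).1 (hb i).2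
    · simp [hP]

lemma sum_split {n : ℕ} (y l a : Fin n → ℝ) (hy : ∀ i, y i = 1 ∨ y i = -1) :
    ∑ i, l i * max (a i) 0 =
      (∑ i, if y i = 1 then l i * max (a i) 0 else 0)
      - (∑ i, if y i = -1 then (-l i) * max (a i) 0 else 0) := by
  rw [← Finset.sum_sub_distrib]
  apply Finset.sum_congr rfl
  intro i _
  rcases hy i with h | h
  · rw [h]; norm_num
  · rw [h]; norm_num

lemma inner_vPlus {n d : ℕ} (X : Matrix (Fin n) (Fin d) ℝ) (y l b : Fin n → ℝ) (u : Fin d → ℝ) :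
    ⟪toE (vPlus X y l b), toE u⟫ = ∑ i, if y i = 1 then l i * b i * (X.mulVec u i) else 0 := by
  rw [inner_toE]
  simp only [vPlus, Finset.sum_mul, ite_mul, zero_mul]
  rw [Finset.sum_comm]
  apply Finset.sum_congr rfl
  intro i _
  by_cases h : y i = 1
  · simp only [h, if_true, Matrix.mulVec, dotProduct, Finset.mul_sum]
    apply Finset.sum_congr rfl
    intro k _
    ring
  · simp [h]

lemma inner_vMinus {n d : ℕ} (X : Matrix (Fin n) (Fin d) ℝ) (y l b : Fin n → ℝ) (u : Fin d → ℝ) :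
    ⟪toE (vMinus X y l b), toE u⟫ = ∑ i, if y i = -1 then (-l i) * b i * (X.mulVec u i) else 0 := by
  rw [inner_toE]
  simp only [vMinus, Finset.sum_mul, ite_mul, zero_mul]
  rw [Finset.sum_comm]
  apply Finset.sum_congr rfl
  intro i _
  by_cases h : y i = -1
  · simp only [h, if_true, Matrix.mulVec, dotProduct, Finset.mul_sum]
    apply Finset.sum_congr rfl
    intro k _
    ring
  · simp [h]

lemma vPlus_lin {n d : ℕ} (X : Matrix (Fin n) (Fin d) ℝ) (y l b : Fin n → ℝ) :
    toE (vPlus X y l b) = lmap (fun i k => if y i = 1 then l i * X i k else 0) b := by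
  rw [lmap_apply]
  unfold toE vPlus
  congr 1
  funext k
  apply Finset.sum_congr rfl
  intro i _
  by_cases h : y i = 1 <;> simp [h] <;> ring

lemma vMinus_lin {n d : ℕ} (X : Matrix (Fin n) (Fin d) ℝ) (y l b : Fin n → ℝ) :
    toE (vMinus X y l b) = lmap (fun i k => if y i = -1 then (-l i) * X i k else 0) b := by
  rw [lmap_apply]
  unfold toE vMinus
  congr 1
  funext k
  apply Finset.sum_congr rfl
  intro i _
  by_cases h : y i = -1 <;> simp [h] <;> ring

section core2
variable {F : Type*} [NormedAddCommGroup F] [InnerProductSpace ℝ F]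

lemma core (Zp Zm : Set F)
    (hZpc : IsCompact Zp) (hZpn : Zp.Nonempty) (hZpv : Convex ℝ Zp)
    (hZmc : IsCompact Zm) (hZmn : Zm.Nonempty) (hZmv : Convex ℝ Zm) :
    sSup ((fun v => |sSup ((fun z => ⟪z, v⟫) '' Zp) - sSup ((fun z => ⟪z, v⟫) '' Zm)|) ''
        {v : F | ‖v‖ ≤ 1}) =
      max (sSup ((fun p => sInf ((fun z => ‖p - z‖) '' Zm)) '' Zp))
          (sSup ((fun q => sInf ((fun z => ‖q - z‖) '' Zp)) '' Zm)) := by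
  obtain ⟨R1, hR1⟩ := hZpc.isBounded.subset_closedBall 0
  obtain ⟨R2, hR2⟩ := hZmc.isBounded.subset_closedBall 0
  set R : ℝ := max (max R1 R2) 0 with hRdef
  have hR0 : (0:ℝ) ≤ R := le_max_right _ _
  have hRp : ∀ z ∈ Zp, ‖z‖ ≤ R := by
    intro z hz
    have := hR1 hz
    simp only [Metric.mem_closedBall, dist_zero_right] at this
    exact this.trans ((le_max_left R1 R2).trans (le_max_left _ _))
  have hRm : ∀ z ∈ Zm, ‖z‖ ≤ R := by
    intro z hz
    have := hR2 hz
    simp only [Metric.mem_closedBall, dist_zero_right] at this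
    exact this.trans ((le_max_right R1 R2).trans (le_max_left _ _))
  have innerub : ∀ (v z : F), ‖v‖ ≤ 1 → ‖z‖ ≤ R → ⟪z, v⟫ ≤ R := by
    intro v z hv hz
    have h1 : ⟪z, v⟫ ≤ ‖z‖ * ‖v‖ := real_inner_le_norm _ _
    nlinarith [norm_nonneg z, norm_nonneg v]
  have innerlb : ∀ (v z : F), ‖v‖ ≤ 1 → ‖z‖ ≤ R → -R ≤ ⟪z, v⟫ := by
    intro v z hv hz
    have h1 : |⟪z, v⟫| ≤ ‖z‖ * ‖v‖ := abs_real_inner_le_norm _ _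
    have h2 := neg_abs_le ⟪z, v⟫
    nlinarith [norm_nonneg z, norm_nonneg v]
  have hbip : ∀ v : F, BddAbove ((fun z => ⟪z, v⟫) '' Zp) := by
    intro v
    refine ⟨R * ‖v‖, ?_⟩
    rintro t ⟨z, hz, rfl⟩
    calc ⟪z, v⟫ ≤ ‖z‖ * ‖v‖ := real_inner_le_norm _ _
    _ ≤ R * ‖v‖ := mul_le_mul_of_nonneg_right (hRp z hz) (norm_nonneg _)
  have hbim : ∀ v : F, BddAbove ((fun z => ⟪z, v⟫) '' Zm) := by
    intro v
    refine ⟨R * ‖v‖, ?_⟩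
    rintro t ⟨z, hz, rfl⟩
    calc ⟪z, v⟫ ≤ ‖z‖ * ‖v‖ := real_inner_le_norm _ _
    _ ≤ R * ‖v‖ := mul_le_mul_of_nonneg_right (hRm z hz) (norm_nonneg _)
  have hSple : ∀ v : F, ‖v‖ ≤ 1 → sSup ((fun z => ⟪z, v⟫) '' Zp) ≤ R := by
    intro v hv
    exact csSup_le (hZpn.image _) (by rintro t ⟨z, hz, rfl⟩; exact innerub v z hv (hRp z hz))
  have hSmle : ∀ v : F, ‖v‖ ≤ 1 → sSup ((fun z => ⟪z, v⟫) '' Zm) ≤ R := by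
    intro v hv
    exact csSup_le (hZmn.image _) (by rintro t ⟨z, hz, rfl⟩; exact innerub v z hv (hRm z hz))
  have hSpge : ∀ v : F, ‖v‖ ≤ 1 → -R ≤ sSup ((fun z => ⟪z, v⟫) '' Zp) := by
    intro v hv
    obtain ⟨p0, hp0⟩ := hZpn
    exact le_trans (innerlb v p0 hv (hRp p0 hp0)) (le_csSup (hbip v) ⟨p0, hp0, rfl⟩)
  have hSmge : ∀ v : F, ‖v‖ ≤ 1 → -R ≤ sSup ((fun z => ⟪z, v⟫) '' Zm) := by
    intro v hv
    obtain ⟨q0, hq0⟩ := hZmn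
    exact le_trans (innerlb v q0 hv (hRm q0 hq0)) (le_csSup (hbim v) ⟨q0, hq0, rfl⟩)
  have hFbdd : BddAbove ((fun v => |sSup ((fun z => ⟪z, v⟫) '' Zp)
      - sSup ((fun z => ⟪z, v⟫) '' Zm)|) '' {v : F | ‖v‖ ≤ 1}) := by
    refine ⟨2 * R, ?_⟩
    rintro t ⟨v, hv, rfl⟩
    have hv' : ‖v‖ ≤ 1 := hv
    have := hSple v hv'; have := hSmle v hv'; have := hSpge v hv'; have := hSmge v hv'
    rw [abs_le]
    constructor <;> linarith
  have hFne : ((fun v => |sSup ((fun z => ⟪z, v⟫) '' Zp)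
      - sSup ((fun z => ⟪z, v⟫) '' Zm)|) '' {v : F | ‖v‖ ≤ 1}).Nonempty := by
    refine ⟨_, ⟨0, ?_, rfl⟩⟩
    simp
  have hnormbdd : ∀ p ∈ Zp, BddBelow ((fun z => ‖p - z‖) '' Zm) := by
    intro p _
    exact ⟨0, by rintro t ⟨z, hz, rfl⟩; exact norm_nonneg _⟩
  have hnormbdd' : ∀ q ∈ Zm, BddBelow ((fun z => ‖q - z‖) '' Zp) := by
    intro q _
    exact ⟨0, by rintro t ⟨z, hz, rfl⟩; exact norm_nonneg _⟩
  have hDpbdd : BddAbove ((fun p => sInf ((fun z => ‖p - z‖) '' Zm)) '' Zp) := by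
    obtain ⟨q0, hq0⟩ := hZmn
    refine ⟨2 * R, ?_⟩
    rintro t ⟨p, hp, rfl⟩
    have h1 : sInf ((fun z => ‖p - z‖) '' Zm) ≤ ‖p - q0‖ :=
      csInf_le (hnormbdd p hp) ⟨q0, hq0, rfl⟩
    have h2 : ‖p - q0‖ ≤ ‖p‖ + ‖q0‖ := norm_sub_le _ _
    have := hRp p hp; have := hRm q0 hq0
    simp only
    linarith
  have hDmbdd : BddAbove ((fun q => sInf ((fun z => ‖q - z‖) '' Zp)) '' Zm) := by
    obtain ⟨p0, hp0⟩ := hZpn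
    refine ⟨2 * R, ?_⟩
    rintro t ⟨q, hq, rfl⟩
    have h1 : sInf ((fun z => ‖q - z‖) '' Zp) ≤ ‖q - p0‖ :=
      csInf_le (hnormbdd' q hq) ⟨p0, hp0, rfl⟩
    have h2 : ‖q - p0‖ ≤ ‖q‖ + ‖p0‖ := norm_sub_le _ _
    have := hRm q hq; have := hRp p0 hp0
    simp only
    linarith
  apply le_antisymm
  · apply csSup_le hFne
    rintro t ⟨v, hv, rfl⟩
    have hv' : ‖v‖ ≤ 1 := hv
    show |sSup ((fun z => ⟪z, v⟫) '' Zp) - sSup ((fun z => ⟪z, v⟫) '' Zm)| ≤ _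
    rcases le_total (sSup ((fun z => ⟪z, v⟫) '' Zm)) (sSup ((fun z => ⟪z, v⟫) '' Zp)) with h | h
    · rw [abs_of_nonneg (by linarith)]
      apply le_max_of_le_left
      obtain ⟨pm, hpm, hpmax, hpsup⟩ := csSup_image_eq (g := fun z => ⟪z, v⟫) hZpc hZpn
        ((continuous_id.inner continuous_const).continuousOn)
      rw [hpsup]
      have hstep : ⟪pm, v⟫ - sSup ((fun z => ⟪z, v⟫) '' Zm)
          = sInf ((fun q => ⟪pm - q, v⟫) '' Zm) := (csInf_inner_sub Zm hZmc hZmn pm v).symm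
      rw [hstep]
      have h1 : sInf ((fun q => ⟪pm - q, v⟫) '' Zm) ≤ sInf ((fun z => ‖pm - z‖) '' Zm) :=
        (key Zm hZmc hZmn hZmv pm).2 ⟨v, hv, rfl⟩
      have h2 : sInf ((fun z => ‖pm - z‖) '' Zm)
          ≤ sSup ((fun p => sInf ((fun z => ‖p - z‖) '' Zm)) '' Zp) :=
        le_csSup hDpbdd ⟨pm, hpm, rfl⟩
      linarith
    · rw [abs_of_nonpos (by linarith), neg_sub]
      apply le_max_of_le_right
      obtain ⟨qm, hqm, hqmax, hqsup⟩ := csSup_image_eq (g := fun z => ⟪z, v⟫) hZmc hZmn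
        ((continuous_id.inner continuous_const).continuousOn)
      rw [hqsup]
      have hstep : ⟪qm, v⟫ - sSup ((fun z => ⟪z, v⟫) '' Zp)
          = sInf ((fun q => ⟪qm - q, v⟫) '' Zp) := (csInf_inner_sub Zp hZpc hZpn qm v).symm
      rw [hstep]
      have h1 : sInf ((fun q => ⟪qm - q, v⟫) '' Zp) ≤ sInf ((fun z => ‖qm - z‖) '' Zp) :=
        (key Zp hZpc hZpn hZpv qm).2 ⟨v, hv, rfl⟩
      have h2 : sInf ((fun z => ‖qm - z‖) '' Zp)
          ≤ sSup ((fun q => sInf ((fun z => ‖q - z‖) '' Zp)) '' Zm) :=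
        le_csSup hDmbdd ⟨qm, hqm, rfl⟩
      linarith
  · apply max_le
    · apply csSup_le (hZpn.image _)
      rintro t ⟨p, hp, rfl⟩
      show sInf ((fun z => ‖p - z‖) '' Zm) ≤ _
      obtain ⟨v, hv, hveq⟩ := (key Zm hZmc hZmn hZmv p).1
      have hveq' : sInf ((fun z => ⟪p - z, v⟫) '' Zm) = sInf ((fun z => ‖p - z‖) '' Zm) := hveq
      rw [← hveq', csInf_inner_sub Zm hZmc hZmn p v]
      have hv' : ‖v‖ ≤ 1 := hv
      have e2 : ⟪p, v⟫ ≤ sSup ((fun z => ⟪z, v⟫) '' Zp) := le_csSup (hbip v) ⟨p, hp, rfl⟩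
      have e3 : sSup ((fun z => ⟪z, v⟫) '' Zp) - sSup ((fun z => ⟪z, v⟫) '' Zm)
          ≤ |sSup ((fun z => ⟪z, v⟫) '' Zp) - sSup ((fun z => ⟪z, v⟫) '' Zm)| := le_abs_self _
      have e4 : |sSup ((fun z => ⟪z, v⟫) '' Zp) - sSup ((fun z => ⟪z, v⟫) '' Zm)|
          ≤ sSup ((fun v => |sSup ((fun z => ⟪z, v⟫) '' Zp)
              - sSup ((fun z => ⟪z, v⟫) '' Zm)|) '' {v : F | ‖v‖ ≤ 1}) :=
        le_csSup hFbdd ⟨v, hv, rfl⟩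
      linarith
    · apply csSup_le (hZmn.image _)
      rintro t ⟨q, hq, rfl⟩
      show sInf ((fun z => ‖q - z‖) '' Zp) ≤ _
      obtain ⟨v, hv, hveq⟩ := (key Zp hZpc hZpn hZpv q).1
      have hveq' : sInf ((fun z => ⟪q - z, v⟫) '' Zp) = sInf ((fun z => ‖q - z‖) '' Zp) := hveq
      rw [← hveq', csInf_inner_sub Zp hZpc hZpn q v]
      have hv' : ‖v‖ ≤ 1 := hv
      have e2 : ⟪q, v⟫ ≤ sSup ((fun z => ⟪z, v⟫) '' Zm) := le_csSup (hbim v) ⟨q, hq, rfl⟩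
      have e3 : sSup ((fun z => ⟪z, v⟫) '' Zm) - sSup ((fun z => ⟪z, v⟫) '' Zp)
          ≤ |sSup ((fun z => ⟪z, v⟫) '' Zp) - sSup ((fun z => ⟪z, v⟫) '' Zm)| := by
        rw [abs_sub_comm]
        exact le_abs_self _
      have e4 : |sSup ((fun z => ⟪z, v⟫) '' Zp) - sSup ((fun z => ⟪z, v⟫) '' Zm)|
          ≤ sSup ((fun v => |sSup ((fun z => ⟪z, v⟫) '' Zp)
              - sSup ((fun z => ⟪z, v⟫) '' Zm)|) '' {v : F | ‖v‖ ≤ 1}) :=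
        le_csSup hFbdd ⟨v, hv, rfl⟩
      linarith
end core2



/-- Lemma 2.1: the dual constraint quantity `max_{‖u‖₂ ≤ 1} |λᵀ (X u)₊|` equals the maximum
of the two maximin zonotope-distance quantities. -/
theorem stmt0 (n d : ℕ) (X : Matrix (Fin n) (Fin d) ℝ) (y : Fin n → ℝ)
    (hy : ∀ i, y i = 1 ∨ y i = -1)
    (l : Fin n → ℝ) (hl : ∀ i, 0 ≤ y i * l i) :
    sSup ((fun u => |∑ i, l i * max (X.mulVec u i) 0|) '' {u : Fin d → ℝ | e2 u ≤ 1}) =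
      max
        (sSup ((fun bp => sInf ((fun bm => e2 (vPlus X y l bp - vMinus X y l bm)) '' box n))
          '' box n))
        (sSup ((fun bm => sInf ((fun bp => e2 (vPlus X y l bp - vMinus X y l bm)) '' box n))
          '' box n)) := by
  set cP : Fin n → Fin d → ℝ := fun i k => if y i = 1 then l i * X i k else 0 with hcP
  set cM : Fin n → Fin d → ℝ := fun i k => if y i = -1 then (-l i) * X i k else 0 with hcM
  have hlmP : ∀ b, lmap cP b = toE (vPlus X y l b) := fun b => by
    rw [hcP]; exact (vPlus_lin X y l b).symm
  have hlmM : ∀ b, lmap cM b = toE (vMinus X y l b) := fun b => by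
    rw [hcM]; exact (vMinus_lin X y l b).symm
  set Zp : Set (EuclideanSpace ℝ (Fin d)) := lmap cP '' box n with hZp
  set Zm : Set (EuclideanSpace ℝ (Fin d)) := lmap cM '' box n with hZm
  have hZpc : IsCompact Zp := (box_compact n).image (lmap cP).continuous_of_finiteDimensional
  have hZmc : IsCompact Zm := (box_compact n).image (lmap cM).continuous_of_finiteDimensional
  have hZpv : Convex ℝ Zp := (box_convex n).linear_image (lmap cP)
  have hZmv : Convex ℝ Zm := (box_convex n).linear_image (lmap cM)
  have hZpn : Zp.Nonempty := (box_nonempty n).image _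
  have hZmn : Zm.Nonempty := (box_nonempty n).image _
  have hplus : ∀ u : Fin d → ℝ,
      (∑ i, if y i = 1 then l i * max (X.mulVec u i) 0 else 0)
        = sSup ((fun z => ⟪z, toE u⟫) '' Zp) := by
    intro u
    have hgr := sp_eq (fun i => y i = 1) l (fun i => X.mulVec u i)
      (fun i hi => by have h := hl i; rw [hi, one_mul] at h; exact h)
    have himg : (fun z => ⟪z, toE u⟫) '' Zp
        = (fun b => ∑ i, if y i = 1 then l i * b i * X.mulVec u i else 0) '' box n := by
      rw [hZp, Set.image_image]
      apply Set.image_congr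
      intro b _
      rw [hlmP b, inner_vPlus]
    rw [himg, hgr.csSup_eq]
  have hminus : ∀ u : Fin d → ℝ,
      (∑ i, if y i = -1 then (-l i) * max (X.mulVec u i) 0 else 0)
        = sSup ((fun z => ⟪z, toE u⟫) '' Zm) := by
    intro u
    have hgr := sp_eq (fun i => y i = -1) (fun i => -l i) (fun i => X.mulVec u i)
      (fun i hi => by have h := hl i; rw [hi] at h; show (0:ℝ) ≤ -l i; linarith)
    have himg : (fun z => ⟪z, toE u⟫) '' Zm
        = (fun b => ∑ i, if y i = -1 then (-l i) * b i * X.mulVec u i else 0) '' box n := by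
      rw [hZm, Set.image_image]
      apply Set.image_congr
      intro b _
      rw [hlmM b, inner_vMinus]
    rw [himg, hgr.csSup_eq]
  have hpoint : ∀ u : Fin d → ℝ,
      |∑ i, l i * max (X.mulVec u i) 0|
        = |sSup ((fun z => ⟪z, toE u⟫) '' Zp) - sSup ((fun z => ⟪z, toE u⟫) '' Zm)| := by
    intro u
    rw [sum_split y l (fun i => X.mulVec u i) hy, hplus u, hminus u]
  have hLHS : (fun u => |∑ i, l i * max (X.mulVec u i) 0|) '' {u : Fin d → ℝ | e2 u ≤ 1}
      = (fun v => |sSup ((fun z => ⟪z, v⟫) '' Zp) - sSup ((fun z => ⟪z, v⟫) '' Zm)|) ''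
          {v : EuclideanSpace ℝ (Fin d) | ‖v‖ ≤ 1} := by
    have h1 : (fun u => |∑ i, l i * max (X.mulVec u i) 0|) '' {u : Fin d → ℝ | e2 u ≤ 1}
        = (fun u => |sSup ((fun z => ⟪z, toE u⟫) '' Zp)
            - sSup ((fun z => ⟪z, toE u⟫) '' Zm)|) '' {u : Fin d → ℝ | e2 u ≤ 1} :=
      Set.image_congr fun u _ => hpoint u
    rw [h1]
    have h2 : (fun u : Fin d → ℝ => |sSup ((fun z => ⟪z, toE u⟫) '' Zp)
          - sSup ((fun z => ⟪z, toE u⟫) '' Zm)|)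
        = (fun v : EuclideanSpace ℝ (Fin d) => |sSup ((fun z => ⟪z, v⟫) '' Zp)
            - sSup ((fun z => ⟪z, v⟫) '' Zm)|) ∘ toE := rfl
    have htoE : toE '' {u : Fin d → ℝ | e2 u ≤ 1}
        = {v : EuclideanSpace ℝ (Fin d) | ‖v‖ ≤ 1} := by
      ext v
      constructor
      · rintro ⟨u, hu, rfl⟩
        show ‖toE u‖ ≤ 1
        rw [← e2_eq']
        exact hu
      · intro hv
        refine ⟨(WithLp.equiv 2 (Fin d → ℝ)) v, ?_, rfl⟩
        show e2 _ ≤ 1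
        rw [e2_eq']
        exact hv
    rw [h2, Set.image_comp, htoE]
  have hA : (fun bp => sInf ((fun bm => e2 (vPlus X y l bp - vMinus X y l bm)) '' box n))
        '' box n
      = (fun p => sInf ((fun z => ‖p - z‖) '' Zm)) '' Zp := by
    rw [hZp, Set.image_image]
    apply Set.image_congr
    intro bp _
    congr 1
    rw [hZm, Set.image_image]
    apply Set.image_congr
    intro bm _
    rw [e2_eq', toE_sub, hlmP bp, hlmM bm]
  have hB : (fun bm => sInf ((fun bp => e2 (vPlus X y l bp - vMinus X y l bm)) '' box n))
        '' box n
      = (fun q => sInf ((fun z => ‖q - z‖) '' Zp)) '' Zm := by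
    rw [hZm, Set.image_image]
    apply Set.image_congr
    intro bm _
    congr 1
    rw [hZp, Set.image_image]
    apply Set.image_congr
    intro bp _
    rw [e2_eq', toE_sub, hlmP bp, hlmM bm, norm_sub_rev]
  rw [hLHS, hA, hB]
  exact core Zp Zm hZpc hZpn hZpv hZmc hZmn hZmv
end

section
/- Let X ∈ ℝ^{n×d}, y ∈ {−1,1}^n, and λ ∈ ℝ^n with y_i λ_i ≥ 0 for all i. Define the zonotopes K₊ = { X₊ᵀ diag(λ₊) b₊ : b₊ ∈ [0,1]^{n₊} } and K₋ = { X₋ᵀ diag(λ₋) b₋ : b₋ ∈ [0,1]^{n₋} } in ℝ^d. Then max_{u ∈ ℝ^d, ‖u‖₂ ≤ 1} |λᵀ(Xu)₊| = H(K₊, K₋), where H denotes the Hausdorff distance with respect to the Euclidean metric, H(A,B) = max{ sup_{a∈A} inf_{b∈B} ‖a−b‖₂ , sup_{b∈B} inf_{a∈A} ‖a−b‖₂ }. -/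
open Matrix

/-- The Hausdorff distance between two sets in `ℝ^d` with respect to the Euclidean norm:
`H(A,B) = max { sup_{a∈A} inf_{b∈B} ‖a−b‖₂ , sup_{b∈B} inf_{a∈A} ‖a−b‖₂ }`. -/
noncomputable def hausdorff {d : ℕ} (A B : Set (Fin d → ℝ)) : ℝ :=
  max (sSup ((fun a => sInf ((fun b => e2 (a - b)) '' B)) '' A))
      (sSup ((fun b => sInf ((fun a => e2 (a - b)) '' A)) '' B))

namespace S1
open RealInnerProductSpace

variable {n d : ℕ} (X : Matrix (Fin n) (Fin d) ℝ) (y l : Fin n → ℝ)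

noncomputable def hp (u : Fin d → ℝ) : ℝ := ∑ i, if y i = 1 then l i * max (X.mulVec u i) 0 else 0
noncomputable def hm (u : Fin d → ℝ) : ℝ := ∑ i, if y i = -1 then (-l i) * max (X.mulVec u i) 0 else 0
noncomputable def bstar (u : Fin d → ℝ) : Fin n → ℝ := fun i => if 0 ≤ X.mulVec u i then 1 else 0

lemma bstar_mem (u : Fin d → ℝ) : bstar X u ∈ box n := by
  intro i; unfold bstar; split_ifs <;> norm_num

lemma dot_vPlus (b u : Fin d → ℝ → ℝ) : True := trivial

lemma dotP (b : Fin n → ℝ) (u : Fin d → ℝ) :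
    ∑ k, vPlus X y l b k * u k = ∑ i, if y i = 1 then l i * b i * (X.mulVec u i) else 0 := by
  simp only [vPlus, Finset.sum_mul]
  rw [Finset.sum_comm]
  refine Finset.sum_congr rfl fun i _ => ?_
  by_cases h : y i = 1 <;>
    simp [h, Matrix.mulVec, dotProduct, Finset.mul_sum, mul_assoc]

lemma dotM (b : Fin n → ℝ) (u : Fin d → ℝ) :
    ∑ k, vMinus X y l b k * u k = ∑ i, if y i = -1 then (-l i) * b i * (X.mulVec u i) else 0 := by
  simp only [vMinus, Finset.sum_mul]
  rw [Finset.sum_comm]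
  refine Finset.sum_congr rfl fun i _ => ?_
  by_cases h : y i = -1 <;>
    simp [h, Matrix.mulVec, dotProduct, Finset.mul_sum, mul_assoc]

lemma dotP_le (hl : ∀ i, 0 ≤ y i * l i) {b : Fin n → ℝ} (hb : b ∈ box n) (u : Fin d → ℝ) :
    ∑ k, vPlus X y l b k * u k ≤ hp X y l u := by
  rw [dotP]
  refine Finset.sum_le_sum fun i _ => ?_
  by_cases h : y i = 1
  · simp only [h, if_true]
    have hli : 0 ≤ l i := by have := hl i; rw [h] at this; linarith
    rcases le_or_gt (X.mulVec u i) 0 with hx | hx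
    · have : l i * b i * X.mulVec u i ≤ 0 := by
        have hb1 := (hb i).1
        nlinarith [mul_nonneg (mul_nonneg hli hb1) (neg_nonneg.mpr hx)]
      have : 0 ≤ l i * max (X.mulVec u i) 0 := by positivity
      linarith
    · rw [max_eq_left hx.le]
      have h1 := (hb i).1; have h2 := (hb i).2
      nlinarith [mul_nonneg (mul_nonneg hli (sub_nonneg.mpr h2)) hx.le]
  · simp [h]

lemma dotM_le (hl : ∀ i, 0 ≤ y i * l i) {b : Fin n → ℝ} (hb : b ∈ box n) (u : Fin d → ℝ) :
    ∑ k, vMinus X y l b k * u k ≤ hm X y l u := by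
  rw [dotM]
  refine Finset.sum_le_sum fun i _ => ?_
  by_cases h : y i = -1
  · simp only [h, if_true]
    have hli : 0 ≤ -l i := by have := hl i; rw [h] at this; linarith
    rcases le_or_gt (X.mulVec u i) 0 with hx | hx
    · have : (-l i) * b i * X.mulVec u i ≤ 0 := by
        have hb1 := (hb i).1
        nlinarith [mul_nonneg (mul_nonneg hli hb1) (neg_nonneg.mpr hx)]
      have : 0 ≤ (-l i) * max (X.mulVec u i) 0 := by positivity
      linarith
    · rw [max_eq_left hx.le]
      have h1 := (hb i).1; have h2 := (hb i).2
      nlinarith [mul_nonneg (mul_nonneg hli (sub_nonneg.mpr h2)) hx.le]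
  · simp [h]

lemma dotP_star (hl : ∀ i, 0 ≤ y i * l i) (u : Fin d → ℝ) :
    ∑ k, vPlus X y l (bstar X u) k * u k = hp X y l u := by
  rw [dotP]
  refine Finset.sum_congr rfl fun i _ => ?_
  by_cases h : y i = 1
  · simp only [h, if_true, bstar]
    rcases le_or_gt 0 (X.mulVec u i) with hx | hx
    · simp [hx, max_eq_left hx]
    · simp [not_le.2 hx, max_eq_right hx.le]
  · simp [h]

lemma dotM_star (hl : ∀ i, 0 ≤ y i * l i) (u : Fin d → ℝ) :
    ∑ k, vMinus X y l (bstar X u) k * u k = hm X y l u := by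
  rw [dotM]
  refine Finset.sum_congr rfl fun i _ => ?_
  by_cases h : y i = -1
  · simp only [h, if_true, bstar]
    rcases le_or_gt 0 (X.mulVec u i) with hx | hx
    · simp [hx, max_eq_left hx]
    · simp [not_le.2 hx, max_eq_right hx.le]
  · simp [h]

lemma split_sum (hy : ∀ i, y i = 1 ∨ y i = -1) (u : Fin d → ℝ) :
    ∑ i, l i * max (X.mulVec u i) 0 = hp X y l u - hm X y l u := by
  unfold hp hm
  rw [← Finset.sum_sub_distrib]
  refine Finset.sum_congr rfl fun i _ => ?_
  rcases hy i with h | h <;> simp [h] <;> ring_nf <;> norm_num [h]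



noncomputable def toE {d : ℕ} (v : Fin d → ℝ) : EuclideanSpace ℝ (Fin d) := WithLp.toLp 2 v

lemma e2_eq {d : ℕ} (v : Fin d → ℝ) : e2 v = ‖toE v‖ := by
  rw [EuclideanSpace.norm_eq, e2]
  congr 1
  exact Finset.sum_congr rfl fun i _ => by simp [toE, Real.norm_eq_abs, sq_abs]

lemma e2_nonneg {d : ℕ} (v : Fin d → ℝ) : 0 ≤ e2 v := Real.sqrt_nonneg _

lemma toE_sub {d : ℕ} (a b : Fin d → ℝ) : toE (a - b) = toE a - toE b := rfl

lemma e2_sub_comm {d : ℕ} (a b : Fin d → ℝ) : e2 (a - b) = e2 (b - a) := by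
  rw [e2_eq, e2_eq, toE_sub, toE_sub, norm_sub_rev]

lemma dot_eq {d : ℕ} (a u : Fin d → ℝ) : (∑ k, a k * u k) = ⟪toE a, toE u⟫ := by
  rw [PiLp.inner_apply]
  exact Finset.sum_congr rfl fun i _ => (by simp [toE, RCLike.inner_apply, mul_comm])

lemma cauchy {d : ℕ} (a u : Fin d → ℝ) : |∑ k, a k * u k| ≤ e2 a * e2 u := by
  rw [dot_eq, e2_eq, e2_eq]; exact abs_real_inner_le_norm _ _

lemma proj_ineq {d : ℕ} (K : Set (EuclideanSpace ℝ (Fin d))) (hK : Convex ℝ K)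
    (a v : EuclideanSpace ℝ (Fin d)) (hv : v ∈ K)
    (hmin : ∀ m ∈ K, ‖a - v‖ ≤ ‖a - m‖) : ∀ m ∈ K, ⟪a - v, m - v⟫ ≤ 0 := by
  haveI : Nonempty K := ⟨⟨v, hv⟩⟩
  rw [← norm_eq_iInf_iff_real_inner_le_zero hK hv]
  refine le_antisymm (le_ciInf fun w => hmin w w.2) (ciInf_le ⟨0, ?_⟩ (⟨v, hv⟩ : K))
  rintro x ⟨w, rfl⟩; positivity

lemma box_eq (n : ℕ) : box n = Set.pi Set.univ (fun _ => Set.Icc (0:ℝ) 1) := by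
  ext b
  simp only [box, Set.mem_setOf_eq, Set.mem_pi, Set.mem_univ, forall_true_left, Set.mem_Icc,
    true_implies]

lemma box_compact (n : ℕ) : IsCompact (box n) := by
  rw [box_eq]; exact isCompact_univ_pi fun _ => isCompact_Icc

lemma box_convex (n : ℕ) : Convex ℝ (box n) := by
  rw [box_eq]; exact convex_pi fun _ _ => convex_Icc 0 1

lemma zero_mem_box (n : ℕ) : (0 : Fin n → ℝ) ∈ box n := fun i => by norm_num

lemma e2_continuous {d : ℕ} : Continuous (e2 (d := d)) := by
  unfold e2
  exact Real.continuous_sqrt.comp (continuous_finset_sum _ fun k _ => (continuous_apply k).pow 2)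

lemma contP : Continuous (fun b => vPlus X y l b) := by
  unfold vPlus
  refine continuous_pi fun k => continuous_finset_sum _ fun i _ => ?_
  by_cases h : y i = 1 <;> simp only [h, if_true, if_neg, if_false] <;> fun_prop

lemma contM : Continuous (fun b => vMinus X y l b) := by
  unfold vMinus
  refine continuous_pi fun k => continuous_finset_sum _ fun i _ => ?_
  by_cases h : y i = -1 <;> simp only [h, if_true, if_neg, if_false] <;> fun_prop

lemma linP : IsLinearMap ℝ (fun b => vPlus X y l b) := by
  constructor
  · intro b1 b2; funext k
    simp only [vPlus, Pi.add_apply]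
    rw [← Finset.sum_add_distrib]
    refine Finset.sum_congr rfl fun i _ => ?_
    by_cases h : y i = 1 <;> simp [h, Pi.add_apply] <;> ring
  · intro c b; funext k
    simp only [vPlus, Pi.smul_apply, smul_eq_mul, Finset.mul_sum]
    refine Finset.sum_congr rfl fun i _ => ?_
    by_cases h : y i = 1 <;> simp [h] <;> ring

lemma linM : IsLinearMap ℝ (fun b => vMinus X y l b) := by
  constructor
  · intro b1 b2; funext k
    simp only [vMinus, Pi.add_apply]
    rw [← Finset.sum_add_distrib]
    refine Finset.sum_congr rfl fun i _ => ?_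
    by_cases h : y i = -1 <;> simp [h, Pi.add_apply] <;> ring
  · intro c b; funext k
    simp only [vMinus, Pi.smul_apply, smul_eq_mul, Finset.mul_sum]
    refine Finset.sum_congr rfl fun i _ => ?_
    by_cases h : y i = -1 <;> simp [h] <;> ring

noncomputable def CC : ℝ := ∑ i, |l i| * e2 (fun k => X i k)

lemma toE_sum {d : ℕ} {ι : Type*} (s : Finset ι) (f : ι → (Fin d → ℝ)) :
    toE (∑ i ∈ s, f i) = ∑ i ∈ s, toE (f i) :=
  map_sum (WithLp.linearEquiv 2 ℝ (Fin d → ℝ)).symm f s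

lemma toE_smul {d : ℕ} (c : ℝ) (v : Fin d → ℝ) : toE (c • v) = c • toE v := rfl

lemma normP_le {b : Fin n → ℝ} (hb : b ∈ box n) : e2 (vPlus X y l b) ≤ CC X l := by
  rw [e2_eq]
  have hdec0 : vPlus X y l b =
      ∑ i, (if y i = 1 then l i * b i else 0) • (fun k => X i k) := by
    funext k
    simp only [vPlus, Finset.sum_apply, Pi.smul_apply, smul_eq_mul]
    refine Finset.sum_congr rfl fun i _ => ?_
    by_cases h : y i = 1 <;> simp [h, mul_assoc]
  rw [hdec0, toE_sum]
  simp only [toE_smul]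
  refine (norm_sum_le _ _).trans (Finset.sum_le_sum fun i _ => ?_)
  rw [norm_smul, ← e2_eq]
  have : ‖if y i = 1 then l i * b i else 0‖ ≤ |l i| := by
    by_cases h : y i = 1
    · simp only [h, if_true, Real.norm_eq_abs, abs_mul]
      have hab : |b i| ≤ 1 := abs_le.mpr ⟨by linarith [(hb i).1], (hb i).2⟩
      exact mul_le_of_le_one_right (abs_nonneg _) hab
    · simp [h]
  exact mul_le_mul_of_nonneg_right this (e2_nonneg _)


lemma sum_sub_mul {d : ℕ} (v w u : Fin d → ℝ) :
    ∑ k, (v - w) k * u k = (∑ k, v k * u k) - ∑ k, w k * u k := by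
  rw [← Finset.sum_sub_distrib]
  exact Finset.sum_congr rfl fun k _ => by simp [Pi.sub_apply, sub_mul]

lemma e2_sq {d : ℕ} (v : Fin d → ℝ) : ∑ k, (v k) ^ 2 = (e2 v) ^ 2 :=
  (Real.sq_sqrt (Finset.sum_nonneg fun k _ => sq_nonneg _)).symm

lemma e2_triangle {d : ℕ} (a b : Fin d → ℝ) : e2 (a - b) ≤ e2 a + e2 b := by
  rw [e2_eq, e2_eq, e2_eq, toE_sub]; exact norm_sub_le _ _

lemma normM_le {b : Fin n → ℝ} (hb : b ∈ box n) : e2 (vMinus X y l b) ≤ CC X l := by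
  rw [e2_eq]
  have hdec0 : vMinus X y l b =
      ∑ i, (if y i = -1 then (-l i) * b i else 0) • (fun k => X i k) := by
    funext k
    simp only [vMinus, Finset.sum_apply, Pi.smul_apply, smul_eq_mul]
    refine Finset.sum_congr rfl fun i _ => ?_
    by_cases h : y i = -1 <;> simp [h, mul_assoc]
  rw [hdec0, toE_sum]
  simp only [toE_smul]
  refine (norm_sum_le _ _).trans (Finset.sum_le_sum fun i _ => ?_)
  rw [norm_smul, ← e2_eq]
  have : ‖if y i = -1 then (-l i) * b i else 0‖ ≤ |l i| := by
    by_cases h : y i = -1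
    · simp only [h, if_true, Real.norm_eq_abs, abs_mul, abs_neg]
      have hab : |b i| ≤ 1 := abs_le.mpr ⟨by linarith [(hb i).1], (hb i).2⟩
      exact mul_le_of_le_one_right (abs_nonneg _) hab
    · simp [h]
  exact mul_le_mul_of_nonneg_right this (e2_nonneg _)

lemma proj_ineq' {d : ℕ} (K : Set (Fin d → ℝ)) (hK : Convex ℝ K) (a v : Fin d → ℝ)
    (hv : v ∈ K) (hmin : ∀ m ∈ K, e2 (a - v) ≤ e2 (a - m)) :
    ∀ m ∈ K, ∑ k, (a - v) k * (m - v) k ≤ 0 := by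
  intro m hm
  have hK' : Convex ℝ ((toE '' K : Set (EuclideanSpace ℝ (Fin d)))) :=
    hK.linear_image (WithLp.linearEquiv 2 ℝ (Fin d → ℝ)).symm.toLinearMap
  have hmin' : ∀ m' ∈ toE '' K, ‖toE a - toE v‖ ≤ ‖toE a - m'‖ := by
    rintro _ ⟨m', hm', rfl⟩
    rw [← toE_sub, ← toE_sub, ← e2_eq, ← e2_eq]
    exact hmin m' hm'
  have key := proj_ineq (toE '' K) hK' (toE a) (toE v) ⟨v, hv, rfl⟩ hmin' (toE m) ⟨m, hm, rfl⟩
  rw [dot_eq]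
  exact key
end S1

/-- Proposition 2.3: the dual constraint quantity `max_{‖u‖₂ ≤ 1} |λᵀ (X u)₊|` equals
the Hausdorff distance between the zonotopes `K₊ = 𝒵(X₊ᵀ diag(λ₊))` and
`K₋ = 𝒵(X₋ᵀ diag(λ₋))`. -/
theorem stmt1 (n d : ℕ) (X : Matrix (Fin n) (Fin d) ℝ) (y : Fin n → ℝ)
    (hy : ∀ i, y i = 1 ∨ y i = -1)
    (l : Fin n → ℝ) (hl : ∀ i, 0 ≤ y i * l i)
    (Kp Km : Set (Fin d → ℝ))
    (hKp : Kp = (fun b => vPlus X y l b) '' box n)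
    (hKm : Km = (fun b => vMinus X y l b) '' box n) :
    sSup ((fun u => |∑ i, l i * max (X.mulVec u i) 0|) '' {u : Fin d → ℝ | e2 u ≤ 1}) =
      hausdorff Kp Km := by
  classical
  set C := S1.CC X l with hCdef
  have hCnn : 0 ≤ C := Finset.sum_nonneg fun i _ => mul_nonneg (abs_nonneg _) (S1.e2_nonneg _)
  set F : (Fin d → ℝ) → ℝ := fun u => |∑ i, l i * max (X.mulVec u i) 0| with hF
  set S : Set (Fin d → ℝ) := {u | e2 u ≤ 1} with hS
  have hrow : ∀ (u : Fin d → ℝ) i, |X.mulVec u i| ≤ e2 (fun k => X i k) * e2 u := by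
    intro u i
    have h : X.mulVec u i = ∑ k, X i k * u k := rfl
    rw [h]; exact S1.cauchy _ _
  have hFle : ∀ u ∈ S, F u ≤ C := by
    intro u hu
    have hu1 : e2 u ≤ 1 := hu
    calc F u ≤ ∑ i, |l i * max (X.mulVec u i) 0| := Finset.abs_sum_le_sum_abs _ _
      _ ≤ ∑ i, |l i| * e2 (fun k => X i k) := Finset.sum_le_sum fun i _ => by
          rw [abs_mul]
          refine mul_le_mul_of_nonneg_left ?_ (abs_nonneg _)
          have h1 : |max (X.mulVec u i) 0| ≤ |X.mulVec u i| := by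
            rcases le_or_gt (X.mulVec u i) 0 with h | h
            · simp [max_eq_right h]
            · rw [max_eq_left h.le]
          refine h1.trans ((hrow u i).trans ?_)
          nlinarith [S1.e2_nonneg (fun k => X i k), S1.e2_nonneg u]
      _ = C := rfl
  have hS0 : (0 : Fin d → ℝ) ∈ S := by
    have h : e2 (0 : Fin d → ℝ) = 0 := by simp [e2]
    simp only [hS, Set.mem_setOf_eq, h]; norm_num
  have hA1ne : (F '' S).Nonempty := ⟨F 0, 0, hS0, rfl⟩
  have hA1bdd : BddAbove (F '' S) := ⟨C, by rintro _ ⟨u, hu, rfl⟩; exact hFle u hu⟩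
  set L := sSup (F '' S) with hL
  have hFmem : ∀ u ∈ S, F u ≤ L := fun u hu => le_csSup hA1bdd ⟨u, hu, rfl⟩
  have hL0 : 0 ≤ L := le_trans (abs_nonneg _) (hFmem 0 hS0)
  have hKpne : Kp.Nonempty := by rw [hKp]; exact ⟨_, 0, S1.zero_mem_box n, rfl⟩
  have hKmne : Km.Nonempty := by rw [hKm]; exact ⟨_, 0, S1.zero_mem_box n, rfl⟩
  have hKpbd : ∀ a ∈ Kp, e2 a ≤ C := by
    rw [hKp]; rintro _ ⟨b, hb, rfl⟩; exact S1.normP_le X y l hb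
  have hKmbd : ∀ a ∈ Km, e2 a ≤ C := by
    rw [hKm]; rintro _ ⟨b, hb, rfl⟩; exact S1.normM_le X y l hb
  have hKpcomp : IsCompact Kp := by rw [hKp]; exact (S1.box_compact n).image (S1.contP X y l)
  have hKmcomp : IsCompact Km := by rw [hKm]; exact (S1.box_compact n).image (S1.contM X y l)
  have hKpconv : Convex ℝ Kp := by
    rw [hKp]; exact (S1.box_convex n).is_linear_image (S1.linP X y l)
  have hKmconv : Convex ℝ Km := by
    rw [hKm]; exact (S1.box_convex n).is_linear_image (S1.linM X y l)
  have hIbdd : ∀ (a : Fin d → ℝ) (K : Set (Fin d → ℝ)), BddBelow ((fun b => e2 (a - b)) '' K) :=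
    fun a K => ⟨0, by rintro _ ⟨m, hm, rfl⟩; exact S1.e2_nonneg _⟩
  have hIbdd' : ∀ (b : Fin d → ℝ) (K : Set (Fin d → ℝ)), BddBelow ((fun a => e2 (a - b)) '' K) :=
    fun b K => ⟨0, by rintro _ ⟨m, hm, rfl⟩; exact S1.e2_nonneg _⟩
  set D1 := (fun a => sInf ((fun b => e2 (a - b)) '' Km)) '' Kp with hD1
  set D2 := (fun b => sInf ((fun a => e2 (a - b)) '' Kp)) '' Km with hD2
  have hD1ne : D1.Nonempty := hKpne.image _
  have hD2ne : D2.Nonempty := hKmne.image _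
  have hD1bdd : BddAbove D1 := by
    refine ⟨C + C, ?_⟩
    rintro _ ⟨a, ha, rfl⟩
    obtain ⟨m0, hm0⟩ := hKmne
    refine (csInf_le (hIbdd a Km) ⟨m0, hm0, rfl⟩).trans ?_
    exact (S1.e2_triangle a m0).trans (add_le_add (hKpbd a ha) (hKmbd m0 hm0))
  have hD2bdd : BddAbove D2 := by
    refine ⟨C + C, ?_⟩
    rintro _ ⟨b, hb, rfl⟩
    obtain ⟨a0, ha0⟩ := hKpne
    refine (csInf_le (hIbdd' b Kp) ⟨a0, ha0, rfl⟩).trans ?_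
    exact (S1.e2_triangle a0 b).trans (add_le_add (hKpbd a0 ha0) (hKmbd b hb))
  have hHmax : hausdorff Kp Km = max (sSup D1) (sSup D2) := rfl
  -- direction 1 : L ≤ hausdorff
  have dir1 : L ≤ hausdorff Kp Km := by
    refine csSup_le hA1ne ?_
    rintro _ ⟨u, hu, rfl⟩
    have hu1 : e2 u ≤ 1 := hu
    have hFu : F u = |S1.hp X y l u - S1.hm X y l u| := by
      simp only [hF]; rw [S1.split_sum X y l hy u]
    have claim1 : S1.hp X y l u - S1.hm X y l u ≤ sSup D1 := by
      set a := vPlus X y l (S1.bstar X u) with hadef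
      have haKp : a ∈ Kp := by rw [hKp]; exact ⟨_, S1.bstar_mem X u, rfl⟩
      refine le_trans ?_ (le_csSup hD1bdd ⟨a, haKp, rfl⟩)
      refine le_csInf (hKmne.image _) ?_
      rintro _ ⟨m, hmKm, rfl⟩
      obtain ⟨bm, hbm, hbmeq⟩ : ∃ bm ∈ box n, vMinus X y l bm = m := by
        rw [hKm] at hmKm; obtain ⟨bm, h1, h2⟩ := hmKm; exact ⟨bm, h1, h2⟩
      have h1 : S1.hp X y l u = ∑ k, a k * u k := (S1.dotP_star X y l hl u).symm
      have h2 : ∑ k, m k * u k ≤ S1.hm X y l u := by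
        rw [← hbmeq]; exact S1.dotM_le X y l hl hbm u
      have h3 : ∑ k, (a - m) k * u k ≤ e2 (a - m) := by
        have hc := S1.cauchy (a - m) u
        have h4 := le_abs_self (∑ k, (a - m) k * u k)
        nlinarith [S1.e2_nonneg (a - m), S1.e2_nonneg u]
      rw [S1.sum_sub_mul] at h3
      linarith
    have claim2 : S1.hm X y l u - S1.hp X y l u ≤ sSup D2 := by
      set m := vMinus X y l (S1.bstar X u) with hmdef
      have hmKm : m ∈ Km := by rw [hKm]; exact ⟨_, S1.bstar_mem X u, rfl⟩
      refine le_trans ?_ (le_csSup hD2bdd ⟨m, hmKm, rfl⟩)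
      refine le_csInf (hKpne.image _) ?_
      rintro _ ⟨p, hpKp, rfl⟩
      obtain ⟨bp, hbp, hbpeq⟩ : ∃ bp ∈ box n, vPlus X y l bp = p := by
        rw [hKp] at hpKp; obtain ⟨bp, h1, h2⟩ := hpKp; exact ⟨bp, h1, h2⟩
      have h1 : S1.hm X y l u = ∑ k, m k * u k := (S1.dotM_star X y l hl u).symm
      have h2 : ∑ k, p k * u k ≤ S1.hp X y l u := by
        rw [← hbpeq]; exact S1.dotP_le X y l hl hbp u
      have h3 : ∑ k, (m - p) k * u k ≤ e2 (p - m) := by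
        have hc := S1.cauchy (m - p) u
        have h4 := le_abs_self (∑ k, (m - p) k * u k)
        rw [S1.e2_sub_comm]
        nlinarith [S1.e2_nonneg (m - p), S1.e2_nonneg u]
      rw [S1.sum_sub_mul] at h3
      linarith
    rw [hFu, hHmax]
    have hub1 : sSup D1 ≤ max (sSup D1) (sSup D2) := le_max_left _ _
    have hub2 : sSup D2 ≤ max (sSup D1) (sSup D2) := le_max_right _ _
    exact abs_le.mpr ⟨by linarith, by linarith⟩
  -- direction 2 : hausdorff ≤ L
  have dir2 : hausdorff Kp Km ≤ L := by
    rw [hHmax]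
    have side1 : sSup D1 ≤ L := by
      refine csSup_le hD1ne ?_
      rintro _ ⟨a, haKp, rfl⟩
      have hcont : ContinuousOn (fun m : Fin d → ℝ => e2 (a - m)) Km :=
        (S1.e2_continuous.comp (continuous_const.sub continuous_id)).continuousOn
      obtain ⟨v, hvKm, hvmin0⟩ := hKmcomp.exists_isMinOn hKmne hcont
      have hvmin : ∀ m ∈ Km, e2 (a - v) ≤ e2 (a - m) := fun m hm => hvmin0 hm
      have hInf : sInf ((fun b => e2 (a - b)) '' Km) = e2 (a - v) :=
        le_antisymm (csInf_le (hIbdd a Km) ⟨v, hvKm, rfl⟩)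
          (le_csInf (hKmne.image _) (by rintro _ ⟨m, hm, rfl⟩; exact hvmin m hm))
      show sInf ((fun b => e2 (a - b)) '' Km) ≤ L
      rw [hInf]
      rcases eq_or_lt_of_le (S1.e2_nonneg (a - v)) with h0 | hpos
      · rw [← h0]; exact hL0
      set r := e2 (a - v) with hr
      set u : Fin d → ℝ := r⁻¹ • (a - v) with hu
      have he2u : e2 u = 1 := by
        have h : S1.toE u = r⁻¹ • S1.toE (a - v) := rfl
        rw [S1.e2_eq, h, norm_smul, Real.norm_eq_abs, abs_inv, abs_of_pos hpos, ← S1.e2_eq,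
          ← hr]
        exact inv_mul_cancel₀ hpos.ne'
      have huS : u ∈ S := by
        simp only [hS, Set.mem_setOf_eq, he2u]; norm_num
      have hproj := S1.proj_ineq' Km hKmconv a v hvKm hvmin
      have hsum_sq : ∑ k, (a - v) k * u k = r := by
        have h : ∀ k, (a - v) k * u k = r⁻¹ * ((a - v) k) ^ 2 := fun k => by
          simp only [hu, Pi.smul_apply, smul_eq_mul]; ring
        rw [Finset.sum_congr rfl fun k _ => h k, ← Finset.mul_sum, S1.e2_sq, ← hr, sq]
        rw [← mul_assoc, inv_mul_cancel₀ hpos.ne', one_mul]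
      set mm := vMinus X y l (S1.bstar X u) with hmm
      have hmmKm : mm ∈ Km := by rw [hKm]; exact ⟨_, S1.bstar_mem X u, rfl⟩
      have hhm : S1.hm X y l u = ∑ k, mm k * u k := (S1.dotM_star X y l hl u).symm
      obtain ⟨ba, hba, hbaeq⟩ : ∃ ba ∈ box n, vPlus X y l ba = a := by
        rw [hKp] at haKp; obtain ⟨ba, hx1, hx2⟩ := haKp; exact ⟨ba, hx1, hx2⟩
      have hhp : ∑ k, a k * u k ≤ S1.hp X y l u := by
        rw [← hbaeq]; exact S1.dotP_le X y l hl hba u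
      have hproj2 : ∑ k, (mm - v) k * u k ≤ 0 := by
        have h5 := hproj mm hmmKm
        have h6 : ∑ k, (mm - v) k * u k = r⁻¹ * ∑ k, (a - v) k * (mm - v) k := by
          rw [Finset.mul_sum]
          refine Finset.sum_congr rfl fun k _ => ?_
          simp only [hu, Pi.smul_apply, smul_eq_mul]; ring
        rw [h6]
        have h7 := mul_le_mul_of_nonneg_left h5 (inv_nonneg.2 hpos.le)
        simpa using h7
      have hd1 := S1.sum_sub_mul a mm u
      have hd2 := S1.sum_sub_mul a v u
      have hd3 := S1.sum_sub_mul mm v u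
      have hkey : r ≤ S1.hp X y l u - S1.hm X y l u := by linarith
      have hFu : F u = |S1.hp X y l u - S1.hm X y l u| := by
        simp only [hF]; rw [S1.split_sum X y l hy u]
      have := hFmem u huS
      rw [hFu] at this
      have habs : S1.hp X y l u - S1.hm X y l u ≤ |S1.hp X y l u - S1.hm X y l u| :=
        le_abs_self _
      linarith
    have side2 : sSup D2 ≤ L := by
      refine csSup_le hD2ne ?_
      rintro _ ⟨b, hbKm, rfl⟩
      have hcont : ContinuousOn (fun p : Fin d → ℝ => e2 (p - b)) Kp := by
        refine Continuous.continuousOn ?_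
        exact S1.e2_continuous.comp (continuous_id.sub continuous_const)
      obtain ⟨w, hwKp, hwmin0⟩ := hKpcomp.exists_isMinOn hKpne hcont
      have hwmin : ∀ p ∈ Kp, e2 (w - b) ≤ e2 (p - b) := fun p hp => hwmin0 hp
      have hInf : sInf ((fun a => e2 (a - b)) '' Kp) = e2 (w - b) :=
        le_antisymm (csInf_le (hIbdd' b Kp) ⟨w, hwKp, rfl⟩)
          (le_csInf (hKpne.image _) (by rintro _ ⟨p, hp, rfl⟩; exact hwmin p hp))
      show sInf ((fun a => e2 (a - b)) '' Kp) ≤ L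
      rw [hInf]
      rcases eq_or_lt_of_le (S1.e2_nonneg (w - b)) with h0 | hpos
      · rw [← h0]; exact hL0
      set r := e2 (w - b) with hr
      set u : Fin d → ℝ := r⁻¹ • (b - w) with hu
      have hbw : e2 (b - w) = r := by rw [hr]; exact S1.e2_sub_comm b w
      have he2u : e2 u = 1 := by
        have h : S1.toE u = r⁻¹ • S1.toE (b - w) := rfl
        rw [S1.e2_eq, h, norm_smul, Real.norm_eq_abs, abs_inv, abs_of_pos hpos, ← S1.e2_eq,
          hbw]
        exact inv_mul_cancel₀ hpos.ne'
      have huS : u ∈ S := by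
        simp only [hS, Set.mem_setOf_eq, he2u]; norm_num
      have hwmin' : ∀ p ∈ Kp, e2 (b - w) ≤ e2 (b - p) := fun p hp => by
        rw [S1.e2_sub_comm b w, S1.e2_sub_comm b p]; exact hwmin p hp
      have hproj := S1.proj_ineq' Kp hKpconv b w hwKp hwmin'
      have hsum_sq : ∑ k, (b - w) k * u k = r := by
        have h : ∀ k, (b - w) k * u k = r⁻¹ * ((b - w) k) ^ 2 := fun k => by
          simp only [hu, Pi.smul_apply, smul_eq_mul]; ring
        rw [Finset.sum_congr rfl fun k _ => h k, ← Finset.mul_sum, S1.e2_sq, hbw, sq]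
        rw [← mul_assoc, inv_mul_cancel₀ hpos.ne', one_mul]
      set pp := vPlus X y l (S1.bstar X u) with hpp
      have hppKp : pp ∈ Kp := by rw [hKp]; exact ⟨_, S1.bstar_mem X u, rfl⟩
      have hhp : S1.hp X y l u = ∑ k, pp k * u k := (S1.dotP_star X y l hl u).symm
      obtain ⟨bb, hbb, hbbeq⟩ : ∃ bb ∈ box n, vMinus X y l bb = b := by
        rw [hKm] at hbKm; obtain ⟨bb, hx1, hx2⟩ := hbKm; exact ⟨bb, hx1, hx2⟩
      have hhm : ∑ k, b k * u k ≤ S1.hm X y l u := by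
        rw [← hbbeq]; exact S1.dotM_le X y l hl hbb u
      have hproj2 : ∑ k, (pp - w) k * u k ≤ 0 := by
        have h5 := hproj pp hppKp
        have h6 : ∑ k, (pp - w) k * u k = r⁻¹ * ∑ k, (b - w) k * (pp - w) k := by
          rw [Finset.mul_sum]
          refine Finset.sum_congr rfl fun k _ => ?_
          simp only [hu, Pi.smul_apply, smul_eq_mul]; ring
        rw [h6]
        have h7 := mul_le_mul_of_nonneg_left h5 (inv_nonneg.2 hpos.le)
        simpa using h7
      have hd1 := S1.sum_sub_mul b pp u
      have hd2 := S1.sum_sub_mul b w u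
      have hd3 := S1.sum_sub_mul pp w u
      have hkey : r ≤ S1.hm X y l u - S1.hp X y l u := by linarith
      have hFu : F u = |S1.hp X y l u - S1.hm X y l u| := by
        simp only [hF]; rw [S1.split_sum X y l hy u]
      have := hFmem u huS
      rw [hFu] at this
      have habs : S1.hm X y l u - S1.hp X y l u ≤ |S1.hp X y l u - S1.hm X y l u| := by
        rw [abs_sub_comm]; exact le_abs_self _
      linarith
    exact max_le side1 side2
  exact le_antisymm dir1 dir2
end

section
/- Let X ∈ ℝ^{n×d} and λ ∈ ℝ^n, and set M = diag(λ) X Xᵀ diag(λ) ∈ ℝ^{n×n}. Let W ∈ ℝ^{(n+1)×(n+1)} be the block matrix W = [[M, M𝟏],[𝟏ᵀM, 𝟏ᵀM𝟏]], where 𝟏 ∈ ℝ^n is the all-ones vector. Then max_{z ∈ [0,1]^n} zᵀ M z = (1/4) · max_{z̃ ∈ {−1,1}^{n+1}} z̃ᵀ W z̃. -/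
open Matrix

/-- The block matrix `W = [[M, M𝟏],[𝟏ᵀM, 𝟏ᵀM𝟏]] ∈ ℝ^{(n+1)×(n+1)}`, where the index type
`Fin n ⊕ Unit` encodes `{1,…,n} ∪ {n+1}`. -/
noncomputable def Wblock {n : ℕ} (M : Matrix (Fin n) (Fin n) ℝ) :
    Matrix (Fin n ⊕ Unit) (Fin n ⊕ Unit) ℝ :=
  Matrix.fromBlocks M (Matrix.of fun i _ => ∑ j, M i j)
    (Matrix.of fun _ j => ∑ i, M i j) (Matrix.of fun _ _ => ∑ i, ∑ j, M i j)

/-- quadratic form of the block matrix -/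
theorem wq_aux {n : ℕ} (M : Matrix (Fin n) (Fin n) ℝ) (z : Fin n ⊕ Unit → ℝ) :
    z ⬝ᵥ (Wblock M).mulVec z =
      (fun i => z (Sum.inl i) + z (Sum.inr ())) ⬝ᵥ
        M.mulVec (fun i => z (Sum.inl i) + z (Sum.inr ())) := by
  simp only [dotProduct, Matrix.mulVec, Wblock, Matrix.fromBlocks,
    Fintype.sum_sum_type, Matrix.of_apply, Sum.elim_inl, Sum.elim_inr,
    Finset.univ_unique, Finset.sum_singleton, mul_add, add_mul,
    Finset.sum_add_distrib, Finset.mul_sum, Finset.sum_mul]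
  rw [Finset.sum_comm (γ := Fin n)]
  ring_nf
  have hz : z (Sum.inr default) = z (Sum.inr ()) := rfl
  rw [hz]
  have h := Finset.sum_comm (s := (Finset.univ : Finset (Fin n)))
    (t := (Finset.univ : Finset (Fin n)))
    (f := fun x y : Fin n => z (Sum.inr ()) * M x y * z (Sum.inl y))
  linarith [h]

theorem scale_quad {n : ℕ} (M : Matrix (Fin n) (Fin n) ℝ) (c : ℝ) (z : Fin n → ℝ) :
    (c • z) ⬝ᵥ M.mulVec (c • z) = c * c * (z ⬝ᵥ M.mulVec z) := by
  rw [Matrix.mulVec_smul, dotProduct_smul, smul_dotProduct]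
  simp [mul_assoc]

/-- Equation (8): for `M = diag(λ) X Xᵀ diag(λ)`,
`max_{z ∈ [0,1]^n} zᵀ M z = (1/4) max_{z̃ ∈ {−1,1}^{n+1}} z̃ᵀ W z̃`. -/
theorem stmt2 (n d : ℕ) (X : Matrix (Fin n) (Fin d) ℝ) (l : Fin n → ℝ)
    (M : Matrix (Fin n) (Fin n) ℝ)
    (hM : M = Matrix.diagonal l * X * Xᵀ * Matrix.diagonal l) :
    sSup {t : ℝ | ∃ z ∈ box n, t = z ⬝ᵥ M.mulVec z} =
      (1 / 4) * sSup {t : ℝ | ∃ z : Fin n ⊕ Unit → ℝ, (∀ i, z i = 1 ∨ z i = -1) ∧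
        t = z ⬝ᵥ (Wblock M).mulVec z} := by
  classical
  set A := Matrix.diagonal l * X with hA
  have hMrw : M = A * Aᵀ := by
    rw [hM, hA, Matrix.transpose_mul, Matrix.diagonal_transpose]
    rw [Matrix.mul_assoc]
  set f : (Fin n → ℝ) → ℝ := fun z => z ⬝ᵥ M.mulVec z with hf
  have hbil : ∀ z w : Fin n → ℝ, z ⬝ᵥ M.mulVec w = (A.vecMul z) ⬝ᵥ (A.vecMul w) := by
    intro z w
    rw [hMrw, ← Matrix.mulVec_mulVec, Matrix.dotProduct_mulVec, Matrix.mulVec_transpose]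
  -- convexity of f on univ
  have hconv : ConvexOn ℝ Set.univ f := by
    refine ⟨convex_univ, ?_⟩
    intro x _ y _ a b ha hb hab
    have hx := hbil x x; have hy := hbil y y; have hxy := hbil x y
    have hcomb : f (a • x + b • y) =
        a * a * ((A.vecMul x) ⬝ᵥ (A.vecMul x)) + 2 * (a * b) * ((A.vecMul x) ⬝ᵥ (A.vecMul y))
          + b * b * ((A.vecMul y) ⬝ᵥ (A.vecMul y)) := by
      rw [hf]
      simp only [hbil, Matrix.add_vecMul, Matrix.smul_vecMul, add_dotProduct,
        dotProduct_add, smul_dotProduct, dotProduct_smul, smul_eq_mul]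
      rw [dotProduct_comm (A.vecMul y) (A.vecMul x)]
      ring
    have hsq : 0 ≤ (A.vecMul x - A.vecMul y) ⬝ᵥ (A.vecMul x - A.vecMul y) :=
      Finset.sum_nonneg fun k _ => mul_self_nonneg _
    have hexp : (A.vecMul x - A.vecMul y) ⬝ᵥ (A.vecMul x - A.vecMul y) =
        (A.vecMul x) ⬝ᵥ (A.vecMul x) - 2 * ((A.vecMul x) ⬝ᵥ (A.vecMul y))
          + (A.vecMul y) ⬝ᵥ (A.vecMul y) := by
      simp only [sub_dotProduct, dotProduct_sub]
      have := dotProduct_comm (A.vecMul y) (A.vecMul x)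
      linarith [this]
    rw [hcomb]
    simp only [hf, hbil, smul_eq_mul]
    have hsq' : 0 ≤ (A.vecMul x) ⬝ᵥ (A.vecMul x) - 2 * ((A.vecMul x) ⬝ᵥ (A.vecMul y))
        + (A.vecMul y) ⬝ᵥ (A.vecMul y) := hexp ▸ hsq
    have hb1 : b = 1 - a := by linarith
    subst hb1
    nlinarith [mul_nonneg (mul_nonneg ha hb) hsq']
  -- vertex set
  set V : Set (Fin n → ℝ) := {z | ∀ i, z i = 0 ∨ z i = 1} with hV
  have hVpi : V = Set.pi Set.univ (fun _ : Fin n => ({0, 1} : Set ℝ)) := by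
    ext z; simp [hV, Set.mem_pi]
  have hVfin : V.Finite := by
    rw [hVpi]; exact Set.Finite.pi fun i => (Set.finite_singleton _).insert _
  have hVbox : V ⊆ box n := by
    intro z hz i
    rcases hz i with h | h <;> simp [h]
  have hboxhull : box n ⊆ convexHull ℝ V := by
    intro z hz
    rw [hVpi, convexHull_pi]
    intro i _
    rw [convexHull_pair, segment_eq_Icc zero_le_one]
    exact ⟨(hz i).1, (hz i).2⟩
  set T : Set ℝ := f '' V with hT
  have hTfin : T.Finite := hVfin.image f
  have hTne : T.Nonempty := ⟨f 0, 0, fun i => Or.inl rfl, rfl⟩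
  set m : ℝ := sSup T with hm
  have hmmem : m ∈ T := hTne.csSup_mem hTfin
  have hmub : ∀ t ∈ T, t ≤ m := fun t ht => le_csSup hTfin.bddAbove ht
  obtain ⟨z₀, hz₀V, hz₀⟩ := hmmem
  -- the LHS set
  have hS1 : IsGreatest {t : ℝ | ∃ z ∈ box n, t = z ⬝ᵥ M.mulVec z} m := by
    constructor
    · exact ⟨z₀, hVbox hz₀V, hz₀.symm⟩
    · rintro t ⟨z, hz, rfl⟩
      obtain ⟨y, hyV, hfy⟩ := hconv.exists_ge_of_mem_convexHull
        (Set.subset_univ _) (hboxhull hz)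
      exact le_trans hfy (hmub _ ⟨y, hyV, rfl⟩)
  -- the RHS set
  have hS2 : IsGreatest {t : ℝ | ∃ z : Fin n ⊕ Unit → ℝ, (∀ i, z i = 1 ∨ z i = -1) ∧
      t = z ⬝ᵥ (Wblock M).mulVec z} (4 * m) := by
    constructor
    · set zt : Fin n ⊕ Unit → ℝ := Sum.elim (fun i => 2 * z₀ i - 1) (fun _ => 1) with hzt
      refine ⟨zt, ?_, ?_⟩
      · rintro (i | u)
        · rcases hz₀V i with h | h <;> norm_num [hzt, h]
        · simp [hzt]
      · rw [wq_aux]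
        have hv : (fun i => zt (Sum.inl i) + zt (Sum.inr ())) = (2:ℝ) • z₀ := by
          funext i; simp [hzt]
        rw [hv, scale_quad, ← hz₀]
        norm_num
        rfl
    · rintro t ⟨z, hzpm, rfl⟩
      rw [wq_aux]
      set v : Fin n → ℝ := fun i => z (Sum.inl i) + z (Sum.inr ()) with hv
      rcases hzpm (Sum.inr ()) with hs | hs
      · -- s = 1 : v = 2 • y with y ∈ V
        set y : Fin n → ℝ := fun i => (z (Sum.inl i) + 1) / 2 with hy
        have hyV : y ∈ V := by
          intro i; rcases hzpm (Sum.inl i) with h | h <;> simp [hy, h]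
        have hveq : v = (2:ℝ) • y := by
          funext i; simp [hv, hy, hs]; ring
        rw [hveq, scale_quad]
        have := hmub _ ⟨y, hyV, rfl⟩
        simp only [hf] at this
        linarith
      · -- s = -1 : -v = 2 • y with y ∈ V
        set y : Fin n → ℝ := fun i => (1 - z (Sum.inl i)) / 2 with hy
        have hyV : y ∈ V := by
          intro i; rcases hzpm (Sum.inl i) with h | h <;> simp [hy, h]
        have hveq : v = (-2:ℝ) • y := by
          funext i; simp [hv, hy, hs]; ring
        rw [hveq, scale_quad]
        have := hmub _ ⟨y, hyV, rfl⟩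
        simp only [hf] at this
        linarith
  rw [hS1.csSup_eq, hS2.csSup_eq]
  ring
end

section
/- Let X ∈ ℝ^{n×d}, y ∈ {−1,1}^n, and suppose the dataset (X,y) is orthogonal separable, i.e., x_iᵀx_j ≥ 0 whenever y_i = y_j and x_iᵀx_j ≤ 0 whenever y_i ≠ y_j. Then for all λ₊ ∈ ℝ^{n₊} with λ₊ ≥ 0 and λ₋ ∈ ℝ^{n₋} with λ₋ ≥ 0: (i) max_{b₊∈[0,1]^{n₊}} min_{b₋∈[0,1]^{n₋}} ‖X₊ᵀ diag(λ₊) b₊ − X₋ᵀ diag(λ₋) b₋‖₂ = ‖X₊ᵀ λ₊‖₂, and (ii) max_{b₋∈[0,1]^{n₋}} min_{b₊∈[0,1]^{n₊}} ‖X₊ᵀ diag(λ₊) b₊ − X₋ᵀ diag(λ₋) b₋‖₂ = ‖X₋ᵀ λ₋‖₂. -/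
open Matrix

/-- `X₊ᵀ diag(λ₊) b₊`: the `d`-vector `∑_{i : y i = 1} (λ₊)_i b_i x_i`. -/
noncomputable def vP {n d : ℕ} (X : Matrix (Fin n) (Fin d) ℝ) (y lp b : Fin n → ℝ) :
    Fin d → ℝ := fun k => ∑ i, if y i = 1 then lp i * b i * X i k else 0

/-- `X₋ᵀ diag(λ₋) b₋`: the `d`-vector `∑_{i : y i = -1} (λ₋)_i b_i x_i`. -/
noncomputable def vM {n d : ℕ} (X : Matrix (Fin n) (Fin d) ℝ) (y lm b : Fin n → ℝ) :
    Fin d → ℝ := fun k => ∑ i, if y i = -1 then lm i * b i * X i k else 0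

lemma expand_aux {n d : ℕ} (X : Matrix (Fin n) (Fin d) ℝ) (c c' : Fin n → ℝ) :
    ∑ k, (∑ i, c i * X i k) * (∑ j, c' j * X j k)
      = ∑ i, ∑ j, c i * c' j * ∑ k, X i k * X j k := by
  simp_rw [Finset.sum_mul_sum]
  rw [Finset.sum_comm]
  refine Finset.sum_congr rfl fun i _ => ?_
  rw [Finset.sum_comm]
  refine Finset.sum_congr rfl fun j _ => ?_
  rw [Finset.mul_sum]
  exact Finset.sum_congr rfl fun k _ => by ring

/-- Proposition 4.3: for orthogonal separable data, the two maximin quantities in the dual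
constraint evaluate in closed form as `‖X₊ᵀ λ₊‖₂` and `‖X₋ᵀ λ₋‖₂`. -/
theorem stmt4 (n d : ℕ) (X : Matrix (Fin n) (Fin d) ℝ) (y : Fin n → ℝ)
    (hy : ∀ i, y i = 1 ∨ y i = -1)
    (hsep : ∀ i j, (y i = y j → 0 ≤ ∑ k, X i k * X j k) ∧
      (y i ≠ y j → ∑ k, X i k * X j k ≤ 0))
    (lp lm : Fin n → ℝ) (hlp : ∀ i, 0 ≤ lp i) (hlm : ∀ i, 0 ≤ lm i) :
    sSup ((fun bp => sInf ((fun bm => e2 (vP X y lp bp - vM X y lm bm)) '' box n)) '' box n) =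
        e2 (fun k => ∑ i, if y i = 1 then lp i * X i k else 0) ∧
    sSup ((fun bm => sInf ((fun bp => e2 (vP X y lp bp - vM X y lm bm)) '' box n)) '' box n) =
        e2 (fun k => ∑ i, if y i = -1 then lm i * X i k else 0) := by
  classical
  set cp : (Fin n → ℝ) → Fin n → ℝ := fun b i => if y i = 1 then lp i * b i else 0 with hcp
  set cm : (Fin n → ℝ) → Fin n → ℝ := fun b i => if y i = -1 then lm i * b i else 0 with hcm
  have hvP : ∀ b k, vP X y lp b k = ∑ i, cp b i * X i k := by
    intro b k
    refine Finset.sum_congr rfl fun i _ => ?_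
    simp only [hcp]; split <;> simp
  have hvM : ∀ b k, vM X y lm b k = ∑ i, cm b i * X i k := by
    intro b k
    refine Finset.sum_congr rfl fun i _ => ?_
    simp only [hcm]; split <;> simp
  -- membership of special points
  have h0box : (fun _ : Fin n => (0:ℝ)) ∈ box n := fun i => by norm_num
  have h1box : (fun _ : Fin n => (1:ℝ)) ∈ box n := fun i => by norm_num
  -- cross term nonpositive
  have hcross : ∀ bp bm : Fin n → ℝ, bp ∈ box n → bm ∈ box n →
      ∑ k, vP X y lp bp k * vM X y lm bm k ≤ 0 := by
    intro bp bm hbp hbm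
    simp_rw [hvP, hvM]
    rw [expand_aux]
    refine Finset.sum_nonpos fun i _ => Finset.sum_nonpos fun j _ => ?_
    by_cases h1 : y i = 1 <;> by_cases h2 : y j = -1 <;>
      simp only [hcp, hcm, h1, h2, if_pos, if_neg, if_true, if_false, zero_mul, mul_zero,
        le_refl] <;> try simp
    have hg : ∑ k, X i k * X j k ≤ 0 := (hsep i j).2 (by rw [h1, h2]; norm_num)
    exact mul_nonpos_of_nonneg_of_nonpos
      (mul_nonneg (mul_nonneg (hlp i) (hbp i).1) (mul_nonneg (hlm j) (hbm j).1)) hg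
  -- sum-of-squares decomposition
  have hdecomp : ∀ bp bm : Fin n → ℝ,
      ∑ k, ((vP X y lp bp - vM X y lm bm) k) ^ 2
        = ∑ k, (vP X y lp bp k) ^ 2 - 2 * ∑ k, vP X y lp bp k * vM X y lm bm k
          + ∑ k, (vM X y lm bm k) ^ 2 := by
    intro bp bm
    rw [Finset.mul_sum, ← Finset.sum_sub_distrib, ← Finset.sum_add_distrib]
    refine Finset.sum_congr rfl fun k _ => ?_
    simp only [Pi.sub_apply]; ring
  have hsqP : ∀ b : Fin n → ℝ, (0:ℝ) ≤ ∑ k, (vP X y lp b k) ^ 2 :=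
    fun b => Finset.sum_nonneg fun k _ => sq_nonneg _
  have hsqM : ∀ b : Fin n → ℝ, (0:ℝ) ≤ ∑ k, (vM X y lm b k) ^ 2 :=
    fun b => Finset.sum_nonneg fun k _ => sq_nonneg _
  -- key lower bounds
  have hA : ∀ bp bm : Fin n → ℝ, bp ∈ box n → bm ∈ box n →
      ∑ k, (vP X y lp bp k) ^ 2 ≤ ∑ k, ((vP X y lp bp - vM X y lm bm) k) ^ 2 := by
    intro bp bm hbp hbm
    rw [hdecomp]
    have := hcross bp bm hbp hbm
    have := hsqM bm
    linarith
  have hA' : ∀ bp bm : Fin n → ℝ, bp ∈ box n → bm ∈ box n →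
      ∑ k, (vM X y lm bm k) ^ 2 ≤ ∑ k, ((vP X y lp bp - vM X y lm bm) k) ^ 2 := by
    intro bp bm hbp hbm
    rw [hdecomp]
    have := hcross bp bm hbp hbm
    have := hsqP bp
    linarith
  -- monotonicity to all-ones
  have hBP : ∀ bp : Fin n → ℝ, bp ∈ box n →
      ∑ k, (vP X y lp bp k) ^ 2 ≤ ∑ k, (vP X y lp (fun _ => 1) k) ^ 2 := by
    intro bp hbp
    simp_rw [sq, hvP]
    rw [expand_aux, expand_aux]
    refine Finset.sum_le_sum fun i _ => Finset.sum_le_sum fun j _ => ?_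
    by_cases h1 : y i = 1 <;> by_cases h2 : y j = 1 <;>
      simp only [hcp, h1, h2, if_pos, if_neg, if_true, if_false, zero_mul, mul_zero,
        le_refl] <;> try simp
    have hg : 0 ≤ ∑ k, X i k * X j k := (hsep i j).1 (by rw [h1, h2])
    have ha : lp i * bp i ≤ lp i := mul_le_of_le_one_right (hlp i) (hbp i).2
    have hb : lp j * bp j ≤ lp j := mul_le_of_le_one_right (hlp j) (hbp j).2
    have hc : lp i * bp i * (lp j * bp j) ≤ lp i * lp j :=
      mul_le_mul ha hb (mul_nonneg (hlp j) (hbp j).1) (hlp i)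
    exact mul_le_mul_of_nonneg_right hc hg
  have hBM : ∀ bm : Fin n → ℝ, bm ∈ box n →
      ∑ k, (vM X y lm bm k) ^ 2 ≤ ∑ k, (vM X y lm (fun _ => 1) k) ^ 2 := by
    intro bm hbm
    simp_rw [sq, hvM]
    rw [expand_aux, expand_aux]
    refine Finset.sum_le_sum fun i _ => Finset.sum_le_sum fun j _ => ?_
    by_cases h1 : y i = -1 <;> by_cases h2 : y j = -1 <;>
      simp only [hcm, h1, h2, if_pos, if_neg, if_true, if_false, zero_mul, mul_zero,
        le_refl] <;> try simp
    have hg : 0 ≤ ∑ k, X i k * X j k := (hsep i j).1 (by rw [h1, h2])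
    have ha : lm i * bm i ≤ lm i := mul_le_of_le_one_right (hlm i) (hbm i).2
    have hb : lm j * bm j ≤ lm j := mul_le_of_le_one_right (hlm j) (hbm j).2
    have hc : lm i * bm i * (lm j * bm j) ≤ lm i * lm j :=
      mul_le_mul ha hb (mul_nonneg (hlm j) (hbm j).1) (hlm i)
    exact mul_le_mul_of_nonneg_right hc hg
  -- values at special points
  have hvM0 : ∀ bp : Fin n → ℝ, vP X y lp bp - vM X y lm (fun _ => 0) = vP X y lp bp := by
    intro bp; funext k
    simp only [Pi.sub_apply, vM, mul_zero, zero_mul, ite_self, Finset.sum_const_zero, sub_zero]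
  have hvP0 : ∀ bm k, (vP X y lp (fun _ => 0) - vM X y lm bm) k = -(vM X y lm bm k) := by
    intro bm k
    simp only [Pi.sub_apply, vP, mul_zero, zero_mul, ite_self, Finset.sum_const_zero, zero_sub]
  -- inner infima
  have hInf1 : ∀ bp : Fin n → ℝ, bp ∈ box n →
      sInf ((fun bm => e2 (vP X y lp bp - vM X y lm bm)) '' box n)
        = e2 (vP X y lp bp) := by
    intro bp hbp
    apply le_antisymm
    · refine csInf_le ⟨0, ?_⟩ ?_
      · rintro x ⟨bm, hbm, rfl⟩; exact Real.sqrt_nonneg _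
      · exact ⟨fun _ => 0, h0box, by simpa using congrArg e2 (hvM0 bp)⟩
    · refine le_csInf ⟨_, Set.mem_image_of_mem _ h0box⟩ ?_
      rintro x ⟨bm, hbm, rfl⟩
      exact Real.sqrt_le_sqrt (hA bp bm hbp hbm)
  have hInf2 : ∀ bm : Fin n → ℝ, bm ∈ box n →
      sInf ((fun bp => e2 (vP X y lp bp - vM X y lm bm)) '' box n)
        = e2 (vM X y lm bm) := by
    intro bm hbm
    have hval : e2 (vP X y lp (fun _ => 0) - vM X y lm bm) = e2 (vM X y lm bm) := by
      unfold e2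
      congr 1
      refine Finset.sum_congr rfl fun k _ => ?_
      rw [hvP0]; ring
    apply le_antisymm
    · refine csInf_le ⟨0, ?_⟩ ?_
      · rintro x ⟨bp, hbp, rfl⟩; exact Real.sqrt_nonneg _
      · exact ⟨fun _ => 0, h0box, by simpa using hval⟩
    · refine le_csInf ⟨_, Set.mem_image_of_mem _ h0box⟩ ?_
      rintro x ⟨bp, hbp, rfl⟩
      exact Real.sqrt_le_sqrt (hA' bp bm hbp hbm)
  -- the targets equal the value at all-ones
  have htP : (fun k => ∑ i, if y i = 1 then lp i * X i k else 0)
      = vP X y lp (fun _ => 1) := by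
    funext k
    refine Finset.sum_congr rfl fun i _ => ?_
    split <;> ring_nf
  have htM : (fun k => ∑ i, if y i = -1 then lm i * X i k else 0)
      = vM X y lm (fun _ => 1) := by
    funext k
    refine Finset.sum_congr rfl fun i _ => ?_
    split <;> ring_nf
  constructor
  · rw [Set.image_congr hInf1, htP]
    apply le_antisymm
    · refine csSup_le ⟨_, Set.mem_image_of_mem _ h0box⟩ ?_
      rintro x ⟨bp, hbp, rfl⟩
      exact Real.sqrt_le_sqrt (hBP bp hbp)
    · refine le_csSup ⟨e2 (vP X y lp (fun _ => 1)), ?_⟩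
        (Set.mem_image_of_mem _ h1box)
      rintro x ⟨bp, hbp, rfl⟩
      exact Real.sqrt_le_sqrt (hBP bp hbp)
  · rw [Set.image_congr hInf2, htM]
    apply le_antisymm
    · refine csSup_le ⟨_, Set.mem_image_of_mem _ h0box⟩ ?_
      rintro x ⟨bm, hbm, rfl⟩
      exact Real.sqrt_le_sqrt (hBM bm hbm)
    · refine le_csSup ⟨e2 (vM X y lm (fun _ => 1)), ?_⟩
        (Set.mem_image_of_mem _ h1box)
      rintro x ⟨bm, hbm, rfl⟩
      exact Real.sqrt_le_sqrt (hBM bm hbm)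
end

section
/- Let X ∈ ℝ^{n×d}, y ∈ {−1,1}^n, and suppose the dataset (X,y) is orthogonal separable, i.e., x_iᵀx_j ≥ 0 whenever y_i = y_j and x_iᵀx_j ≤ 0 whenever y_i ≠ y_j. Then sup{ λᵀy : λ ∈ ℝ^n, y_iλ_i ≥ 0 ∀i, max_{‖u‖₂≤1} |λᵀ(Xu)₊| ≤ 1 } = sup{ 𝟏ᵀλ₊ + 𝟏ᵀλ₋ : λ₊ ∈ ℝ^{n₊}, λ₋ ∈ ℝ^{n₋}, λ₊ ≥ 0, λ₋ ≥ 0, ‖X₊ᵀλ₊‖₂ ≤ 1, ‖X₋ᵀλ₋‖₂ ≤ 1 }. -/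
open Matrix

lemma e2_le_one_of {d : ℕ} {v : Fin d → ℝ} (h : ∑ k, (v k) ^ 2 ≤ 1) : e2 v ≤ 1 := by
  have := Real.sqrt_le_sqrt h
  simpa [e2] using this

lemma sq_sum_le_of_e2 {d : ℕ} {v : Fin d → ℝ} (h : e2 v ≤ 1) : ∑ k, (v k) ^ 2 ≤ 1 := by
  have h0 : 0 ≤ ∑ k, (v k) ^ 2 := Finset.sum_nonneg fun k _ => sq_nonneg _
  have h1 := Real.sq_sqrt h0
  have h2 := Real.sqrt_nonneg (∑ k, (v k) ^ 2)
  unfold e2 at h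
  nlinarith

lemma dot_expand {n d : ℕ} (X : Matrix (Fin n) (Fin d) ℝ) (a c : Fin n → ℝ) :
    ∑ k, (∑ i, a i * X i k) * (∑ j, c j * X j k)
      = ∑ i, ∑ j, a i * c j * ∑ k, X i k * X j k := by
  calc ∑ k, (∑ i, a i * X i k) * (∑ j, c j * X j k)
      = ∑ k, ∑ i, ∑ j, (a i * X i k) * (c j * X j k) := by
        refine Finset.sum_congr rfl fun k _ => ?_
        rw [Finset.sum_mul_sum]
    _ = ∑ i, ∑ k, ∑ j, (a i * X i k) * (c j * X j k) := Finset.sum_comm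
    _ = ∑ i, ∑ j, ∑ k, (a i * X i k) * (c j * X j k) :=
        Finset.sum_congr rfl fun i _ => Finset.sum_comm
    _ = ∑ i, ∑ j, a i * c j * ∑ k, X i k * X j k := by
        refine Finset.sum_congr rfl fun i _ => Finset.sum_congr rfl fun j _ => ?_
        rw [Finset.mul_sum]
        exact Finset.sum_congr rfl fun k _ => by ring

lemma norm_mono {n d : ℕ} (X : Matrix (Fin n) (Fin d) ℝ) (a c : Fin n → ℝ)
    (h : ∀ i j, 0 ≤ a i * c j * ∑ k, X i k * X j k) :
    ∑ k, (∑ i, a i * X i k) ^ 2 ≤ ∑ k, (∑ i, (a i + c i) * X i k) ^ 2 := by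
  have expand : ∀ k, (∑ i, (a i + c i) * X i k)
      = (∑ i, a i * X i k) + (∑ i, c i * X i k) := by
    intro k
    rw [← Finset.sum_add_distrib]
    exact Finset.sum_congr rfl fun i _ => by ring
  have cross : 0 ≤ ∑ k, (∑ i, a i * X i k) * (∑ j, c j * X j k) := by
    rw [dot_expand]
    exact Finset.sum_nonneg fun i _ => Finset.sum_nonneg fun j _ => h i j
  have sqnn : 0 ≤ ∑ k, (∑ i, c i * X i k) ^ 2 :=
    Finset.sum_nonneg fun k _ => sq_nonneg _
  have total : ∑ k, (∑ i, (a i + c i) * X i k) ^ 2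
      = ∑ k, (∑ i, a i * X i k) ^ 2
        + 2 * ∑ k, (∑ i, a i * X i k) * (∑ j, c j * X j k)
        + ∑ k, (∑ i, c i * X i k) ^ 2 := by
    rw [Finset.mul_sum, ← Finset.sum_add_distrib, ← Finset.sum_add_distrib]
    refine Finset.sum_congr rfl fun k _ => ?_
    rw [expand k]; ring
  linarith

lemma cs_le_one {d : ℕ} {w u : Fin d → ℝ} (hw : ∑ k, (w k) ^ 2 ≤ 1)
    (hu : ∑ k, (u k) ^ 2 ≤ 1) : ∑ k, w k * u k ≤ 1 := by
  have h := Finset.sum_mul_sq_le_sq_mul_sq Finset.univ w u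
  have h0 : 0 ≤ ∑ k, (w k) ^ 2 := Finset.sum_nonneg fun k _ => sq_nonneg _
  have h1 : 0 ≤ ∑ k, (u k) ^ 2 := Finset.sum_nonneg fun k _ => sq_nonneg _
  nlinarith

/-- Key lemma for the forward inclusion: feasibility of `l` in the dual forces the
class-`s` aggregated vector to have norm at most 1. -/
lemma dual_norm_bound {n d : ℕ} (X : Matrix (Fin n) (Fin d) ℝ) (y : Fin n → ℝ) (s : ℝ)
    (hs : s * s = 1)
    (hsep : ∀ i j, (y i = y j → 0 ≤ ∑ k, X i k * X j k) ∧
      (y i ≠ y j → ∑ k, X i k * X j k ≤ 0))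
    (l : Fin n → ℝ) (h1 : ∀ i, 0 ≤ y i * l i)
    (h2 : ∀ u : Fin d → ℝ, e2 u ≤ 1 → |∑ i, l i * max (X.mulVec u i) 0| ≤ 1) :
    e2 (fun k => ∑ i, if y i = s then (y i * l i) * X i k else 0) ≤ 1 := by
  set b : Fin n → ℝ := fun i => if y i = s then y i * l i else 0 with hb
  set v : Fin d → ℝ := fun k => ∑ i, b i * X i k with hv
  have goal_eq : (fun k => ∑ i, if y i = s then (y i * l i) * X i k else 0) = v := by
    funext k
    refine Finset.sum_congr rfl fun i _ => ?_
    simp only [hb, ite_mul, zero_mul]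
  rw [goal_eq]
  have hbnn : ∀ i, 0 ≤ b i := by
    intro i
    by_cases h : y i = s
    · simp only [hb, if_pos h]; exact h1 i
    · simp [hb, h]
  have hN0 : 0 ≤ ∑ k, (v k) ^ 2 := Finset.sum_nonneg fun _ _ => sq_nonneg _
  have hNnn : 0 ≤ e2 v := Real.sqrt_nonneg _
  have hNsq : (e2 v) ^ 2 = ∑ k, (v k) ^ 2 := Real.sq_sqrt hN0
  rcases eq_or_lt_of_le hNnn with h0 | hpos
  · rw [← h0]; norm_num
  set N : ℝ := e2 v with hNdef
  set u : Fin d → ℝ := fun k => v k / N with hu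
  have hNne : N ≠ 0 := ne_of_gt hpos
  have hu1 : e2 u ≤ 1 := by
    apply e2_le_one_of
    have : ∑ k, (u k) ^ 2 = (∑ k, (v k) ^ 2) / N ^ 2 := by
      simp [hu, div_pow, Finset.sum_div]
    rw [this, ← hNsq, div_self (by positivity)]
  have hdot : ∀ i, X.mulVec u i = (∑ k, X i k * v k) / N := by
    intro i
    simp [Matrix.mulVec, dotProduct, hu, Finset.sum_div, mul_div_assoc]
  have hexp : ∀ i, ∑ k, X i k * v k = ∑ j, b j * ∑ k, X i k * X j k := by
    intro i
    calc ∑ k, X i k * v k = ∑ k, ∑ j, b j * (X i k * X j k) := by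
          refine Finset.sum_congr rfl fun k _ => ?_
          rw [hv, Finset.mul_sum]
          exact Finset.sum_congr rfl fun j _ => by ring
      _ = ∑ j, ∑ k, b j * (X i k * X j k) := Finset.sum_comm
      _ = ∑ j, b j * ∑ k, X i k * X j k := by
          refine Finset.sum_congr rfl fun j _ => ?_
          rw [Finset.mul_sum]
  have hxvpos : ∀ i, y i = s → 0 ≤ ∑ k, X i k * v k := by
    intro i hi
    rw [hexp i]
    refine Finset.sum_nonneg fun j _ => ?_
    by_cases h : y j = s
    · exact mul_nonneg (hbnn j) ((hsep i j).1 (hi.trans h.symm))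
    · simp [hb, h]
  have hxvneg : ∀ i, y i ≠ s → ∑ k, X i k * v k ≤ 0 := by
    intro i hi
    rw [hexp i]
    refine Finset.sum_nonpos fun j _ => ?_
    by_cases h : y j = s
    · have hne : y i ≠ y j := fun hc => hi (hc.trans h)
      exact mul_nonpos_iff.mpr (Or.inl ⟨hbnn j, (hsep i j).2 hne⟩)
    · simp [hb, h]
  have hbv : ∑ i, b i * ∑ k, X i k * v k = ∑ k, (v k) ^ 2 := by
    calc ∑ i, b i * ∑ k, X i k * v k = ∑ i, ∑ k, b i * (X i k * v k) := by
          refine Finset.sum_congr rfl fun i _ => ?_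
          rw [Finset.mul_sum]
      _ = ∑ k, ∑ i, b i * (X i k * v k) := Finset.sum_comm
      _ = ∑ k, (v k) ^ 2 := by
          refine Finset.sum_congr rfl fun k _ => ?_
          have : ∑ i, b i * (X i k * v k) = (∑ i, b i * X i k) * v k := by
            rw [Finset.sum_mul]
            exact Finset.sum_congr rfl fun i _ => by ring
          rw [this]
          have hvk : (∑ i, b i * X i k) = v k := rfl
          rw [hvk]; ring
  have hsum : ∑ i, l i * max (X.mulVec u i) 0 = s * N := by
    have step : ∀ i, l i * max (X.mulVec u i) 0 = s * (b i * (∑ k, X i k * v k)) / N := by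
      intro i
      by_cases h : y i = s
      · have hmax : max (X.mulVec u i) 0 = (∑ k, X i k * v k) / N := by
          rw [hdot i]
          exact max_eq_left (div_nonneg (hxvpos i h) (le_of_lt hpos))
        have hl : l i = s * b i := by
          simp only [hb, if_pos h, h]
          have : s * (s * l i) = (s * s) * l i := by ring
          rw [this, hs, one_mul]
        rw [hmax, hl]; ring
      · have hb0 : b i = 0 := by simp [hb, h]
        have hmax : max (X.mulVec u i) 0 = 0 := by
          apply max_eq_right
          rw [hdot i]
          exact div_nonpos_of_nonpos_of_nonneg (hxvneg i h) (le_of_lt hpos)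
        rw [hmax, hb0]; ring
    calc ∑ i, l i * max (X.mulVec u i) 0
        = ∑ i, s * (b i * (∑ k, X i k * v k)) / N := Finset.sum_congr rfl fun i _ => step i
      _ = s * (∑ i, b i * (∑ k, X i k * v k)) / N := by
          rw [Finset.mul_sum, Finset.sum_div]
      _ = s * (N ^ 2) / N := by rw [hbv, ← hNsq]
      _ = s * N := by field_simp
  have habs := h2 u hu1
  rw [hsum, abs_mul] at habs
  have hs1 : |s| = 1 := by
    have : s = 1 ∨ s = -1 := by
      rcases mul_self_eq_one_iff.mp hs with h | h
      · exact Or.inl h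
      · exact Or.inr h
    rcases this with h | h <;> simp [h]
  rw [hs1, one_mul, abs_of_nonneg (le_of_lt hpos)] at habs
  exact habs

/-- Key lemma for the reverse inclusion: if the class-`s` aggregated vector has norm at
most 1, the corresponding piece of the ReLU dual objective is at most 1. -/
lemma primal_bound {n d : ℕ} (X : Matrix (Fin n) (Fin d) ℝ) (y : Fin n → ℝ) (s : ℝ)
    (hsep : ∀ i j, y i = s → y j = s → 0 ≤ ∑ k, X i k * X j k)
    (c : Fin n → ℝ) (hc : ∀ i, 0 ≤ c i)
    (hnorm : e2 (fun k => ∑ i, if y i = s then c i * X i k else 0) ≤ 1)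
    (u : Fin d → ℝ) (hu : e2 u ≤ 1) :
    ∑ i, (if y i = s then c i else 0) * max (X.mulVec u i) 0 ≤ 1 := by
  set a : Fin n → ℝ := fun i => if y i = s ∧ 0 ≤ X.mulVec u i then c i else 0 with ha
  set r : Fin n → ℝ := fun i => (if y i = s then c i else 0) - a i with hr
  have hann : ∀ i, 0 ≤ a i := by
    intro i; by_cases h : y i = s ∧ 0 ≤ X.mulVec u i <;> simp [ha, h, hc i]
  have hrnn : ∀ i, 0 ≤ r i := by
    intro i
    simp only [hr, ha]
    by_cases h1 : y i = s
    · by_cases h2 : 0 ≤ X.mulVec u i <;> simp [h1, h2, hc i]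
    · simp [h1]
  have haeq : ∀ i, a i ≠ 0 → y i = s := by
    intro i h
    by_contra hc'
    exact h (by simp [ha, hc'])
  have hreq : ∀ i, r i ≠ 0 → y i = s := by
    intro i h
    by_contra hc'
    exact h (by simp [hr, ha, hc'])
  -- step 1: rewrite the objective
  have step1 : ∑ i, (if y i = s then c i else 0) * max (X.mulVec u i) 0
      = ∑ i, a i * X.mulVec u i := by
    refine Finset.sum_congr rfl fun i _ => ?_
    by_cases h1 : y i = s
    · by_cases h2 : 0 ≤ X.mulVec u i
      · simp [ha, h1, h2, max_eq_left h2]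
      · have : max (X.mulVec u i) 0 = 0 := max_eq_right (le_of_not_ge h2)
        simp [ha, h1, h2, this]
    · simp [ha, h1]
  -- step 2: swap sums
  have step2 : ∑ i, a i * X.mulVec u i = ∑ k, (∑ i, a i * X i k) * u k := by
    calc ∑ i, a i * X.mulVec u i = ∑ i, ∑ k, a i * (X i k * u k) := by
          refine Finset.sum_congr rfl fun i _ => ?_
          simp [Matrix.mulVec, dotProduct, Finset.mul_sum]
      _ = ∑ k, ∑ i, a i * (X i k * u k) := Finset.sum_comm
      _ = ∑ k, (∑ i, a i * X i k) * u k := by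
          refine Finset.sum_congr rfl fun k _ => ?_
          rw [Finset.sum_mul]
          exact Finset.sum_congr rfl fun i _ => by ring
  -- step 3: norm comparison
  have step3 : ∑ k, (∑ i, a i * X i k) ^ 2 ≤ ∑ k, (∑ i, (a i + r i) * X i k) ^ 2 := by
    apply norm_mono
    intro i j
    by_cases h1 : a i = 0
    · simp [h1]
    by_cases h2 : r j = 0
    · simp [h2]
    exact mul_nonneg (mul_nonneg (hann i) (hrnn j)) (hsep i j (haeq i h1) (hreq j h2))
  have har : ∀ i, a i + r i = if y i = s then c i else 0 := by
    intro i; simp [hr]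
  have hveq : ∀ k, (∑ i, if y i = s then c i * X i k else 0)
      = ∑ i, (a i + r i) * X i k := by
    intro k
    refine Finset.sum_congr rfl fun i _ => ?_
    rw [har i]
    simp [ite_mul]
  have hnorm' : ∑ k, (∑ i, (a i + r i) * X i k) ^ 2 ≤ 1 := by
    have h' := sq_sum_le_of_e2 hnorm
    calc ∑ k, (∑ i, (a i + r i) * X i k) ^ 2
        = ∑ k, (∑ i, if y i = s then c i * X i k else 0) ^ 2 :=
          Finset.sum_congr rfl fun k _ => by rw [hveq k]
      _ ≤ 1 := h'
  have hw : ∑ k, (∑ i, a i * X i k) ^ 2 ≤ 1 := le_trans step3 hnorm'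
  rw [step1, step2]
  exact cs_le_one hw (sq_sum_le_of_e2 hu)

/-- Theorem 4.1: for orthogonal separable data, the dual of the ReLU max-margin problem
is equivalent to the separated convex program
`max 𝟏ᵀλ₊ + 𝟏ᵀλ₋ s.t. λ₊, λ₋ ≥ 0, ‖X₊ᵀλ₊‖₂ ≤ 1, ‖X₋ᵀλ₋‖₂ ≤ 1`. -/
theorem stmt6 (n d : ℕ) (X : Matrix (Fin n) (Fin d) ℝ) (y : Fin n → ℝ)
    (hy : ∀ i, y i = 1 ∨ y i = -1)
    (hsep : ∀ i j, (y i = y j → 0 ≤ ∑ k, X i k * X j k) ∧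
      (y i ≠ y j → ∑ k, X i k * X j k ≤ 0)) :
    sSup {t : ℝ | ∃ l : Fin n → ℝ, (∀ i, 0 ≤ y i * l i) ∧
        (∀ u : Fin d → ℝ, e2 u ≤ 1 → |∑ i, l i * max (X.mulVec u i) 0| ≤ 1) ∧
        t = ∑ i, l i * y i} =
      sSup {t : ℝ | ∃ lp lm : Fin n → ℝ, (∀ i, 0 ≤ lp i) ∧ (∀ i, 0 ≤ lm i) ∧
        e2 (fun k => ∑ i, if y i = 1 then lp i * X i k else 0) ≤ 1 ∧
        e2 (fun k => ∑ i, if y i = -1 then lm i * X i k else 0) ≤ 1 ∧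
        t = (∑ i, if y i = 1 then lp i else 0) + (∑ i, if y i = -1 then lm i else 0)} := by
  congr 1
  ext t
  simp only [Set.mem_setOf_eq]
  constructor
  · rintro ⟨l, h1, h2, rfl⟩
    refine ⟨fun i => y i * l i, fun i => y i * l i, fun i => h1 i, fun i => h1 i, ?_, ?_, ?_⟩
    · exact dual_norm_bound X y 1 (by norm_num) hsep l h1 h2
    · exact dual_norm_bound X y (-1) (by norm_num) hsep l h1 h2
    · rw [← Finset.sum_add_distrib]
      refine Finset.sum_congr rfl fun i _ => ?_
      rcases hy i with h | h <;> simp only [h] <;> norm_num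
  · rintro ⟨lp, lm, hp, hm, hnp, hnm, rfl⟩
    refine ⟨fun i => if y i = 1 then lp i else -lm i, ?_, ?_, ?_⟩
    · intro i
      rcases hy i with h | h
      · simp [h, hp i]
      · have : y i ≠ 1 := by rw [h]; norm_num
        simp only [this, if_neg this]
        rw [h]
        simpa using hm i
    · intro u hu
      have hA : ∑ i, (if y i = 1 then lp i else 0) * max (X.mulVec u i) 0 ≤ 1 := by
        refine primal_bound X y 1 (fun i j hi hj => (hsep i j).1 (hi.trans hj.symm)) lp hp ?_ u hu
        convert hnp using 3
      have hB : ∑ i, (if y i = -1 then lm i else 0) * max (X.mulVec u i) 0 ≤ 1 := by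
        refine primal_bound X y (-1) (fun i j hi hj => (hsep i j).1 (hi.trans hj.symm)) lm hm ?_ u hu
        convert hnm using 3
      have hA0 : 0 ≤ ∑ i, (if y i = 1 then lp i else 0) * max (X.mulVec u i) 0 := by
        refine Finset.sum_nonneg fun i _ => mul_nonneg ?_ (le_max_right _ _)
        by_cases h : y i = 1 <;> simp [h, hp i]
      have hB0 : 0 ≤ ∑ i, (if y i = -1 then lm i else 0) * max (X.mulVec u i) 0 := by
        refine Finset.sum_nonneg fun i _ => mul_nonneg ?_ (le_max_right _ _)
        by_cases h : y i = -1 <;> simp [h, hm i]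
      have hsplit : ∑ i, (if y i = 1 then lp i else -lm i) * max (X.mulVec u i) 0
          = ∑ i, (if y i = 1 then lp i else 0) * max (X.mulVec u i) 0
            - ∑ i, (if y i = -1 then lm i else 0) * max (X.mulVec u i) 0 := by
        rw [← Finset.sum_sub_distrib]
        refine Finset.sum_congr rfl fun i _ => ?_
        rcases hy i with h | h <;> simp only [h] <;> norm_num
      rw [hsplit, abs_le]
      constructor <;> linarith
    · rw [← Finset.sum_add_distrib]
      refine Finset.sum_congr rfl fun i _ => ?_
      rcases hy i with h | h <;> simp only [h] <;> norm_num
end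

section
/- Let X ∈ ℝ^{n×d}, y ∈ {−1,1}^n with n₊ ≥ 1 and n₋ ≥ 1, and suppose (X,y) is orthogonal separable (x_iᵀx_j ≥ 0 if y_i = y_j, x_iᵀx_j ≤ 0 if y_i ≠ y_j). Suppose (u₊, u₋) ∈ ℝ^d × ℝ^d is an optimal solution of min{ ‖u₊‖₂ + ‖u₋‖₂ : X₊u₊ ≥ 𝟏, X₋u₋ ≥ 𝟏 } (in particular the feasible set is nonempty). Consider the two-neuron ReLU network with first-layer weight matrix W₁ = [ u₊/√‖u₊‖₂ , u₋/√‖u₋‖₂ ] and second-layer weights w₂ = ( √‖u₊‖₂ , −√‖u₋‖₂ ). Then: (i) y_i f(x_i; Θ) ≥ 1 for all i ∈ [n], where f(x;Θ) = Σ_{k=1}^{2} (xᵀ w_{1,k})₊ w_{2,k}; (ii) R(Θ) := ½(‖W₁‖_F² + ‖w₂‖₂²) = ‖u₊‖₂ + ‖u₋‖₂; and (iii) for every m ≥ 1 and every parameter Θ' = (W₁', w₂') of an m-neuron two-layer ReLU network satisfying y_i f(x_i; Θ') ≥ 1 for all i, one has R(Θ') ≥ ‖u₊‖₂ + ‖u₋‖₂.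 Hence Θ is a global optimum of the non-convex max-margin training problem. -/
open Matrix

lemma e2_nonneg {d : ℕ} (v : Fin d → ℝ) : 0 ≤ e2 v := Real.sqrt_nonneg _

lemma e2_sq {d : ℕ} (v : Fin d → ℝ) : e2 v ^ 2 = ∑ k, (v k) ^ 2 :=
  Real.sq_sqrt (Finset.sum_nonneg fun _ _ => sq_nonneg _)

lemma dot_le_e2 {d : ℕ} (v w : Fin d → ℝ) : ∑ k, v k * w k ≤ e2 v * e2 w :=
  Real.sum_mul_le_sqrt_mul_sqrt _ _ _

lemma e2_lt_e2 {d : ℕ} {v w : Fin d → ℝ} (h : ∑ k, v k ^ 2 < ∑ k, w k ^ 2) : e2 v < e2 w :=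
  Real.sqrt_lt_sqrt (Finset.sum_nonneg fun _ _ => sq_nonneg _) h

lemma e2_le_e2 {d : ℕ} {v w : Fin d → ℝ} (h : ∑ k, v k ^ 2 ≤ ∑ k, w k ^ 2) : e2 v ≤ e2 w :=
  Real.sqrt_le_sqrt h

lemma e2_smul {d : ℕ} (c : ℝ) (hc : 0 ≤ c) (v : Fin d → ℝ) :
    e2 (fun k => c * v k) = c * e2 v := by
  unfold e2
  have h : ∑ k, (c * v k) ^ 2 = c ^ 2 * ∑ k, v k ^ 2 := by
    rw [Finset.mul_sum]; exact Finset.sum_congr rfl fun k _ => by ring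
  rw [h, Real.sqrt_mul (sq_nonneg c), Real.sqrt_sq hc]

lemma e2_add_le {d : ℕ} (v w : Fin d → ℝ) :
    e2 (fun k => v k + w k) ≤ e2 v + e2 w := by
  have h := dot_le_e2 v w
  have h2 : ∑ k, (v k + w k) ^ 2 ≤ (e2 v + e2 w) ^ 2 := by
    have hsum : ∑ k, (v k + w k) ^ 2 = (∑ k, v k ^ 2) + 2 * (∑ k, v k * w k) + ∑ k, w k ^ 2 := by
      rw [Finset.mul_sum, ← Finset.sum_add_distrib, ← Finset.sum_add_distrib]
      exact Finset.sum_congr rfl fun k _ => by ring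
    nlinarith [e2_sq v, e2_sq w]
  have := Real.sqrt_le_sqrt h2
  rwa [Real.sqrt_sq (add_nonneg (e2_nonneg v) (e2_nonneg w)),
    show Real.sqrt (∑ k, (v k + w k) ^ 2) = e2 (fun k => v k + w k) from rfl] at this

lemma sqsum_pos' {d : ℕ} {x u : Fin d → ℝ} (h : ∑ k, x k * u k ≠ 0) : 0 < ∑ k, x k ^ 2 := by
  rcases lt_or_ge 0 (∑ k, x k ^ 2) with hp | hp
  · exact hp
  · exfalso
    have h0 : ∑ k, x k ^ 2 = 0 :=
      le_antisymm hp (Finset.sum_nonneg fun _ _ => sq_nonneg _)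
    have hz := (Finset.sum_eq_zero_iff_of_nonneg (fun _ _ => sq_nonneg _)).1 h0
    exact h (Finset.sum_eq_zero fun k hk => by
      have hx0 : x k = 0 := by nlinarith [hz k hk, sq_nonneg (x k)]
      simp [hx0])

/-- Purity: optimality forces nonpositive correlation with opposing directions. -/
lemma purity {n d : ℕ} (X : Matrix (Fin n) (Fin d) ℝ) (P : Fin n → Prop)
    (u x : Fin d → ℝ)
    (hfeas : ∀ i, P i → 1 ≤ ∑ k, X i k * u k)
    (hopt : ∀ v : Fin d → ℝ, (∀ i, P i → 1 ≤ ∑ k, X i k * v k) → e2 u ≤ e2 v)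
    (hxx : 0 < ∑ k, x k ^ 2)
    (hneg : ∀ i, P i → ∑ k, X i k * x k ≤ 0) :
    ∑ k, x k * u k ≤ 0 := by
  by_contra hs
  push_neg at hs
  set s := ∑ k, x k * u k with hs_def
  set Q := ∑ k, x k ^ 2 with hQ_def
  set c := s / Q with hc_def
  have hc : 0 < c := div_pos hs hxx
  set v : Fin d → ℝ := fun k => u k - c * x k with hv_def
  have hfeasv : ∀ i, P i → 1 ≤ ∑ k, X i k * v k := by
    intro i hi
    have h1 : ∑ k, X i k * v k = (∑ k, X i k * u k) - c * ∑ k, X i k * x k := by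
      rw [Finset.mul_sum, ← Finset.sum_sub_distrib]
      exact Finset.sum_congr rfl fun k _ => by simp [hv_def]; ring
    rw [h1]
    have := hfeas i hi
    have := hneg i hi
    nlinarith
  have hnorm : ∑ k, v k ^ 2 < ∑ k, u k ^ 2 := by
    have hexp : ∀ k : Fin d, v k ^ 2 = u k ^ 2 - 2 * c * (x k * u k) + c ^ 2 * x k ^ 2 :=
      fun k => by simp only [hv_def]; ring
    have h1 : ∑ k, v k ^ 2 = (∑ k, u k ^ 2) - 2 * c * s + c ^ 2 * Q := by
      simp_rw [hexp]
      rw [Finset.sum_add_distrib, Finset.sum_sub_distrib, ← Finset.mul_sum, ← Finset.mul_sum,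
        hs_def, hQ_def]
    have hcQ : c * Q = s := by rw [hc_def]; field_simp
    have h2 : c ^ 2 * Q = c * s := by rw [pow_two, mul_assoc, hcQ]
    have h3 : 0 < c * s := mul_pos hc hs
    rw [h1]; linarith
  exact absurd (hopt v hfeasv) (not_le.2 (e2_lt_e2 hnorm))

lemma kkt_approx {n d : ℕ} (X : Matrix (Fin n) (Fin d) ℝ) (P : Fin n → Prop)
    (u : Fin d → ℝ)
    (hfeas : ∀ i, P i → 1 ≤ ∑ k, X i k * u k)
    (hopt : ∀ v : Fin d → ℝ, (∀ i, P i → 1 ≤ ∑ k, X i k * v k) → e2 u ≤ e2 v)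
    {ε : ℝ} (hε : 0 < ε) :
    ∃ lam : Fin n → ℝ, (∀ i, 0 ≤ lam i) ∧ (∀ i, ¬ P i → lam i = 0) ∧
      (∀ i, lam i ≠ 0 → ∑ k, X i k * u k = 1) ∧
      e2 (fun k => (∑ i, lam i * X i k) - u k) < ε := by
  classical
  set K : Set (Fin d → ℝ) := {v | ∃ lam : Fin n → ℝ, (∀ i, 0 ≤ lam i) ∧
    (∀ i, ¬ (P i ∧ ∑ k, X i k * u k = 1) → lam i = 0) ∧
    v = fun k => ∑ i, lam i * X i k} with hK_def
  -- u belongs to the closure of K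
  have hu_mem : u ∈ closure K := by
    by_contra hout
    have hKconv : Convex ℝ K := by
      rintro v1 ⟨l1, hl1, hs1, rfl⟩ v2 ⟨l2, hl2, hs2, rfl⟩ a b ha hb hab
      refine ⟨fun i => a * l1 i + b * l2 i,
        fun i => add_nonneg (mul_nonneg ha (hl1 i)) (mul_nonneg hb (hl2 i)),
        fun i hi => by simp [hs1 i hi, hs2 i hi], ?_⟩
      funext k
      simp only [Pi.add_apply, Pi.smul_apply, smul_eq_mul]
      rw [Finset.mul_sum, Finset.mul_sum, ← Finset.sum_add_distrib]
      exact Finset.sum_congr rfl fun i _ => by ring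
    obtain ⟨f, c, hfK, hcu⟩ :=
      geometric_hahn_banach_closed_point (hKconv.closure) isClosed_closure hout
    have h0K : (0 : Fin d → ℝ) ∈ K :=
      ⟨0, fun i => le_refl 0, fun i _ => rfl, by funext k; simp⟩
    have hc0 : 0 < c := by
      have := hfK 0 (subset_closure h0K)
      simpa using this
    have hfle : ∀ v ∈ K, f v ≤ 0 := by
      rintro v ⟨l, hl, hsl, rfl⟩
      by_contra hpos
      push_neg at hpos
      set t : ℝ := (c + 1) / f (fun k => ∑ i, l i * X i k) with ht_def
      have htpos : 0 < t := div_pos (by linarith) hpos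
      have hmem : (fun k => ∑ i, (t * l i) * X i k) ∈ K :=
        ⟨fun i => t * l i, fun i => mul_nonneg htpos.le (hl i),
          fun i hi => by simp [hsl i hi], rfl⟩
      have heq : (fun k => ∑ i, (t * l i) * X i k) = t • (fun k => ∑ i, l i * X i k) := by
        funext k
        simp only [Pi.smul_apply, smul_eq_mul, Finset.mul_sum]
        exact Finset.sum_congr rfl fun i _ => by ring
      have hlt := hfK _ (subset_closure hmem)
      rw [heq, f.map_smul, smul_eq_mul, ht_def, div_mul_cancel₀ _ (ne_of_gt hpos)] at hlt
      linarith
    set h : Fin d → ℝ := fun k => f ((Pi.single k 1 : Fin d → ℝ)) with hh_def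
    have hf_eq : ∀ w : Fin d → ℝ, f w = ∑ k, w k * h k := by
      intro w
      have hw : w = ∑ k, w k • (Pi.single k 1 : Fin d → ℝ) := by
        funext j
        simp [Pi.single_apply, Finset.sum_ite_eq', Finset.sum_apply]
      conv_lhs => rw [hw]
      rw [map_sum]
      exact Finset.sum_congr rfl fun k _ => by rw [f.map_smul, smul_eq_mul]
    -- rows of the active set have nonpositive inner product with h
    have hrow : ∀ i, P i → (∑ k, X i k * u k = 1) → ∑ k, X i k * h k ≤ 0 := by
      intro i hi hact
      have hmem : (fun k => X i k) ∈ K := by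
        refine ⟨fun j => if j = i then 1 else 0, fun j => by positivity,
          fun j hj => ?_, ?_⟩
        · by_cases hji : j = i
          · exact absurd (hji ▸ ⟨hi, hact⟩) hj
          · simp [hji]
        · funext k
          simp [Finset.sum_ite_eq', ite_mul]
      have := hfle _ hmem
      rwa [hf_eq] at this
    have hu_pos : 0 < ∑ k, u k * h k := by
      have h9 := hf_eq u
      rw [h9] at hcu
      linarith
    have hH : 0 < ∑ k, h k ^ 2 := by
      apply sqsum_pos' (u := u)
      have : ∑ k, h k * u k = ∑ k, u k * h k :=
        Finset.sum_congr rfl fun k _ => mul_comm _ _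
      rw [this]; exact ne_of_gt hu_pos
    set H : ℝ := ∑ k, h k ^ 2 with hH_def
    set S : ℝ := ∑ k, u k * h k with hS_def
    set T : ℝ := S / H with hT_def
    have hT : 0 < T := div_pos hu_pos hH
    set g : Fin n → ℝ := fun i =>
      if P i ∧ ∑ k, X i k * u k ≠ 1 then
        ((∑ k, X i k * u k) - 1) / (|∑ k, X i k * h k| + 1) else T with hg_def
    set F : Finset ℝ := insert T (Finset.image g Finset.univ) with hF_def
    have hFne : F.Nonempty := Finset.insert_nonempty _ _
    set t : ℝ := F.min' hFne with ht_def
    have ht_pos : 0 < t := by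
      rw [ht_def, Finset.lt_min'_iff]
      intro b hb
      rw [hF_def, Finset.mem_insert] at hb
      rcases hb with rfl | hb
      · exact hT
      · obtain ⟨i, _, rfl⟩ := Finset.mem_image.1 hb
        simp only [hg_def]
        by_cases hcase : P i ∧ ∑ k, X i k * u k ≠ 1
        · rw [if_pos hcase]
          have h1 : 1 < ∑ k, X i k * u k :=
            lt_of_le_of_ne (hfeas i hcase.1) (Ne.symm hcase.2)
          have h2 : 0 < |∑ k, X i k * h k| + 1 := by positivity
          exact div_pos (by linarith) h2
        · rw [if_neg hcase]; exact hT
    have htT : t ≤ T := Finset.min'_le _ _ (Finset.mem_insert_self _ _)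
    have htg : ∀ i, t ≤ g i := fun i =>
      Finset.min'_le _ _ (Finset.mem_insert_of_mem
        (Finset.mem_image_of_mem g (Finset.mem_univ i)))
    set v : Fin d → ℝ := fun k => u k - t * h k with hv_def
    have hdot : ∀ i, ∑ k, X i k * v k = (∑ k, X i k * u k) - t * ∑ k, X i k * h k := by
      intro i
      rw [Finset.mul_sum, ← Finset.sum_sub_distrib]
      exact Finset.sum_congr rfl fun k _ => by simp only [hv_def]; ring
    have hfeasv : ∀ i, P i → 1 ≤ ∑ k, X i k * v k := by
      intro i hi
      rw [hdot i]
      by_cases hact : ∑ k, X i k * u k = 1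
      · have := hrow i hi hact
        nlinarith
      · have h1 : 1 < ∑ k, X i k * u k := lt_of_le_of_ne (hfeas i hi) (Ne.symm hact)
        have hgi : g i = ((∑ k, X i k * u k) - 1) / (|∑ k, X i k * h k| + 1) := by
          simp only [hg_def]; exact if_pos ⟨hi, hact⟩
        have habs : 0 < |∑ k, X i k * h k| + 1 := by positivity
        have h2 : t * (|∑ k, X i k * h k| + 1) ≤ (∑ k, X i k * u k) - 1 := by
          have := htg i
          rw [hgi] at this
          exact (le_div_iff₀ habs).1 this
        have h3 : t * (∑ k, X i k * h k) ≤ t * |∑ k, X i k * h k| :=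
          mul_le_mul_of_nonneg_left (le_abs_self _) ht_pos.le
        nlinarith
    have hnorm : ∑ k, v k ^ 2 < ∑ k, u k ^ 2 := by
      have h1 : ∑ k, v k ^ 2 = (∑ k, u k ^ 2) - 2 * t * S + t ^ 2 * H := by
        have hexp : ∀ k : Fin d, v k ^ 2 =
            u k ^ 2 - 2 * t * (u k * h k) + t ^ 2 * h k ^ 2 :=
          fun k => by simp only [hv_def]; ring
        simp_rw [hexp]
        rw [Finset.sum_add_distrib, Finset.sum_sub_distrib, ← Finset.mul_sum, ← Finset.mul_sum,
          hS_def, hH_def]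
      have h4 : t * H ≤ S := by
        have := htT
        rw [hT_def] at this
        exact (le_div_iff₀ hH).1 this
      have h5 : t * (t * H) ≤ t * S := mul_le_mul_of_nonneg_left h4 ht_pos.le
      have h6 : 0 < t * S := mul_pos ht_pos hu_pos
      rw [h1]; nlinarith
    exact absurd (hopt v hfeasv) (not_le.2 (e2_lt_e2 hnorm))
  -- extract an approximating element of K
  set δ : ℝ := ε / (d + 1) with hδ_def
  have hδ : 0 < δ := by positivity
  obtain ⟨v, hvK, hdist⟩ := Metric.mem_closure_iff.1 hu_mem δ hδ
  obtain ⟨lam, hlam, hsupp, rfl⟩ := hvK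
  refine ⟨lam, hlam, fun i hi => hsupp i (fun hc => hi hc.1),
    fun i hi => by_contra fun hne => hi (hsupp i (fun hc => hne hc.2)), ?_⟩
  have hcoord : ∀ k, |(∑ i, lam i * X i k) - u k| < δ := by
    intro k
    have := (dist_pi_lt_iff hδ).1 hdist k
    rw [Real.dist_eq, abs_sub_comm] at this
    exact this
  have hsum : ∑ k, ((∑ i, lam i * X i k) - u k) ^ 2 < ε ^ 2 := by
    calc ∑ k, ((∑ i, lam i * X i k) - u k) ^ 2 ≤ ∑ _k : Fin d, δ ^ 2 := by
          apply Finset.sum_le_sum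
          intro k _
          have := (hcoord k).le
          nlinarith [abs_nonneg ((∑ i, lam i * X i k) - u k),
            sq_abs ((∑ i, lam i * X i k) - u k)]
      _ = d * δ ^ 2 := by simp [Finset.sum_const, mul_comm]
      _ < ε ^ 2 := by
          rw [hδ_def, div_pow, mul_div_assoc']
          have hd1 : (0:ℝ) < ((d:ℝ) + 1) ^ 2 := by positivity
          rw [div_lt_iff₀ hd1]
          have hgt : ε ^ 2 * ((d:ℝ) + 1) ^ 2 - (d:ℝ) * ε ^ 2 =
              ε ^ 2 * (((d:ℝ)) ^ 2 + (d:ℝ) + 1) := by ring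
          have hpos2 : 0 < ε ^ 2 * (((d:ℝ)) ^ 2 + (d:ℝ) + 1) := by positivity
          linarith
  have hfin : Real.sqrt (∑ k, ((∑ i, lam i * X i k) - u k) ^ 2) < ε := by
    have h8 := Real.sqrt_lt_sqrt (Finset.sum_nonneg (s := Finset.univ)
      (f := fun k => ((∑ i, lam i * X i k) - u k) ^ 2) fun _ _ => sq_nonneg _) hsum
    rwa [Real.sqrt_sq hε.le] at h8
  simpa [e2] using hfin

lemma relu_bound {n d : ℕ} (X : Matrix (Fin n) (Fin d) ℝ) (lam : Fin n → ℝ)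
    (hlam : ∀ i, 0 ≤ lam i)
    (hpos : ∀ i j, lam i ≠ 0 → lam j ≠ 0 → 0 ≤ ∑ k, X i k * X j k)
    (w : Fin d → ℝ) :
    ∑ i, lam i * max (∑ k, X i k * w k) 0 ≤ e2 (fun k => ∑ i, lam i * X i k) * e2 w := by
  classical
  set Pos : Finset (Fin n) := Finset.univ.filter (fun i => 0 ≤ ∑ k, X i k * w k) with hPos_def
  set p : Fin d → ℝ := fun k => ∑ i ∈ Pos, lam i * X i k with hp_def
  set q : Fin d → ℝ := fun k => ∑ i ∈ Finset.univ.filter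
    (fun i => ¬ (0 ≤ ∑ k, X i k * w k)), lam i * X i k with hq_def
  have hLHS : ∑ i, lam i * max (∑ k, X i k * w k) 0 = ∑ k, p k * w k := by
    rw [← Finset.sum_filter_add_sum_filter_not Finset.univ
      (fun i => 0 ≤ ∑ k, X i k * w k) (fun i => lam i * max (∑ k, X i k * w k) 0)]
    have h2 : ∑ i ∈ Finset.univ.filter (fun i => ¬ (0 ≤ ∑ k, X i k * w k)),
        lam i * max (∑ k, X i k * w k) 0 = 0 := by
      apply Finset.sum_eq_zero
      intro i hi
      have := (Finset.mem_filter.1 hi).2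
      rw [max_eq_right (le_of_lt (not_le.1 this)), mul_zero]
    rw [h2, add_zero]
    have h1 : ∑ i ∈ Pos, lam i * max (∑ k, X i k * w k) 0
        = ∑ i ∈ Pos, lam i * ∑ k, X i k * w k := by
      apply Finset.sum_congr rfl
      intro i hi
      rw [max_eq_left (Finset.mem_filter.1 hi).2]
    rw [h1]
    rw [hp_def]
    have h3 : ∀ i ∈ Pos, lam i * ∑ k, X i k * w k = ∑ k, (lam i * X i k) * w k := by
      intro i _
      rw [Finset.mul_sum]
      exact Finset.sum_congr rfl fun k _ => by ring
    rw [Finset.sum_congr rfl h3, Finset.sum_comm]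
    exact Finset.sum_congr rfl fun k _ => by rw [Finset.sum_mul]
  have hCS : ∑ k, p k * w k ≤ e2 p * e2 w := dot_le_e2 p w
  have hsplit : ∀ k, (∑ i, lam i * X i k) = p k + q k := by
    intro k
    rw [hp_def, hq_def]
    exact (Finset.sum_filter_add_sum_filter_not Finset.univ _ _).symm
  have hpq : 0 ≤ ∑ k, p k * q k := by
    have hexp : ∀ k : Fin d, p k * q k = ∑ i ∈ Pos, ∑ j ∈ Finset.univ.filter
        (fun i => ¬ (0 ≤ ∑ k, X i k * w k)), (lam i * X i k) * (lam j * X j k) := by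
      intro k
      rw [hp_def, hq_def]
      exact Finset.sum_mul_sum _ _ _ _
    rw [Finset.sum_congr rfl (fun k _ => hexp k), Finset.sum_comm]
    apply Finset.sum_nonneg
    intro i _
    rw [Finset.sum_comm]
    apply Finset.sum_nonneg
    intro j _
    have hterm : ∑ k, (lam i * X i k) * (lam j * X j k)
        = (lam i * lam j) * ∑ k, X i k * X j k := by
      rw [Finset.mul_sum]
      exact Finset.sum_congr rfl fun k _ => by ring
    rw [hterm]
    by_cases hi0 : lam i = 0
    · simp [hi0]
    by_cases hj0 : lam j = 0
    · simp [hj0]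
    exact mul_nonneg (mul_nonneg (hlam i) (hlam j)) (hpos i j hi0 hj0)
  have hq2 : 0 ≤ ∑ k, q k ^ 2 := Finset.sum_nonneg fun _ _ => sq_nonneg _
  have hmono : ∑ k, p k ^ 2 ≤ ∑ k, (∑ i, lam i * X i k) ^ 2 := by
    have h4 : ∑ k, (∑ i, lam i * X i k) ^ 2
        = (∑ k, p k ^ 2) + (2 * ∑ k, p k * q k + ∑ k, q k ^ 2) := by
      rw [Finset.mul_sum, ← Finset.sum_add_distrib, ← Finset.sum_add_distrib]
      refine Finset.sum_congr rfl fun k _ => ?_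
      rw [hsplit k]; ring
    linarith
  calc ∑ i, lam i * max (∑ k, X i k * w k) 0 = ∑ k, p k * w k := hLHS
    _ ≤ e2 p * e2 w := hCS
    _ ≤ e2 (fun k => ∑ i, lam i * X i k) * e2 w :=
        mul_le_mul_of_nonneg_right (e2_le_e2 hmono) (e2_nonneg w)

/-- Approximate dual certificate, normalized. -/
lemma dual_cert {n d : ℕ} (X : Matrix (Fin n) (Fin d) ℝ) (P : Fin n → Prop)
    (u : Fin d → ℝ)
    (hfeas : ∀ i, P i → 1 ≤ ∑ k, X i k * u k)
    (hopt : ∀ v : Fin d → ℝ, (∀ i, P i → 1 ≤ ∑ k, X i k * v k) → e2 u ≤ e2 v)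
    (hA : 0 < e2 u) {δ : ℝ} (hδ : 0 < δ) :
    ∃ lam : Fin n → ℝ, (∀ i, 0 ≤ lam i) ∧ (∀ i, ¬ P i → lam i = 0) ∧
      e2 u - δ ≤ ∑ i, lam i ∧
      e2 (fun k => ∑ i, lam i * X i k) ≤ 1 + δ / e2 u := by
  obtain ⟨l, hl0, hlsupp, hlact, hldist⟩ := kkt_approx X P u hfeas hopt hδ
  set A := e2 u with hA_def
  refine ⟨fun i => (1 / A) * l i,
    fun i => mul_nonneg (one_div_nonneg.2 hA.le) (hl0 i),
    fun i hi => by simp [hlsupp i hi], ?_, ?_⟩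
  · -- sum lower bound
    have hF1 : ∑ i, l i = ∑ k, (∑ i, l i * X i k) * u k := by
      have h1 : ∀ i ∈ Finset.univ, l i = l i * ∑ k, X i k * u k := by
        intro i _
        by_cases h0 : l i = 0
        · simp [h0]
        · rw [hlact i h0, mul_one]
      rw [Finset.sum_congr rfl h1]
      have h2 : ∀ i ∈ Finset.univ, l i * ∑ k, X i k * u k = ∑ k, (l i * X i k) * u k := by
        intro i _; rw [Finset.mul_sum]; exact Finset.sum_congr rfl fun k _ => by ring
      rw [Finset.sum_congr rfl h2, Finset.sum_comm]
      exact Finset.sum_congr rfl fun k _ => by rw [Finset.sum_mul]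
    have hF2 : A ^ 2 - δ * A ≤ ∑ k, (∑ i, l i * X i k) * u k := by
      have h4 : e2 (fun k => u k - (∑ i, l i * X i k))
          = e2 (fun k => (∑ i, l i * X i k) - u k) := by
        unfold e2; congr 1; exact Finset.sum_congr rfl fun k _ => by ring
      have h3 := dot_le_e2 (fun k => u k - (∑ i, l i * X i k)) u
      rw [h4] at h3
      have hdiff : ∑ k, (u k - (∑ i, l i * X i k)) * u k ≤ δ * A :=
        le_trans h3 (mul_le_mul_of_nonneg_right hldist.le (e2_nonneg u))
      have h5 : ∑ k, (u k - (∑ i, l i * X i k)) * u k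
          = (∑ k, u k ^ 2) - ∑ k, (∑ i, l i * X i k) * u k := by
        rw [← Finset.sum_sub_distrib]; exact Finset.sum_congr rfl fun k _ => by ring
      rw [h5] at hdiff
      have h6 := e2_sq u
      rw [← hA_def] at h6
      linarith [h6 ▸ hdiff]
    have hsuml : ∑ i, (1 / A) * l i = (1 / A) * ∑ i, l i := (Finset.mul_sum _ _ _).symm
    rw [hsuml, hF1]
    have hAne : A ≠ 0 := ne_of_gt hA
    have : (1 / A) * (A ^ 2 - δ * A) = A - δ := by field_simp
    calc A - δ = (1 / A) * (A ^ 2 - δ * A) := this.symm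
      _ ≤ (1 / A) * ∑ k, (∑ i, l i * X i k) * u k :=
          mul_le_mul_of_nonneg_left hF2 (one_div_nonneg.2 hA.le)
  · -- norm upper bound
    have hvd : (fun k => ∑ i, (1 / A) * l i * X i k)
        = fun k => (1 / A) * ∑ i, l i * X i k := by
      funext k; rw [Finset.mul_sum]
      exact Finset.sum_congr rfl fun i _ => by ring
    rw [hvd, e2_smul (1 / A) (one_div_nonneg.2 hA.le)]
    have hup : e2 (fun k => ∑ i, l i * X i k) ≤ A + δ := by
      have h6 : (fun k => ∑ i, l i * X i k)
          = fun k => u k + ((∑ i, l i * X i k) - u k) := by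
        funext k; ring
      calc e2 (fun k => ∑ i, l i * X i k)
          = e2 (fun k => u k + ((∑ i, l i * X i k) - u k)) := by rw [← h6]
        _ ≤ e2 u + e2 (fun k => (∑ i, l i * X i k) - u k) := e2_add_le _ _
        _ ≤ A + δ := by
            have := hldist.le
            rw [← hA_def]
            linarith
    have hAne : A ≠ 0 := ne_of_gt hA
    calc (1 / A) * e2 (fun k => ∑ i, l i * X i k)
        ≤ (1 / A) * (A + δ) :=
          mul_le_mul_of_nonneg_left hup (one_div_nonneg.2 hA.le)
      _ = 1 + δ / A := by field_simp
set_option maxHeartbeats 2000000 in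
/-- Theorem 4.2: for orthogonal separable data, an optimal solution `(u₊, u₋)` of the
separated convex program `min ‖u₊‖₂ + ‖u₋‖₂ s.t. X₊u₊ ≥ 𝟏, X₋u₋ ≥ 𝟏` yields, via
`W₁ = [u₊/√‖u₊‖₂ , u₋/√‖u₋‖₂]` and `w₂ = (√‖u₊‖₂, −√‖u₋‖₂)`, a globally optimal
two-neuron ReLU network for the non-convex max-margin training problem. -/
theorem stmt7 (n d : ℕ) (X : Matrix (Fin n) (Fin d) ℝ) (y : Fin n → ℝ)
    (hy : ∀ i, y i = 1 ∨ y i = -1)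
    (hplus : ∃ i, y i = 1) (hminus : ∃ i, y i = -1)
    (hsep : ∀ i j, (y i = y j → 0 ≤ ∑ k, X i k * X j k) ∧
      (y i ≠ y j → ∑ k, X i k * X j k ≤ 0))
    (up um : Fin d → ℝ)
    (hfeas : (∀ i, y i = 1 → 1 ≤ ∑ k, X i k * up k) ∧
      (∀ i, y i = -1 → 1 ≤ ∑ k, X i k * um k))
    (hopt : ∀ vp vm : Fin d → ℝ,
      ((∀ i, y i = 1 → 1 ≤ ∑ k, X i k * vp k) ∧
        (∀ i, y i = -1 → 1 ≤ ∑ k, X i k * vm k)) →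
      e2 up + e2 um ≤ e2 vp + e2 vm) :
    (∀ i, 1 ≤ y i *
      (max (∑ k, X i k * (up k / Real.sqrt (e2 up))) 0 * Real.sqrt (e2 up) +
        max (∑ k, X i k * (um k / Real.sqrt (e2 um))) 0 * (-Real.sqrt (e2 um)))) ∧
    (1 / 2) * (((∑ k, (up k / Real.sqrt (e2 up)) ^ 2) +
        (∑ k, (um k / Real.sqrt (e2 um)) ^ 2)) +
      ((Real.sqrt (e2 up)) ^ 2 + (Real.sqrt (e2 um)) ^ 2)) = e2 up + e2 um ∧
    (∀ m : ℕ, 1 ≤ m → ∀ (W₁ : Fin m → Fin d → ℝ) (w₂ : Fin m → ℝ),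
      (∀ i, 1 ≤ y i * ∑ j, max (∑ k, X i k * W₁ j k) 0 * w₂ j) →
      e2 up + e2 um ≤ (1 / 2) * ((∑ j, ∑ k, (W₁ j k) ^ 2) + ∑ j, (w₂ j) ^ 2)) := by
  classical
  obtain ⟨i₀, hi₀⟩ := hplus
  obtain ⟨i₁, hi₁⟩ := hminus
  have ha : 0 < e2 up := by
    have h1 := hfeas.1 i₀ hi₀
    have h2 := dot_le_e2 (fun k => X i₀ k) up
    nlinarith [e2_nonneg (fun k => X i₀ k), e2_nonneg up]
  have hb : 0 < e2 um := by
    have h1 := hfeas.2 i₁ hi₁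
    have h2 := dot_le_e2 (fun k => X i₁ k) um
    nlinarith [e2_nonneg (fun k => X i₁ k), e2_nonneg um]
  have hoptp : ∀ v : Fin d → ℝ, (∀ i, y i = 1 → 1 ≤ ∑ k, X i k * v k) → e2 up ≤ e2 v := by
    intro v hv
    have := hopt v um ⟨hv, hfeas.2⟩
    linarith
  have hoptm : ∀ v : Fin d → ℝ, (∀ i, y i = -1 → 1 ≤ ∑ k, X i k * v k) → e2 um ≤ e2 v := by
    intro v hv
    have := hopt up v ⟨hfeas.1, hv⟩
    linarith
  -- purity
  have hpure_p : ∀ i, y i = 1 → ∑ k, X i k * um k ≤ 0 := by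
    intro i hi
    have hxx : 0 < ∑ k, X i k ^ 2 :=
      sqsum_pos' (u := up) (by have := hfeas.1 i hi; intro h0; rw [h0] at this; linarith)
    exact purity X (fun j => y j = -1) um (fun k => X i k) hfeas.2 hoptm hxx
      (fun j hj => (hsep j i).2 (by rw [hj, hi]; norm_num))
  have hpure_m : ∀ i, y i = -1 → ∑ k, X i k * up k ≤ 0 := by
    intro i hi
    have hxx : 0 < ∑ k, X i k ^ 2 :=
      sqsum_pos' (u := um) (by have := hfeas.2 i hi; intro h0; rw [h0] at this; linarith)
    exact purity X (fun j => y j = 1) up (fun k => X i k) hfeas.1 hoptp hxx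
      (fun j hj => (hsep j i).2 (by rw [hj, hi]; norm_num))
  have hsa : 0 < Real.sqrt (e2 up) := Real.sqrt_pos.2 ha
  have hsb : 0 < Real.sqrt (e2 um) := Real.sqrt_pos.2 hb
  refine ⟨?_, ?_, ?_⟩
  · -- (i)
    intro i
    have e1 : ∑ k, X i k * (up k / Real.sqrt (e2 up))
        = (∑ k, X i k * up k) / Real.sqrt (e2 up) := by
      rw [Finset.sum_div]; exact Finset.sum_congr rfl fun k _ => by ring
    have e1' : ∑ k, X i k * (um k / Real.sqrt (e2 um))
        = (∑ k, X i k * um k) / Real.sqrt (e2 um) := by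
      rw [Finset.sum_div]; exact Finset.sum_congr rfl fun k _ => by ring
    rcases hy i with hyi | hyi
    · have h1 : 1 ≤ ∑ k, X i k * up k := hfeas.1 i hyi
      have h2 : ∑ k, X i k * um k ≤ 0 := hpure_p i hyi
      rw [hyi, e1, e1', one_mul,
        max_eq_left (div_nonneg (by linarith) hsa.le),
        max_eq_right (div_nonpos_iff.2 (Or.inr ⟨h2, hsb.le⟩)),
        div_mul_cancel₀ _ (ne_of_gt hsa), zero_mul, add_zero]
      exact h1
    · have h1 : 1 ≤ ∑ k, X i k * um k := hfeas.2 i hyi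
      have h2 : ∑ k, X i k * up k ≤ 0 := hpure_m i hyi
      rw [hyi, e1, e1',
        max_eq_right (div_nonpos_iff.2 (Or.inr ⟨h2, hsa.le⟩)),
        max_eq_left (div_nonneg (by linarith) hsb.le),
        zero_mul, zero_add, mul_neg, div_mul_cancel₀ _ (ne_of_gt hsb)]
      linarith
  · -- (ii)
    have hsa2 : Real.sqrt (e2 up) ^ 2 = e2 up := Real.sq_sqrt (e2_nonneg up)
    have hsb2 : Real.sqrt (e2 um) ^ 2 = e2 um := Real.sq_sqrt (e2_nonneg um)
    have h1 : ∑ k, (up k / Real.sqrt (e2 up)) ^ 2 = e2 up := by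
      have hterm : ∀ k ∈ Finset.univ, (up k / Real.sqrt (e2 up)) ^ 2
          = up k ^ 2 / e2 up := fun k _ => by rw [div_pow, hsa2]
      rw [Finset.sum_congr rfl hterm, ← Finset.sum_div, ← e2_sq up, pow_two,
        mul_div_assoc, div_self (ne_of_gt ha), mul_one]
    have h2 : ∑ k, (um k / Real.sqrt (e2 um)) ^ 2 = e2 um := by
      have hterm : ∀ k ∈ Finset.univ, (um k / Real.sqrt (e2 um)) ^ 2
          = um k ^ 2 / e2 um := fun k _ => by rw [div_pow, hsb2]
      rw [Finset.sum_congr rfl hterm, ← Finset.sum_div, ← e2_sq um, pow_two,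
        mul_div_assoc, div_self (ne_of_gt hb), mul_one]
    rw [h1, h2, hsa2, hsb2]; ring
  · -- (iii)
    intro m _hm W₁ w₂ hfeasN
    set R := (1 / 2) * ((∑ j, ∑ k, (W₁ j k) ^ 2) + ∑ j, (w₂ j) ^ 2) with hRdef
    have hR0 : 0 ≤ R := by positivity
    have hinv0 : 0 ≤ 1 / e2 up + 1 / e2 um :=
      add_nonneg (one_div_nonneg.2 ha.le) (one_div_nonneg.2 hb.le)
    set D : ℝ := (1 / e2 up + 1 / e2 um) * R + 2 with hDdef
    have hD0 : 0 < D := by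
      have := mul_nonneg hinv0 hR0
      rw [hDdef]; linarith
    apply le_of_forall_pos_le_add
    intro ε hε
    set δ : ℝ := ε / D with hδdef
    have hδ0 : 0 < δ := div_pos hε hD0
    obtain ⟨lam, hlam0, hlamsupp, hlamsum, hlamnorm⟩ :=
      dual_cert X (fun i => y i = 1) up hfeas.1 hoptp ha hδ0
    obtain ⟨mu, hmu0, hmusupp, hmusum, hmunorm⟩ :=
      dual_cert X (fun i => y i = -1) um hfeas.2 hoptm hb hδ0
    set C : ℝ := 1 + δ * (1 / e2 up + 1 / e2 um) with hCdef
    have hC0 : 0 ≤ C := by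
      have := mul_nonneg hδ0.le hinv0
      rw [hCdef]; linarith
    have hCa : e2 (fun k => ∑ i, lam i * X i k) ≤ C := by
      refine le_trans hlamnorm ?_
      rw [hCdef]
      have h7 : δ / e2 up ≤ δ * (1 / e2 up + 1 / e2 um) := by
        rw [div_eq_mul_one_div]
        refine mul_le_mul_of_nonneg_left ?_ hδ0.le
        have := one_div_nonneg.2 hb.le
        linarith
      linarith
    have hCb : e2 (fun k => ∑ i, mu i * X i k) ≤ C := by
      refine le_trans hmunorm ?_
      rw [hCdef]
      have h7 : δ / e2 um ≤ δ * (1 / e2 up + 1 / e2 um) := by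
        rw [div_eq_mul_one_div]
        refine mul_le_mul_of_nonneg_left ?_ hδ0.le
        have := one_div_nonneg.2 ha.le
        linarith
      linarith
    have hAle : ∀ w : Fin d → ℝ, ∑ i, lam i * max (∑ k, X i k * w k) 0 ≤ C * e2 w := by
      intro w
      have hpos : ∀ i j, lam i ≠ 0 → lam j ≠ 0 → 0 ≤ ∑ k, X i k * X j k := by
        intro i j hi hj
        have hyi : y i = 1 := by_contra fun h => hi (hlamsupp i h)
        have hyj : y j = 1 := by_contra fun h => hj (hlamsupp j h)
        exact (hsep i j).1 (by rw [hyi, hyj])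
      exact le_trans (relu_bound X lam hlam0 hpos w)
        (mul_le_mul_of_nonneg_right hCa (e2_nonneg w))
    have hBle : ∀ w : Fin d → ℝ, ∑ i, mu i * max (∑ k, X i k * w k) 0 ≤ C * e2 w := by
      intro w
      have hpos : ∀ i j, mu i ≠ 0 → mu j ≠ 0 → 0 ≤ ∑ k, X i k * X j k := by
        intro i j hi hj
        have hyi : y i = -1 := by_contra fun h => hi (hmusupp i h)
        have hyj : y j = -1 := by_contra fun h => hj (hmusupp j h)
        exact (hsep i j).1 (by rw [hyi, hyj])
      exact le_trans (relu_bound X mu hmu0 hpos w)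
        (mul_le_mul_of_nonneg_right hCb (e2_nonneg w))
    have hAnn : ∀ w : Fin d → ℝ, 0 ≤ ∑ i, lam i * max (∑ k, X i k * w k) 0 :=
      fun w => Finset.sum_nonneg fun i _ => mul_nonneg (hlam0 i) (le_max_right _ 0)
    have hBnn : ∀ w : Fin d → ℝ, 0 ≤ ∑ i, mu i * max (∑ k, X i k * w k) 0 :=
      fun w => Finset.sum_nonneg fun i _ => mul_nonneg (hmu0 i) (le_max_right _ 0)
    -- feasibility lower bounds
    have hsum1 : ∑ i, lam i
        ≤ ∑ i, lam i * (∑ j, max (∑ k, X i k * W₁ j k) 0 * w₂ j) := by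
      apply Finset.sum_le_sum
      intro i _
      by_cases h0 : lam i = 0
      · simp [h0]
      · have hyi : y i = 1 := by_contra fun h => h0 (hlamsupp i h)
        have hf := hfeasN i
        rw [hyi, one_mul] at hf
        nlinarith [hlam0 i]
    have hsum2 : ∑ i, mu i
        ≤ ∑ i, mu i * (-(∑ j, max (∑ k, X i k * W₁ j k) 0 * w₂ j)) := by
      apply Finset.sum_le_sum
      intro i _
      by_cases h0 : mu i = 0
      · simp [h0]
      · have hyi : y i = -1 := by_contra fun h => h0 (hmusupp i h)
        have hf := hfeasN i
        rw [hyi, neg_one_mul] at hf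
        nlinarith [hmu0 i]
    -- swap sums
    have hswap : (∑ i, lam i * (∑ j, max (∑ k, X i k * W₁ j k) 0 * w₂ j))
        + (∑ i, mu i * (-(∑ j, max (∑ k, X i k * W₁ j k) 0 * w₂ j)))
        = ∑ j, w₂ j * ((∑ i, lam i * max (∑ k, X i k * W₁ j k) 0)
            - (∑ i, mu i * max (∑ k, X i k * W₁ j k) 0)) := by
      rw [← Finset.sum_add_distrib]
      have hstep : ∀ i ∈ Finset.univ,
          lam i * (∑ j, max (∑ k, X i k * W₁ j k) 0 * w₂ j)
          + mu i * (-(∑ j, max (∑ k, X i k * W₁ j k) 0 * w₂ j))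
          = ∑ j, (lam i * (max (∑ k, X i k * W₁ j k) 0 * w₂ j)
              - mu i * (max (∑ k, X i k * W₁ j k) 0 * w₂ j)) := by
        intro i _
        rw [Finset.sum_sub_distrib, ← Finset.mul_sum, ← Finset.mul_sum]; ring
      rw [Finset.sum_congr rfl hstep, Finset.sum_comm]
      apply Finset.sum_congr rfl
      intro j _
      rw [Finset.sum_sub_distrib, mul_sub]
      congr 1
      · rw [Finset.mul_sum]; exact Finset.sum_congr rfl fun i _ => by ring
      · rw [Finset.mul_sum]; exact Finset.sum_congr rfl fun i _ => by ring
    -- per-neuron bound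
    have hper : ∀ j, w₂ j * ((∑ i, lam i * max (∑ k, X i k * W₁ j k) 0)
        - (∑ i, mu i * max (∑ k, X i k * W₁ j k) 0))
        ≤ C * ((1 / 2) * ((∑ k, (W₁ j k) ^ 2) + (w₂ j) ^ 2)) := by
      intro j
      have hE2 : e2 (W₁ j) ^ 2 = ∑ k, (W₁ j k) ^ 2 := e2_sq _
      have hA := hAle (W₁ j)
      have hB := hBle (W₁ j)
      have hA0 := hAnn (W₁ j)
      have hB0 := hBnn (W₁ j)
      set Aq := ∑ i, lam i * max (∑ k, X i k * W₁ j k) 0 with hAqdef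
      set Bq := ∑ i, mu i * max (∑ k, X i k * W₁ j k) 0 with hBqdef
      set E := e2 (W₁ j) with hEdef
      have hamgm : w₂ j * E ≤ (1 / 2) * (w₂ j ^ 2 + E ^ 2) := by
        nlinarith [sq_nonneg (w₂ j - E)]
      have hamgm' : (-(w₂ j)) * E ≤ (1 / 2) * (w₂ j ^ 2 + E ^ 2) := by
        nlinarith [sq_nonneg (w₂ j + E)]
      rcases le_or_gt 0 (w₂ j) with hw | hw
      · calc w₂ j * (Aq - Bq) ≤ w₂ j * Aq :=
              mul_le_mul_of_nonneg_left (sub_le_self _ hB0) hw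
          _ ≤ w₂ j * (C * E) := mul_le_mul_of_nonneg_left hA hw
          _ = C * (w₂ j * E) := by ring
          _ ≤ C * ((1 / 2) * (w₂ j ^ 2 + E ^ 2)) := mul_le_mul_of_nonneg_left hamgm hC0
          _ = C * ((1 / 2) * ((∑ k, (W₁ j k) ^ 2) + (w₂ j) ^ 2)) := by rw [hE2]; ring
      · have hw' : 0 ≤ -(w₂ j) := by linarith
        calc w₂ j * (Aq - Bq) = (-(w₂ j)) * (Bq - Aq) := by ring
          _ ≤ (-(w₂ j)) * Bq := mul_le_mul_of_nonneg_left (sub_le_self _ hA0) hw'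
          _ ≤ (-(w₂ j)) * (C * E) := mul_le_mul_of_nonneg_left hB hw'
          _ = C * ((-(w₂ j)) * E) := by ring
          _ ≤ C * ((1 / 2) * (w₂ j ^ 2 + E ^ 2)) := mul_le_mul_of_nonneg_left hamgm' hC0
          _ = C * ((1 / 2) * ((∑ k, (W₁ j k) ^ 2) + (w₂ j) ^ 2)) := by rw [hE2]; ring
    have htot : ∑ j, w₂ j * ((∑ i, lam i * max (∑ k, X i k * W₁ j k) 0)
        - (∑ i, mu i * max (∑ k, X i k * W₁ j k) 0)) ≤ C * R := by
      calc ∑ j, w₂ j * ((∑ i, lam i * max (∑ k, X i k * W₁ j k) 0)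
            - (∑ i, mu i * max (∑ k, X i k * W₁ j k) 0))
          ≤ ∑ j, C * ((1 / 2) * ((∑ k, (W₁ j k) ^ 2) + (w₂ j) ^ 2)) :=
            Finset.sum_le_sum fun j _ => hper j
        _ = C * R := by
            rw [← Finset.mul_sum, hRdef]
            congr 1
            rw [← Finset.mul_sum, Finset.sum_add_distrib]
    have hδD : δ * D = ε := by
      rw [hδdef]; field_simp
    have hCR : C * R = R + δ * ((1 / e2 up + 1 / e2 um) * R) := by
      rw [hCdef]; ring
    have hchain : e2 up + e2 um - 2 * δ ≤ C * R := by
      have h1 := add_le_add hsum1 hsum2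
      rw [hswap] at h1
      linarith [htot, hlamsum, hmusum]
    have hfin : δ * ((1 / e2 up + 1 / e2 um) * R) + 2 * δ = ε := by
      rw [← hδD, hDdef]; ring
    clear_value R D δ C
    linarith [hchain, hCR, hfin]
end

section
/- Let X ∈ ℝ^{n×d}, y ∈ {−1,1}^n with n₊ ≥ 1 and n₋ ≥ 1, and suppose (X,y) is orthogonal separable (x_iᵀx_j ≥ 0 if y_i = y_j, x_iᵀx_j ≤ 0 if y_i ≠ y_j). If (u₊, u₋) ∈ ℝ^d × ℝ^d is an optimal solution of min{ ‖u₊‖₂ + ‖u₋‖₂ : X₊u₊ ≥ 𝟏, X₋u₋ ≥ 𝟏 }, then X₋u₊ ≤ 0 and X₊u₋ ≤ 0 componentwise. -/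
open Matrix

/-- Projection step: if `⟨x,u⟩ > 0`, subtracting the `x`-component of `u` strictly
decreases the norm while not decreasing `⟨w,u⟩` for any `w` with `⟨w,x⟩ ≤ 0`. -/
lemma key_s8 {d : ℕ} (x u : Fin d → ℝ) (ha : 0 < ∑ k, x k * u k) :
    ∃ v : Fin d → ℝ, e2 v < e2 u ∧
      ∀ w : Fin d → ℝ, (∑ k, w k * x k ≤ 0) → ∑ k, w k * u k ≤ ∑ k, w k * v k := by
  set a : ℝ := ∑ k, x k * u k with ha'
  set s : ℝ := ∑ k, x k * x k with hs'
  have hs0 : 0 ≤ s := Finset.sum_nonneg fun k _ => mul_self_nonneg _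
  have hs : 0 < s := by
    rcases lt_or_eq_of_le hs0 with h | h
    · exact h
    · exfalso
      have hall : ∀ k ∈ Finset.univ, x k * x k = 0 :=
        (Finset.sum_eq_zero_iff_of_nonneg fun k _ => mul_self_nonneg _).mp h.symm
      have hx : ∀ k, x k = 0 := fun k => mul_self_eq_zero.mp (hall k (Finset.mem_univ k))
      have : a = 0 := by
        rw [ha']; apply Finset.sum_eq_zero; intro k _; rw [hx k]; ring
      linarith
  set c : ℝ := a / s with hc'
  have hcpos : 0 < c := div_pos ha hs
  refine ⟨fun k => u k - c * x k, ?_, ?_⟩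
  · have expand : ∑ k, (u k - c * x k) ^ 2
        = (∑ k, u k ^ 2) - 2 * c * a + c ^ 2 * s := by
      calc ∑ k, (u k - c * x k) ^ 2
          = ∑ k, (u k ^ 2 - 2 * c * (x k * u k) + c ^ 2 * (x k * x k)) := by
            apply Finset.sum_congr rfl; intro k _; ring
        _ = (∑ k, u k ^ 2) - 2 * c * a + c ^ 2 * s := by
            rw [Finset.sum_add_distrib, Finset.sum_sub_distrib, ← Finset.mul_sum,
              ← Finset.mul_sum, ha', hs']
    have hterm : -(2 * c * a) + c ^ 2 * s = -(a ^ 2 / s) := by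
      rw [hc']; field_simp; ring
    have hlt : ∑ k, (u k - c * x k) ^ 2 < ∑ k, u k ^ 2 := by
      have hpos : 0 < a ^ 2 / s := div_pos (pow_pos ha 2) hs
      rw [expand]; linarith
    exact Real.sqrt_lt_sqrt (Finset.sum_nonneg fun k _ => sq_nonneg _) hlt
  · intro w hw
    have : ∑ k, w k * (u k - c * x k)
        = (∑ k, w k * u k) - c * ∑ k, w k * x k := by
      rw [Finset.mul_sum, ← Finset.sum_sub_distrib]
      apply Finset.sum_congr rfl; intro k _; ring
    rw [this]
    nlinarith

/-- Lemma 4.4: for orthogonal separable data, any optimal solution `(u₊, u₋)` of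
`min ‖u₊‖₂ + ‖u₋‖₂ s.t. X₊u₊ ≥ 𝟏, X₋u₋ ≥ 𝟏` satisfies `X₋u₊ ≤ 0` and `X₊u₋ ≤ 0`. -/
theorem stmt8 (n d : ℕ) (X : Matrix (Fin n) (Fin d) ℝ) (y : Fin n → ℝ)
    (hy : ∀ i, y i = 1 ∨ y i = -1)
    (hplus : ∃ i, y i = 1) (hminus : ∃ i, y i = -1)
    (hsep : ∀ i j, (y i = y j → 0 ≤ ∑ k, X i k * X j k) ∧
      (y i ≠ y j → ∑ k, X i k * X j k ≤ 0))
    (up um : Fin d → ℝ)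
    (hfeas : (∀ i, y i = 1 → 1 ≤ ∑ k, X i k * up k) ∧
      (∀ i, y i = -1 → 1 ≤ ∑ k, X i k * um k))
    (hopt : ∀ vp vm : Fin d → ℝ,
      ((∀ i, y i = 1 → 1 ≤ ∑ k, X i k * vp k) ∧
        (∀ i, y i = -1 → 1 ≤ ∑ k, X i k * vm k)) →
      e2 up + e2 um ≤ e2 vp + e2 vm) :
    (∀ i, y i = -1 → ∑ k, X i k * up k ≤ 0) ∧
    (∀ i, y i = 1 → ∑ k, X i k * um k ≤ 0) := by
  constructor
  · intro i hi
    by_contra h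
    push_neg at h
    obtain ⟨v, hlt, hmono⟩ := key_s8 (X i) up h
    have hfeasv : ∀ j, y j = 1 → 1 ≤ ∑ k, X j k * v k := by
      intro j hj
      have hne : y j ≠ y i := by rw [hj, hi]; norm_num
      have hle := (hsep j i).2 hne
      exact le_trans (hfeas.1 j hj) (hmono (X j) hle)
    have := hopt v um ⟨hfeasv, hfeas.2⟩
    linarith
  · intro i hi
    by_contra h
    push_neg at h
    obtain ⟨v, hlt, hmono⟩ := key_s8 (X i) um h
    have hfeasv : ∀ j, y j = -1 → 1 ≤ ∑ k, X j k * v k := by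
      intro j hj
      have hne : y j ≠ y i := by rw [hj, hi]; norm_num
      have hle := (hsep j i).2 hne
      exact le_trans (hfeas.2 j hj) (hmono (X j) hle)
    have := hopt up v ⟨hfeas.1, hfeasv⟩
    linarith
end

section
/- Let X ∈ ℝ^{n×d}, y ∈ {−1,1}^n, and suppose the dataset has negative correlation, i.e., x_iᵀx_j ≤ 0 whenever y_i ≠ y_j. Then for all λ₊ ∈ ℝ^{n₊} with λ₊ ≥ 0 and λ₋ ∈ ℝ^{n₋} with λ₋ ≥ 0: (i) max_{b₊∈[0,1]^{n₊}} min_{b₋∈[0,1]^{n₋}} ‖X₊ᵀ diag(λ₊) b₊ − X₋ᵀ diag(λ₋) b₋‖₂ = max_{b₊∈[0,1]^{n₊}} ‖X₊ᵀ diag(λ₊) b₊‖₂, and (ii) max_{b₋∈[0,1]^{n₋}} min_{b₊∈[0,1]^{n₊}} ‖X₊ᵀ diag(λ₊) b₊ − X₋ᵀ diag(λ₋) b₋‖₂ = max_{b₋∈[0,1]^{n₋}} ‖X₋ᵀ diag(λ₋) b₋‖₂. -/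
open Matrix

lemma zero_mem_box (n : ℕ) : (fun _ : Fin n => (0:ℝ)) ∈ box n := by
  intro i; constructor <;> norm_num

lemma vP_zero {n d : ℕ} (X : Matrix (Fin n) (Fin d) ℝ) (y lp : Fin n → ℝ) :
    vP X y lp (fun _ => 0) = 0 := by
  funext k; simp [vP]

lemma vM_zero {n d : ℕ} (X : Matrix (Fin n) (Fin d) ℝ) (y lm : Fin n → ℝ) :
    vM X y lm (fun _ => 0) = 0 := by
  funext k; simp [vM]

lemma e2_sub_comm {d : ℕ} (u v : Fin d → ℝ) : e2 (u - v) = e2 (v - u) := by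
  unfold e2
  congr 1
  apply Finset.sum_congr rfl
  intro k _
  simp only [Pi.sub_apply]
  ring

lemma e2_sub_ge {d : ℕ} (u v : Fin d → ℝ) (h : ∑ k, u k * v k ≤ 0) :
    e2 u ≤ e2 (u - v) := by
  apply Real.sqrt_le_sqrt
  have h1 : ∑ k, ((u - v) k) ^ 2 = ∑ k, ((u k)^2 - 2 * (u k * v k) + (v k)^2) := by
    apply Finset.sum_congr rfl
    intro k _
    simp only [Pi.sub_apply]
    ring
  have h2 : ∑ k, ((u k)^2 - 2 * (u k * v k) + (v k)^2)
      = ∑ k, (u k)^2 - 2 * ∑ k, (u k * v k) + ∑ k, (v k)^2 := by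
    rw [Finset.sum_add_distrib, Finset.sum_sub_distrib, Finset.mul_sum]
  have h3 : (0:ℝ) ≤ ∑ k, (v k)^2 := Finset.sum_nonneg fun k _ => sq_nonneg _
  rw [h1, h2]
  linarith

lemma inner_nonpos {n d : ℕ} (X : Matrix (Fin n) (Fin d) ℝ) (y lp lm bp bm : Fin n → ℝ)
    (hneg : ∀ i j, y i ≠ y j → ∑ k, X i k * X j k ≤ 0)
    (hlp : ∀ i, 0 ≤ lp i) (hlm : ∀ i, 0 ≤ lm i)
    (hbp : ∀ i, 0 ≤ bp i) (hbm : ∀ i, 0 ≤ bm i) :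
    ∑ k, vP X y lp bp k * vM X y lm bm k ≤ 0 := by
  simp only [vP, vM]
  have step1 : ∑ k, (∑ i, if y i = 1 then lp i * bp i * X i k else 0) *
      (∑ j, if y j = -1 then lm j * bm j * X j k else 0)
      = ∑ i, ∑ j, ∑ k, (if y i = 1 then lp i * bp i * X i k else 0) *
        (if y j = -1 then lm j * bm j * X j k else 0) := by
    calc ∑ k, (∑ i, if y i = 1 then lp i * bp i * X i k else 0) *
          (∑ j, if y j = -1 then lm j * bm j * X j k else 0)
        = ∑ k, ∑ i, ∑ j, (if y i = 1 then lp i * bp i * X i k else 0) *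
            (if y j = -1 then lm j * bm j * X j k else 0) :=
          Finset.sum_congr rfl fun k _ => Finset.sum_mul_sum _ _ _ _
      _ = ∑ i, ∑ k, ∑ j, (if y i = 1 then lp i * bp i * X i k else 0) *
            (if y j = -1 then lm j * bm j * X j k else 0) := Finset.sum_comm
      _ = ∑ i, ∑ j, ∑ k, (if y i = 1 then lp i * bp i * X i k else 0) *
            (if y j = -1 then lm j * bm j * X j k else 0) :=
          Finset.sum_congr rfl fun i _ => Finset.sum_comm
  rw [step1]
  apply Finset.sum_nonpos
  intro i _
  apply Finset.sum_nonpos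
  intro j _
  by_cases h1 : y i = 1
  · by_cases h2 : y j = -1
    · simp only [h1, h2, if_true, if_pos rfl]
      have hij : y i ≠ y j := by rw [h1, h2]; norm_num
      have heq : ∑ k, (lp i * bp i * X i k) * (lm j * bm j * X j k)
          = (lp i * bp i * (lm j * bm j)) * ∑ k, X i k * X j k := by
        rw [Finset.mul_sum]
        apply Finset.sum_congr rfl
        intro k _
        ring
      rw [heq]
      exact mul_nonpos_of_nonneg_of_nonpos
        (mul_nonneg (mul_nonneg (hlp i) (hbp i)) (mul_nonneg (hlm j) (hbm j)))
        (hneg i j hij)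
    · simp [h2]
  · simp [h1]

/-- Proposition 5.2: for negatively correlated data, the two maximin quantities in the dual
constraint reduce to the maxima of the norms of the individual zonotope points. -/
theorem stmt9 (n d : ℕ) (X : Matrix (Fin n) (Fin d) ℝ) (y : Fin n → ℝ)
    (hy : ∀ i, y i = 1 ∨ y i = -1)
    (hneg : ∀ i j, y i ≠ y j → ∑ k, X i k * X j k ≤ 0)
    (lp lm : Fin n → ℝ) (hlp : ∀ i, 0 ≤ lp i) (hlm : ∀ i, 0 ≤ lm i) :
    sSup ((fun bp => sInf ((fun bm => e2 (vP X y lp bp - vM X y lm bm)) '' box n)) '' box n) =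
        sSup ((fun bp => e2 (vP X y lp bp)) '' box n) ∧
    sSup ((fun bm => sInf ((fun bp => e2 (vP X y lp bp - vM X y lm bm)) '' box n)) '' box n) =
        sSup ((fun bm => e2 (vM X y lm bm)) '' box n) := by
  have key1 : ∀ bp ∈ box n,
      sInf ((fun bm => e2 (vP X y lp bp - vM X y lm bm)) '' box n) = e2 (vP X y lp bp) := by
    intro bp hbp
    have hmem : e2 (vP X y lp bp) ∈ (fun bm => e2 (vP X y lp bp - vM X y lm bm)) '' box n := by
      refine ⟨fun _ => 0, zero_mem_box n, ?_⟩
      show e2 (vP X y lp bp - vM X y lm (fun _ => 0)) = _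
      rw [vM_zero, sub_zero]
    have hlb : ∀ x ∈ (fun bm => e2 (vP X y lp bp - vM X y lm bm)) '' box n,
        e2 (vP X y lp bp) ≤ x := by
      rintro x ⟨bm, hbm, rfl⟩
      exact e2_sub_ge _ _ (inner_nonpos X y lp lm bp bm hneg hlp hlm
        (fun i => (hbp i).1) (fun i => (hbm i).1))
    exact le_antisymm (csInf_le ⟨_, hlb⟩ hmem) (le_csInf ⟨_, hmem⟩ hlb)
  have key2 : ∀ bm ∈ box n,
      sInf ((fun bp => e2 (vP X y lp bp - vM X y lm bm)) '' box n) = e2 (vM X y lm bm) := by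
    intro bm hbm
    have hmem : e2 (vM X y lm bm) ∈ (fun bp => e2 (vP X y lp bp - vM X y lm bm)) '' box n := by
      refine ⟨fun _ => 0, zero_mem_box n, ?_⟩
      show e2 (vP X y lp (fun _ => 0) - vM X y lm bm) = _
      rw [vP_zero, e2_sub_comm, sub_zero]
    have hlb : ∀ x ∈ (fun bp => e2 (vP X y lp bp - vM X y lm bm)) '' box n,
        e2 (vM X y lm bm) ≤ x := by
      rintro x ⟨bp, hbp, rfl⟩
      show _ ≤ e2 (vP X y lp bp - vM X y lm bm)
      rw [e2_sub_comm]
      apply e2_sub_ge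
      have := inner_nonpos X y lp lm bp bm hneg hlp hlm
        (fun i => (hbp i).1) (fun i => (hbm i).1)
      calc ∑ k, vM X y lm bm k * vP X y lp bp k
          = ∑ k, vP X y lp bp k * vM X y lm bm k :=
            Finset.sum_congr rfl fun k _ => mul_comm _ _
        _ ≤ 0 := this
    exact le_antisymm (csInf_le ⟨_, hlb⟩ hmem) (le_csInf ⟨_, hmem⟩ hlb)
  constructor
  · exact congrArg sSup (Set.image_congr key1)
  · exact congrArg sSup (Set.image_congr key2)
end

section
/- Let Z ∈ ℝ^{n×n} be symmetric positive semidefinite with |Z_{ij}| ≤ 1 for all i,j. Let arcsin[Z] denote the matrix with entries (arcsin[Z])_{ij} = arcsin(Z_{ij}). Then arcsin[Z] − Z is positive semidefinite. -/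
noncomputable def gwC (k : ℕ) : ℝ := (Nat.centralBinom k : ℝ) / 4 ^ k

lemma gwC_pos (k : ℕ) : 0 < gwC k := by
  apply div_pos (by exact_mod_cast k.centralBinom_pos) (by positivity)

lemma gwC_le_one (k : ℕ) : gwC k ≤ 1 := by
  rw [gwC, div_le_one (by positivity)]
  have : Nat.centralBinom k ≤ 4 ^ k := by
    rw [Nat.centralBinom]
    calc (2 * k).choose k ≤ ∑ m ∈ Finset.range (2 * k + 1), (2 * k).choose m :=
          Finset.single_le_sum (f := fun m => (2 * k).choose m) (fun x _ => Nat.zero_le _)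
            (Finset.mem_range.mpr (by omega))
      _ = 2 ^ (2 * k) := Nat.sum_range_choose (2 * k)
      _ = 4 ^ k := by rw [pow_mul]; norm_num
  exact_mod_cast this

lemma gwC_zero : gwC 0 = 1 := by simp [gwC, Nat.centralBinom]

lemma gwC_rec (k : ℕ) : 2 * (k + 1) * gwC (k + 1) = (2 * k + 1) * gwC k := by
  have h' : ((k + 1 : ℕ) : ℝ) * (Nat.centralBinom (k + 1) : ℝ)
      = 2 * (2 * (k : ℝ) + 1) * (Nat.centralBinom k : ℝ) := by
    exact_mod_cast Nat.succ_mul_centralBinom_succ k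
  rw [gwC, gwC, pow_succ]
  have h4 : (4:ℝ) ^ k ≠ 0 := by positivity
  field_simp
  push_cast at h'
  linear_combination 2 * h'


open Matrix
lemma gw_quad_pow_nonneg {n : ℕ} {Z : Matrix (Fin n) (Fin n) ℝ} (hZ : Z.PosSemidef)
    (v : Fin n → ℝ) (m : ℕ) : 0 ≤ ∑ i, ∑ j, v i * v j * (Z i j) ^ m := by
  obtain ⟨B, rfl⟩ : ∃ B : Matrix (Fin n) (Fin n) ℝ, Z = Bᴴ * B := by
    open scoped MatrixOrder in
    obtain ⟨X, hX, -, hXZ⟩ := CFC.exists_sqrt_of_isSelfAdjoint_of_quasispectrumRestricts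
      hZ.isHermitian (QuasispectrumRestricts.nnreal_of_nonneg hZ.nonneg)
    exact ⟨X, by rw [← hXZ, ← Matrix.star_eq_conjTranspose, hX.star_eq]⟩
  have hentry : ∀ i j, (Bᴴ * B) i j = ∑ k, B k i * B k j := by
    intro i j; simp [Matrix.mul_apply, Matrix.conjTranspose_apply]
  have key : ∀ i j : Fin n, ((Bᴴ * B) i j) ^ m
      = ∑ K : Fin m → Fin n, (∏ t, B (K t) i) * (∏ t, B (K t) j) := by
    intro i j
    rw [hentry]
    have hm : (∑ k, B k i * B k j) ^ m = ∏ _t : Fin m, (∑ k, B k i * B k j) := by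
      rw [Finset.prod_const, Finset.card_univ, Fintype.card_fin]
    rw [hm, Finset.prod_univ_sum]
    simp [Finset.prod_mul_distrib, Fintype.piFinset_univ]
  have main : ∑ K : Fin m → Fin n, (∑ i, v i * ∏ t, B (K t) i) ^ 2
      = ∑ i, ∑ j, v i * v j * ((Bᴴ * B) i j) ^ m := by
    simp_rw [sq, Finset.sum_mul_sum, key, Finset.mul_sum]
    rw [Finset.sum_comm]
    refine Finset.sum_congr rfl fun i _ => ?_
    rw [Finset.sum_comm]
    exact Finset.sum_congr rfl fun j _ => Finset.sum_congr rfl fun K _ => by ring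
  rw [← main]
  exact Finset.sum_nonneg fun K _ => sq_nonneg _


noncomputable def gwS (u : ℝ) : ℝ := ∑' k, gwC k * u ^ k

lemma gwS_summable {u : ℝ} (h : |u| < 1) : Summable fun k => gwC k * u ^ k := by
  apply Summable.of_norm_bounded (summable_geometric_of_lt_one (abs_nonneg u) h)
  intro k
  rw [norm_mul, norm_pow, Real.norm_eq_abs, Real.norm_eq_abs,
    abs_of_pos (gwC_pos k)]
  calc gwC k * |u| ^ k ≤ 1 * |u| ^ k := by
        gcongr; exact gwC_le_one k
    _ = |u| ^ k := one_mul _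

lemma gwS_hasSum {u : ℝ} (h : |u| < 1) : HasSum (fun k => gwC k * u ^ k) (gwS u) :=
  (gwS_summable h).hasSum

lemma gwDeriv_summable {u : ℝ} (h : |u| < 1) :
    Summable fun k => gwC k * ((k : ℝ) * u ^ (k - 1)) := by
  set r : ℝ := (1 + |u|) / 2 with hr
  have hr0 : 0 ≤ r := by positivity
  have hr1 : r < 1 := by rw [hr]; linarith
  have hur : |u| ≤ r := by rw [hr]; linarith [abs_nonneg u]
  have hs : Summable fun k : ℕ => (k : ℝ) * r ^ (k - 1) := by
    rw [← summable_nat_add_iff 1]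
    have h1 : Summable fun k : ℕ => (k : ℝ) * r ^ k := by
      simpa using summable_pow_mul_geometric_of_norm_lt_one 1
        (by rwa [Real.norm_eq_abs, abs_of_nonneg hr0])
    have h2 : Summable fun k : ℕ => r ^ k := summable_geometric_of_lt_one hr0 hr1
    have h3 : Summable fun n : ℕ => (n : ℝ) * r ^ n + r ^ n := h1.add h2
    exact h3.congr fun n => by push_cast [Nat.add_sub_cancel]; ring
  apply Summable.of_norm_bounded hs
  intro k
  rw [norm_mul, norm_mul, norm_pow, Real.norm_eq_abs, Real.norm_eq_abs, Real.norm_eq_abs,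
    abs_of_pos (gwC_pos k), abs_of_nonneg (Nat.cast_nonneg k)]
  calc gwC k * ((k : ℝ) * |u| ^ (k - 1)) ≤ 1 * ((k : ℝ) * r ^ (k - 1)) := by
        gcongr
        all_goals first | positivity | exact gwC_le_one k | exact hur | exact Nat.cast_nonneg k
    _ = _ := one_mul _

noncomputable def gwD (u : ℝ) : ℝ := ∑' k, gwC k * ((k : ℝ) * u ^ (k - 1))

lemma gwS_hasDerivAt {u : ℝ} (h : |u| < 1) : HasDerivAt gwS (gwD u) u := by
  set r : ℝ := (1 + |u|) / 2 with hr
  have hr0 : 0 ≤ r := by positivity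
  have hr1 : r < 1 := by rw [hr]; linarith
  have hur : |u| < r := by rw [hr]; linarith
  have hrr : |r| < 1 := by rwa [abs_of_nonneg hr0]
  apply hasDerivAt_tsum_of_isPreconnected
    (u := fun k => gwC k * ((k : ℝ) * r ^ (k - 1)))
    (t := Metric.ball (0 : ℝ) r)
    (g' := fun k y => gwC k * ((k : ℝ) * y ^ (k - 1)))
    (y₀ := 0)
  · exact gwDeriv_summable hrr
  · exact Metric.isOpen_ball
  · exact (convex_ball (0:ℝ) r).isPreconnected
  · intro k y _
    exact (hasDerivAt_pow k y).const_mul (gwC k)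
  · intro k y hy
    rw [Metric.mem_ball, Real.dist_0_eq_abs] at hy
    rw [Real.norm_eq_abs, abs_mul, abs_mul, abs_pow, abs_of_pos (gwC_pos k),
      abs_of_nonneg (Nat.cast_nonneg (α := ℝ) k)]
    gcongr
    exact (gwC_pos k).le
  · rw [Metric.mem_ball, Real.dist_0_eq_abs]
    simp only [abs_zero]
    exact lt_of_le_of_lt (abs_nonneg u) hur
  · exact gwS_summable (by simpa using lt_trans (lt_of_le_of_lt (abs_nonneg u) hur) hr1)
  · rwa [Metric.mem_ball, Real.dist_0_eq_abs]

lemma gw_ode {u : ℝ} (h : |u| < 1) : 2 * (1 - u) * gwD u = gwS u := by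
  have hD : HasSum (fun k : ℕ => gwC k * ((k : ℝ) * u ^ (k - 1))) (gwD u) :=
    (gwDeriv_summable h).hasSum
  have hf : HasSum (fun k : ℕ => 2 * (gwC k * ((k : ℝ) * u ^ (k - 1)))) (2 * gwD u) :=
    hD.mul_left 2
  have he : HasSum (fun k : ℕ => (2 * (k : ℝ) + 1) * gwC k * u ^ k) (2 * gwD u) := by
    have h1 : HasSum (fun k : ℕ => 2 * (gwC (k + 1) * (((k + 1 : ℕ) : ℝ) * u ^ ((k + 1) - 1))))
        (2 * gwD u) := by
      exact (hasSum_nat_add_iff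
        (f := fun k : ℕ => 2 * (gwC k * ((k : ℝ) * u ^ (k - 1)))) 1).mpr (by simpa using hf)
    have key : (fun k : ℕ => (2 * (k : ℝ) + 1) * gwC k * u ^ k)
        = fun k : ℕ => 2 * (gwC (k + 1) * (((k + 1 : ℕ) : ℝ) * u ^ ((k + 1) - 1))) := by
      funext k
      have hrec := gwC_rec k
      push_cast
      try simp only [Nat.add_sub_cancel]
      linear_combination (-(u ^ k)) * hrec
    rw [key]; exact h1
  have hg : HasSum (fun k : ℕ => 2 * (k : ℝ) * gwC k * u ^ k) (2 * u * gwD u) := by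
    have h2 : HasSum (fun k : ℕ => u * ((2 * (k : ℝ) + 1) * gwC k * u ^ k)) (u * (2 * gwD u)) :=
      he.mul_left u
    have h3 : HasSum (fun k : ℕ => 2 * ((k + 1 : ℕ) : ℝ) * gwC (k + 1) * u ^ (k + 1))
        (2 * u * gwD u) := by
      have key2 : (fun k : ℕ => 2 * ((k + 1 : ℕ) : ℝ) * gwC (k + 1) * u ^ (k + 1))
          = fun k : ℕ => u * ((2 * (k : ℝ) + 1) * gwC k * u ^ k) := by
        funext k
        have hrec := gwC_rec k
        push_cast
        linear_combination u ^ k * u * hrec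
      rw [key2]
      convert h2 using 1
      ring
    have h4 := (hasSum_nat_add_iff (f := fun k : ℕ => 2 * (k : ℝ) * gwC k * u ^ k) 1).mp h3
    simpa using h4
  have hsub := he.sub hg
  have hkey : (fun k : ℕ => (2 * (k : ℝ) + 1) * gwC k * u ^ k - 2 * (k : ℝ) * gwC k * u ^ k)
      = fun k : ℕ => gwC k * u ^ k := funext fun k => by ring
  rw [hkey] at hsub
  have := hsub.unique (gwS_hasSum h)
  linarith [this]

lemma gw_const_on_ball {f : ℝ → ℝ} (hf : ∀ x ∈ Metric.ball (0:ℝ) 1, HasDerivAt f 0 x)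
    {x : ℝ} (hx : x ∈ Metric.ball (0:ℝ) 1) : f x = f 0 := by
  apply (convex_ball (0:ℝ) 1).is_const_of_fderivWithin_eq_zero (𝕜 := ℝ)
    (f := f) ?_ ?_ hx (by simp [Metric.mem_ball])
  · exact fun y hy => ((hf y hy).differentiableAt).differentiableWithinAt
  · intro y hy
    rw [fderivWithin_of_isOpen Metric.isOpen_ball hy]
    have h0 := (hf y hy).hasFDerivAt
    rw [h0.fderiv]
    exact ContinuousLinearMap.ext fun r => by simp

lemma gwS_zero : gwS 0 = 1 := by
  rw [gwS, tsum_eq_single 0 (fun k hk => by simp [zero_pow hk])]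
  simp [gwC_zero]

lemma mem_ball_iff_abs {x : ℝ} : x ∈ Metric.ball (0:ℝ) 1 ↔ |x| < 1 := by
  rw [Metric.mem_ball, Real.dist_0_eq_abs]

lemma gwS_sq {u : ℝ} (h : |u| < 1) : gwS u ^ 2 * (1 - u) = 1 := by
  have key : ∀ x ∈ Metric.ball (0:ℝ) 1,
      HasDerivAt (fun y => gwS y ^ 2 * (1 - y)) 0 x := by
    intro x hx
    rw [mem_ball_iff_abs] at hx
    have h1 : HasDerivAt (fun y => gwS y ^ 2 * (1 - y))
        ((2 * gwS x ^ 1 * gwD x) * (1 - x) + gwS x ^ 2 * (0 - 1)) x :=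
      (((gwS_hasDerivAt hx).pow 2).mul ((hasDerivAt_const x (1:ℝ)).sub (hasDerivAt_id x)))
    convert h1 using 1
    have hode := gw_ode hx
    linear_combination (-(gwS x)) * hode
  have := gw_const_on_ball key (mem_ball_iff_abs.mpr h)
  rw [this, gwS_zero]
  norm_num

lemma gwS_pos {u : ℝ} (h : |u| < 1) : 0 < gwS u := by
  have hne : ∀ x, |x| < 1 → gwS x ≠ 0 := by
    intro x hx h0
    have := gwS_sq hx
    rw [h0] at this
    norm_num at this
  rcases lt_or_ge 0 (gwS u) with h1 | h1
  · exact h1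
  have h1' : gwS u < 0 := lt_of_le_of_ne h1 (hne u h)
  exfalso
  have habs : ∀ x : ℝ, x ∈ Set.Icc (-|u|) |u| → |x| < 1 := by
    intro x hx
    rw [abs_lt]
    rcases abs_lt.mp h with ⟨hl, hr⟩
    constructor
    · nlinarith [hx.1, neg_abs_le u, abs_nonneg u]
    · nlinarith [hx.2, le_abs_self u, abs_nonneg u]
  have hcont : ContinuousOn gwS (Set.Icc (-|u|) |u|) := fun x hx =>
    ((gwS_hasDerivAt (habs x hx)).continuousAt).continuousWithinAt
  have hmem : (0:ℝ) ∈ Set.Icc (gwS u) (gwS 0) := by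
    rw [gwS_zero]; exact ⟨h1'.le, by norm_num⟩
  rcases le_or_gt u 0 with hu | hu
  · have hsub : Set.Icc u 0 ⊆ Set.Icc (-|u|) |u| := by
      apply Set.Icc_subset_Icc
      · rw [abs_of_nonpos hu, neg_neg]
      · exact abs_nonneg u
    have := intermediate_value_Icc hu (hcont.mono hsub) hmem
    obtain ⟨z, hz, hz0⟩ := this
    exact hne z (habs z (hsub hz)) hz0
  · have hsub : Set.Icc 0 u ⊆ Set.Icc (-|u|) |u| := by
      apply Set.Icc_subset_Icc
      · linarith [abs_nonneg u]
      · exact le_abs_self u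
    have := intermediate_value_Icc' hu.le (hcont.mono hsub) hmem
    obtain ⟨z, hz, hz0⟩ := this
    exact hne z (habs z (hsub hz)) hz0

lemma gwS_eq {u : ℝ} (h : |u| < 1) : gwS u = 1 / Real.sqrt (1 - u) := by
  have hu1 : 0 < 1 - u := by rcases abs_lt.mp h with ⟨_, hr⟩; linarith
  have hsq := gwS_sq h
  have hpos := gwS_pos h
  have h2 : gwS u ^ 2 = 1 / (1 - u) := by
    field_simp at hsq ⊢
    linarith [hsq]
  have h3 : Real.sqrt (gwS u ^ 2) = gwS u := Real.sqrt_sq hpos.le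
  rw [← h3, h2, one_div, Real.sqrt_inv, one_div]

noncomputable def gwA (k : ℕ) : ℝ := gwC k / (2 * k + 1)

lemma gwA_pos (k : ℕ) : 0 < gwA k := div_pos (gwC_pos k) (by positivity)

lemma gwA_le_one (k : ℕ) : gwA k ≤ 1 := by
  rw [gwA, div_le_one (by positivity)]
  calc gwC k ≤ 1 := gwC_le_one k
    _ ≤ 2 * k + 1 := by
        have := Nat.cast_nonneg (α := ℝ) k
        linarith

lemma gwA_zero : gwA 0 = 1 := by simp [gwA, gwC_zero]

lemma gwA_mul (k : ℕ) : gwA k * (2 * (k : ℝ) + 1) = gwC k := by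
  rw [gwA]; field_simp

noncomputable def gwG (x : ℝ) : ℝ := ∑' k, gwA k * x ^ (2 * k + 1)

lemma gwG_summable {x : ℝ} (h : |x| < 1) : Summable fun k => gwA k * x ^ (2 * k + 1) := by
  apply Summable.of_norm_bounded
    ((summable_geometric_of_lt_one (abs_nonneg x) h).mul_left |x|)
  intro k
  rw [Real.norm_eq_abs, abs_mul, abs_pow, abs_of_pos (gwA_pos k)]
  calc gwA k * |x| ^ (2 * k + 1) ≤ 1 * |x| ^ (2 * k + 1) := by gcongr; exact gwA_le_one k
    _ = |x| * |x| ^ (2 * k) := by ring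
    _ ≤ |x| * |x| ^ k := by
        have h2 := pow_le_pow_of_le_one (abs_nonneg x) h.le (show k ≤ 2 * k by omega)
        exact mul_le_mul_of_nonneg_left h2 (abs_nonneg x)
    _ = _ := rfl

lemma gwG_hasDerivAt {x : ℝ} (h : |x| < 1) : HasDerivAt gwG (gwS (x ^ 2)) x := by
  set r : ℝ := (1 + |x|) / 2 with hr
  have hr0 : 0 ≤ r := by positivity
  have hr1 : r < 1 := by rw [hr]; linarith
  have hxr : |x| < r := by rw [hr]; linarith
  have hD : HasDerivAt gwG
      (∑' k, gwA k * (((2 * k + 1 : ℕ) : ℝ) * x ^ (2 * k + 1 - 1))) x := by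
    apply hasDerivAt_tsum_of_isPreconnected
      (u := fun k => (r ^ 2) ^ k)
      (t := Metric.ball (0 : ℝ) r)
      (g' := fun k y => gwA k * (((2 * k + 1 : ℕ) : ℝ) * y ^ (2 * k + 1 - 1)))
      (y₀ := 0)
    · exact summable_geometric_of_lt_one (by positivity) (by nlinarith)
    · exact Metric.isOpen_ball
    · exact (convex_ball (0:ℝ) r).isPreconnected
    · intro k y _
      exact (hasDerivAt_pow (2 * k + 1) y).const_mul (gwA k)
    · intro k y hy
      rw [Metric.mem_ball, Real.dist_0_eq_abs] at hy
      rw [Real.norm_eq_abs, abs_mul, abs_mul, abs_pow, abs_of_pos (gwA_pos k),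
        abs_of_nonneg (Nat.cast_nonneg _)]
      simp only [Nat.add_sub_cancel]
      have : gwA k * (((2 * k + 1 : ℕ) : ℝ) * |y| ^ (2 * k)) ≤ 1 * r ^ (2 * k) := by
        rw [one_mul, ← mul_assoc]
        have h1 : gwA k * ((2 * k + 1 : ℕ) : ℝ) = gwC k := by
          push_cast; exact gwA_mul k
        rw [h1]
        calc gwC k * |y| ^ (2 * k) ≤ 1 * r ^ (2 * k) :=
              mul_le_mul (gwC_le_one k) (pow_le_pow_left₀ (abs_nonneg y) hy.le _)
                (by positivity) one_pos.le
          _ = r ^ (2 * k) := one_mul _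
      calc gwA k * (((2 * k + 1 : ℕ) : ℝ) * |y| ^ (2 * k)) ≤ 1 * r ^ (2 * k) := this
        _ = (r ^ 2) ^ k := by rw [one_mul, ← pow_mul, mul_comm 2 k]
    · rw [Metric.mem_ball, Real.dist_0_eq_abs, abs_zero]
      exact lt_of_le_of_lt (abs_nonneg x) hxr
    · exact gwG_summable (by simp)
    · rwa [Metric.mem_ball, Real.dist_0_eq_abs]
  have heq : (∑' k, gwA k * (((2 * k + 1 : ℕ) : ℝ) * x ^ (2 * k + 1 - 1))) = gwS (x ^ 2) := by
    rw [gwS]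
    apply tsum_congr
    intro k
    simp only [Nat.add_sub_cancel]
    rw [← pow_mul]
    push_cast
    rw [← gwA_mul k]
    ring
  rwa [heq] at hD

lemma gwG_zero : gwG 0 = 0 := by
  rw [gwG]
  convert tsum_zero with k
  simp

lemma gwG_eq_arcsin {x : ℝ} (h : |x| < 1) : gwG x = Real.arcsin x := by
  have key : ∀ y ∈ Metric.ball (0:ℝ) 1,
      HasDerivAt (fun z => gwG z - Real.arcsin z) 0 y := by
    intro y hy
    rw [mem_ball_iff_abs] at hy
    rcases abs_lt.mp hy with ⟨hl, hr⟩
    have ha : HasDerivAt Real.arcsin (1 / Real.sqrt (1 - y ^ 2)) y :=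
      Real.hasDerivAt_arcsin (by linarith) (by linarith)
    have hy2 : |y ^ 2| < 1 := by
      rw [abs_of_nonneg (sq_nonneg y)]
      nlinarith
    have hG := gwG_hasDerivAt hy
    have h2 := hG.sub ha
    have h3 : gwS (y ^ 2) - 1 / Real.sqrt (1 - y ^ 2) = 0 := by
      rw [gwS_eq hy2]
      ring
    rw [h3] at h2
    exact h2
  have h1 := gw_const_on_ball key (mem_ball_iff_abs.mpr h)
  simp only [gwG_zero, Real.arcsin_zero, sub_zero] at h1
  linarith [h1]

lemma arcsin_hasSum {x : ℝ} (h : |x| < 1) :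
    HasSum (fun k => gwA k * x ^ (2 * k + 1)) (Real.arcsin x) := by
  have := (gwG_summable h).hasSum
  rwa [← gwG, gwG_eq_arcsin h] at this

lemma arcsin_sub_hasSum {x : ℝ} (h : |x| < 1) :
    HasSum (fun k => gwA (k + 1) * x ^ (2 * (k + 1) + 1)) (Real.arcsin x - x) := by
  apply (hasSum_nat_add_iff (f := fun k => gwA k * x ^ (2 * k + 1)) 1).mpr
  have : Real.arcsin x - x + ∑ i ∈ Finset.range 1, gwA i * x ^ (2 * i + 1) = Real.arcsin x := by
    simp [gwA_zero]
  rw [this]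
  exact arcsin_hasSum h

lemma gw_main {n : ℕ} (W : Fin n → Fin n → ℝ) (v : Fin n → ℝ)
    (hpow : ∀ m : ℕ, 0 ≤ ∑ i, ∑ j, v i * v j * (W i j) ^ m)
    (hbd : ∀ i j, |W i j| < 1) :
    0 ≤ ∑ i, ∑ j, v i * v j * (Real.arcsin (W i j) - W i j) := by
  have hsum : HasSum
      (fun k : ℕ => ∑ i, ∑ j, v i * v j * (gwA (k + 1) * (W i j) ^ (2 * (k + 1) + 1)))
      (∑ i, ∑ j, v i * v j * (Real.arcsin (W i j) - W i j)) := by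
    apply hasSum_sum
    intro i _
    apply hasSum_sum
    intro j _
    exact (arcsin_sub_hasSum (hbd i j)).mul_left (v i * v j)
  refine hasSum_le (fun k => ?_) hasSum_zero hsum
  have heq : ∑ i, ∑ j, v i * v j * (gwA (k + 1) * (W i j) ^ (2 * (k + 1) + 1))
      = gwA (k + 1) * ∑ i, ∑ j, v i * v j * (W i j) ^ (2 * (k + 1) + 1) := by
    rw [Finset.mul_sum]
    refine Finset.sum_congr rfl fun i _ => ?_
    rw [Finset.mul_sum]
    exact Finset.sum_congr rfl fun j _ => by ring
  rw [heq]
  exact mul_nonneg (gwA_pos _).le (hpow _)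

/-- The entrywise-arcsine inequality behind the Goemans–Williamson rounding bound:
if `Z` is symmetric positive semidefinite with `|Z_{ij}| ≤ 1`, then the entrywise
`arcsin` of `Z` dominates `Z` in the PSD order, i.e. `arcsin[Z] − Z ⪰ 0`. -/
theorem stmt11 (n : ℕ) (Z : Matrix (Fin n) (Fin n) ℝ) (hZ : Z.PosSemidef)
    (hbd : ∀ i j, |Z i j| ≤ 1) :
    Matrix.PosSemidef (Matrix.of fun i j => Real.arcsin (Z i j) - Z i j) := by
  refine Matrix.PosSemidef.of_dotProduct_mulVec_nonneg ?_ ?_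
  · have hsym := hZ.1
    ext i j
    have hji : Z j i = Z i j := by
      have := congrFun (congrFun hsym i) j
      simpa [Matrix.conjTranspose_apply] using this
    simp [Matrix.conjTranspose_apply, Matrix.of_apply, hji]
  · intro x
    set q : ℝ → ℝ := fun t =>
      ∑ i, ∑ j, x i * x j * (Real.arcsin (t * Z i j) - t * Z i j) with hqdef
    have hq : ∀ t ∈ Set.Ico (0:ℝ) 1, 0 ≤ q t := by
      intro t ht
      apply gw_main (fun i j => t * Z i j)
      · intro m
        have h0 := gw_quad_pow_nonneg hZ x m
        have heq : ∑ i, ∑ j, x i * x j * (t * Z i j) ^ m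
            = t ^ m * ∑ i, ∑ j, x i * x j * (Z i j) ^ m := by
          rw [Finset.mul_sum]
          refine Finset.sum_congr rfl fun i _ => ?_
          rw [Finset.mul_sum]
          refine Finset.sum_congr rfl fun j _ => ?_
          rw [mul_pow]
          ring
        rw [heq]
        exact mul_nonneg (pow_nonneg ht.1 m) h0
      · intro i j
        rw [abs_mul, abs_of_nonneg ht.1]
        calc t * |Z i j| ≤ t * 1 := mul_le_mul_of_nonneg_left (hbd i j) ht.1
          _ = t := mul_one t
          _ < 1 := ht.2
    have hqcont : Continuous q := by
      apply continuous_finset_sum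
      intro i _
      apply continuous_finset_sum
      intro j _
      exact continuous_const.mul
        ((Real.continuous_arcsin.comp (continuous_id.mul continuous_const)).sub
          (continuous_id.mul continuous_const))
    have hlim : Filter.Tendsto q (nhdsWithin 1 (Set.Iio 1)) (nhds (q 1)) :=
      (hqcont.tendsto 1).mono_left nhdsWithin_le_nhds
    have hmem : Set.Ico (0:ℝ) 1 ∈ nhdsWithin (1:ℝ) (Set.Iio 1) :=
      Ico_mem_nhdsLT (by norm_num)
    have h1 : 0 ≤ q 1 :=
      ge_of_tendsto hlim (Filter.eventually_of_mem hmem hq)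
    have hq1 : q 1 = ∑ i, ∑ j, x i * x j * (Real.arcsin (Z i j) - Z i j) := by
      rw [hqdef]
      simp only [one_mul]
    rw [hq1] at h1
    have hgoal : dotProduct (star x)
        ((Matrix.of fun i j => Real.arcsin (Z i j) - Z i j).mulVec x)
        = ∑ i, ∑ j, x i * x j * (Real.arcsin (Z i j) - Z i j) := by
      simp only [dotProduct, Matrix.mulVec, Matrix.of_apply, Pi.star_apply, star_trivial,
        Finset.mul_sum]
      refine Finset.sum_congr rfl fun i _ => Finset.sum_congr rfl fun j _ => by ring
    rw [hgoal]
    exact h1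
end

section
/- Let X ∈ ℝ^{n×d} and y ∈ {−1,1}^n. Let D = sup{ λᵀy : λ ∈ ℝ^n, y_iλ_i ≥ 0 ∀i, max_{‖u‖₂≤1} |λᵀ(Xu)₊| ≤ 1 }, and suppose λ* is an optimal solution attaining D with λ* ≠ 0. For β > 0 define the hinge-loss dual value D^hinge(β) = sup{ λᵀy : λ ∈ ℝ^n, 0 ≤ y_iλ_i ≤ 1 ∀i, max_{‖u‖₂≤1} |λᵀ(Xu)₊| ≤ β }. Then for every β with 0 < β < 1/‖λ*‖_∞, one has D^hinge(β) = β·D. -/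
open Matrix

/-- For small enough regularization `β`, the hinge-loss dual value is `β` times the
max-margin dual value: `D^hinge(β) = β·D` whenever `0 < β < 1/‖λ*‖_∞` for a dual
optimum `λ*` of the max-margin problem. -/
theorem stmt17 (n d : ℕ) (X : Matrix (Fin n) (Fin d) ℝ) (y : Fin n → ℝ)
    (hy : ∀ i, y i = 1 ∨ y i = -1)
    (D : ℝ)
    (hD : D = sSup {t : ℝ | ∃ l : Fin n → ℝ, (∀ i, 0 ≤ y i * l i) ∧
      (∀ u : Fin d → ℝ, e2 u ≤ 1 → |∑ i, l i * max (X.mulVec u i) 0| ≤ 1) ∧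
      t = ∑ i, l i * y i})
    (lstar : Fin n → ℝ) (hlstar_sign : ∀ i, 0 ≤ y i * lstar i)
    (hlstar_feas : ∀ u : Fin d → ℝ, e2 u ≤ 1 → |∑ i, lstar i * max (X.mulVec u i) 0| ≤ 1)
    (hlstar_opt : (∑ i, lstar i * y i) = D)
    (hlstar_ne : lstar ≠ 0)
    (Dhinge : ℝ → ℝ)
    (hDhinge : ∀ β : ℝ, Dhinge β = sSup {t : ℝ | ∃ l : Fin n → ℝ,
      (∀ i, 0 ≤ y i * l i ∧ y i * l i ≤ 1) ∧
      (∀ u : Fin d → ℝ, e2 u ≤ 1 → |∑ i, l i * max (X.mulVec u i) 0| ≤ β) ∧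
      t = ∑ i, l i * y i}) :
    ∀ β : ℝ, 0 < β → β < (⨆ i, |lstar i|)⁻¹ → Dhinge β = β * D := by
  intro β hβ0 hβ
  set S : Set ℝ := {t : ℝ | ∃ l : Fin n → ℝ, (∀ i, 0 ≤ y i * l i) ∧
      (∀ u : Fin d → ℝ, e2 u ≤ 1 → |∑ i, l i * max (X.mulVec u i) 0| ≤ 1) ∧
      t = ∑ i, l i * y i} with hSdef
  set T : Set ℝ := {t : ℝ | ∃ l : Fin n → ℝ,
      (∀ i, 0 ≤ y i * l i ∧ y i * l i ≤ 1) ∧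
      (∀ u : Fin d → ℝ, e2 u ≤ 1 → |∑ i, l i * max (X.mulVec u i) 0| ≤ β) ∧
      t = ∑ i, l i * y i} with hTdef
  have hyabs : ∀ i, |y i| = 1 := by
    intro i; rcases hy i with h | h <;> simp [h]
  have hyne : ∀ i, y i ≠ 0 := by
    intro i; rcases hy i with h | h <;> simp [h]
  -- S is bounded above
  have hSbdd : BddAbove S := by
    by_contra hb
    have h0 : sSup S = 0 := Real.sSup_of_not_bddAbove hb
    have hD0 : D = 0 := by rw [hD, h0]
    have hsum : (∑ i, y i * lstar i) = 0 := by
      rw [show (∑ i, y i * lstar i) = ∑ i, lstar i * y i from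
        Finset.sum_congr rfl (fun i _ => mul_comm _ _), hlstar_opt, hD0]
    have hall : ∀ i ∈ Finset.univ, y i * lstar i = 0 :=
      (Finset.sum_eq_zero_iff_of_nonneg (fun i _ => hlstar_sign i)).mp hsum
    apply hlstar_ne
    funext i
    have := hall i (Finset.mem_univ i)
    have : lstar i = 0 := by
      rcases mul_eq_zero.mp this with h | h
      · exact absurd h (hyne i)
      · exact h
    simpa using this
  -- |lstar i| = y i * lstar i
  have habs : ∀ i, |lstar i| = y i * lstar i := by
    intro i
    rcases hy i with h | h
    · rw [h, one_mul]; exact abs_of_nonneg (by have := hlstar_sign i; rw [h, one_mul] at this; exact this)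
    · rw [h, neg_one_mul]
      exact abs_of_nonpos (by have := hlstar_sign i; rw [h, neg_one_mul] at this; linarith)
  -- the sup M
  set M : ℝ := ⨆ i, |lstar i| with hMdef
  obtain ⟨i0, hi0⟩ : ∃ i, lstar i ≠ 0 := by
    by_contra h
    push_neg at h
    exact hlstar_ne (funext fun i => h i)
  have hMbdd : BddAbove (Set.range fun i => |lstar i|) :=
    Set.Finite.bddAbove (Set.finite_range _)
  have hMle : ∀ i, |lstar i| ≤ M := fun i => le_ciSup hMbdd i
  have hMpos : 0 < M := lt_of_lt_of_le (abs_pos.mpr hi0) (hMle i0)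
  have hβM : β * M < 1 := by
    have := mul_lt_mul_of_pos_right hβ hMpos
    rwa [inv_mul_cancel₀ (ne_of_gt hMpos)] at this
  -- β * D ∈ T
  have hmem : β * D ∈ T := by
    refine ⟨fun i => β * lstar i, fun i => ?_, fun u hu => ?_, ?_⟩
    · constructor
      · have : y i * (β * lstar i) = β * (y i * lstar i) := by ring
        rw [this]
        exact mul_nonneg hβ0.le (hlstar_sign i)
      · have h1 : y i * (β * lstar i) = β * |lstar i| := by rw [habs i]; ring
        rw [h1]
        calc β * |lstar i| ≤ β * M := by
              exact mul_le_mul_of_nonneg_left (hMle i) hβ0.le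
          _ ≤ 1 := hβM.le
    · have h1 : (∑ i, (β * lstar i) * max (X.mulVec u i) 0)
          = β * ∑ i, lstar i * max (X.mulVec u i) 0 := by
        rw [Finset.mul_sum]; exact Finset.sum_congr rfl fun i _ => by ring
      rw [h1, abs_mul, abs_of_pos hβ0]
      calc β * |∑ i, lstar i * max (X.mulVec u i) 0| ≤ β * 1 :=
            mul_le_mul_of_nonneg_left (hlstar_feas u hu) hβ0.le
        _ = β := mul_one β
    · rw [← hlstar_opt, Finset.mul_sum]
      exact Finset.sum_congr rfl fun i _ => by ring
  -- every element of T is ≤ β * D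
  have hub : ∀ t ∈ T, t ≤ β * D := by
    rintro t ⟨l, hsign, hfeas, rfl⟩
    have hmemS : β⁻¹ * ∑ i, l i * y i ∈ S := by
      refine ⟨fun i => β⁻¹ * l i, fun i => ?_, fun u hu => ?_, ?_⟩
      · have : y i * (β⁻¹ * l i) = β⁻¹ * (y i * l i) := by ring
        rw [this]
        exact mul_nonneg (inv_nonneg.mpr hβ0.le) (hsign i).1
      · have h1 : (∑ i, (β⁻¹ * l i) * max (X.mulVec u i) 0)
            = β⁻¹ * ∑ i, l i * max (X.mulVec u i) 0 := by
          rw [Finset.mul_sum]; exact Finset.sum_congr rfl fun i _ => by ring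
        rw [h1, abs_mul, abs_of_pos (inv_pos.mpr hβ0)]
        calc β⁻¹ * |∑ i, l i * max (X.mulVec u i) 0| ≤ β⁻¹ * β :=
              mul_le_mul_of_nonneg_left (hfeas u hu) (inv_nonneg.mpr hβ0.le)
          _ = 1 := inv_mul_cancel₀ (ne_of_gt hβ0)
      · rw [Finset.mul_sum]; exact Finset.sum_congr rfl fun i _ => by ring
    have hle : β⁻¹ * ∑ i, l i * y i ≤ D := by
      rw [hD]; exact le_csSup hSbdd hmemS
    have := mul_le_mul_of_nonneg_left hle hβ0.le
    rwa [← mul_assoc, mul_inv_cancel₀ (ne_of_gt hβ0), one_mul] at this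
  have hTbdd : BddAbove T := ⟨β * D, fun t ht => hub t ht⟩
  rw [hDhinge β]
  exact le_antisymm (csSup_le ⟨β * D, hmem⟩ hub) (le_csSup hTbdd hmem)
end
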